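/- arXiv:2409.16932 — 7 statements merged into one kernel-verified Lean document; each statement's English description precedes it below -/
import Mathlib

section
/- Let Ω ⊆ EuclideanSpace ℝ (Fin m) be open, let φ₁,…,φ_k : Ω → ℂ be twice continuously differentiable, write Φ = (φ₁,…,φ_k) : Ω → ℂ^k, let U ⊆ ℂ^k be open with Φ(Ω) ⊆ U, and let F : ℂ^k → ℂ be complex-differentiable at every point of U (holomorphic on U). Then on Ω: Δ(F∘Φ) = Σ_{i=1}^k (∂F/∂z_i ∘ Φ)·Δφ_i + Σ_{i,j=1}^k (∂²F/∂z_i∂z_j ∘ Φ)·κ(φ_i,φ_j), and κ(F∘Φ, F∘Φ) = Σ_{i,j=1}^k (∂F/∂z_i ∘ Φ)·(∂F/∂z_j ∘ Φ)·κ(φ_i,φ_j). -/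
/-!
Both identities come from the chain rule for `F ∘ Φ`, applied once for `κ` and twice for `Δ`;
complex linearity of `fderiv ℂ F` is what leaves no antiholomorphic terms. The second
application needs `∂F/∂zᵢ` to be complex differentiable. Along a complex line `t ↦ F (z + t • v)`
the Cauchy formula writes `∂ᵥF(z)` as a circle integral of `F (z + τ • v) / τ²`, and the Cauchy
estimate bounds `fderiv ℂ F` near `z`, so this integral may be differentiated under the
integral sign.
-/

/-- The flat Laplacian `Δf(x) = ∑ₐ ∂²f/∂xₐ²(x)` on Euclidean space. -/
noncomputable def lap {m : ℕ} {F : Type*} [NormedAddCommGroup F] [NormedSpace ℝ F]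
    (f : EuclideanSpace ℝ (Fin m) → F) (x : EuclideanSpace ℝ (Fin m)) : F :=
  ∑ a : Fin m, fderiv ℝ (fun y => fderiv ℝ f y (EuclideanSpace.single a 1)) x
    (EuclideanSpace.single a 1)

/-- The conformality operator `κ(φ,ψ)(x) = ∑ₐ (∂φ/∂xₐ)(x)·(∂ψ/∂xₐ)(x)`. -/
noncomputable def kap {m : ℕ} {F : Type*} [NormedRing F] [NormedAlgebra ℝ F]
    (φ ψ : EuclideanSpace ℝ (Fin m) → F) (x : EuclideanSpace ℝ (Fin m)) : F :=
  ∑ a : Fin m, fderiv ℝ φ x (EuclideanSpace.single a 1) * fderiv ℝ ψ x (EuclideanSpace.single a 1)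

open Metric Complex Filter Topology Real MeasureTheory

section Holomorphic

variable {E G : Type*} [NormedAddCommGroup E] [NormedSpace ℂ E]
  [NormedAddCommGroup G] [NormedSpace ℂ G]

theorem hasDerivAt_comp_add_smul {f : E → G} {x u : E} {t : ℂ}
    (hf : DifferentiableAt ℂ f (x + t • u)) :
    HasDerivAt (fun t : ℂ => f (x + t • u)) (fderiv ℂ f (x + t • u) u) t :=
  hf.hasFDerivAt.comp_hasDerivAt t (((hasDerivAt_id t).smul_const u).const_add x |>.congr_deriv
    (one_smul ℂ u))

theorem differentiableOn_comp_add_smul {f : E → G} {x u : E} {ρ : ℝ}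
    (hf : ∀ t ∈ closedBall (0 : ℂ) ρ, DifferentiableAt ℂ f (x + t • u)) :
    DifferentiableOn ℂ (fun t : ℂ => f (x + t • u)) (closedBall 0 ρ) := fun t ht =>
  (hasDerivAt_comp_add_smul (hf t ht)).differentiableAt.differentiableWithinAt

theorem norm_fderiv_le_of_forall_mem_closedBall_norm_le {f : E → G} {x : E} {r M : ℝ}
    (hr : 0 < r) (hf : ∀ y ∈ closedBall x r, DifferentiableAt ℂ f y)
    (hM : ∀ y ∈ closedBall x r, ‖f y‖ ≤ M) :
    ‖fderiv ℂ f x‖ ≤ M / r := by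
  have hM0 : 0 ≤ M := (norm_nonneg _).trans (hM x (mem_closedBall_self hr.le))
  refine ContinuousLinearMap.opNorm_le_bound _ (by positivity) fun u => ?_
  rcases eq_or_ne u 0 with rfl | hu
  · simp
  have hu0 : 0 < ‖u‖ := norm_pos_iff.2 hu
  have hmem : ∀ t ∈ closedBall (0 : ℂ) (r / ‖u‖), x + t • u ∈ closedBall x r := fun t ht => by
    rw [mem_closedBall_zero_iff] at ht
    rw [mem_closedBall, dist_self_add_left, norm_smul]
    calc ‖t‖ * ‖u‖ ≤ r / ‖u‖ * ‖u‖ := by gcongr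
      _ = r := div_mul_cancel₀ _ hu0.ne'
  have hline := (differentiableOn_comp_add_smul fun t ht => hf _ (hmem t ht)).diffContOnCl_ball
    subset_rfl
  have hderiv := Complex.norm_deriv_le_of_forall_mem_sphere_norm_le (by positivity) hline
    fun t ht => hM _ (hmem t (sphere_subset_closedBall ht))
  have h0 := hf _ (hmem 0 (mem_closedBall_self (by positivity)))
  rw [(hasDerivAt_comp_add_smul h0).deriv, zero_smul, add_zero] at hderiv
  calc ‖fderiv ℂ f x u‖ ≤ M / (r / ‖u‖) := hderiv
    _ = M / r * ‖u‖ := by field_simp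

theorem fderiv_apply_eq_circleIntegral [CompleteSpace G] {f : E → G} {z v : E} {s : ℝ}
    (hs : 0 < s) (hf : ∀ t ∈ closedBall (0 : ℂ) s, DifferentiableAt ℂ f (z + t • v)) :
    fderiv ℂ f z v = (2 * π * I)⁻¹ • ∮ τ in C(0, s), (τ ^ 2)⁻¹ • f (z + τ • v) := by
  have h := (differentiableOn_comp_add_smul hf).deriv_eq_smul_circleIntegral hs
  have h0 : DifferentiableAt ℂ f (z + (0 : ℂ) • v) := hf 0 (mem_closedBall_self hs.le)
  rw [(hasDerivAt_comp_add_smul h0).deriv, zero_smul, add_zero] at h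
  simp only [sub_zero, one_div] at h
  rw [h, smul_smul, inv_mul_cancel₀ two_pi_I_ne_zero, one_smul]

theorem exists_ball_forall_differentiableAt_norm_fderiv_le [FiniteDimensional ℂ E] {f : E → G}
    {z₀ : E} (hf : ∀ᶠ z in 𝓝 z₀, DifferentiableAt ℂ f z) :
    ∃ r > 0, ∃ C, ∀ y ∈ ball z₀ r, DifferentiableAt ℂ f y ∧ ‖fderiv ℂ f y‖ ≤ C := by
  obtain ⟨ε, hε, hεf⟩ := Metric.eventually_nhds_iff_ball.1 hf
  obtain ⟨r, hr, hrε⟩ : ∃ r > 0, 2 * r < ε := ⟨ε / 3, by positivity, by linarith⟩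
  have hsub : closedBall z₀ (2 * r) ⊆ ball z₀ ε := closedBall_subset_ball hrε
  obtain ⟨M, hM⟩ := (isCompact_closedBall z₀ (2 * r)).exists_bound_of_continuousOn
    fun y hy => (hεf y (hsub hy)).continuousAt.continuousWithinAt
  refine ⟨r, hr, M / r, fun y hy => ⟨hεf y (hsub (ball_subset_closedBall.trans
    (closedBall_subset_closedBall (by linarith)) hy)), ?_⟩⟩
  have hyr : closedBall y r ⊆ closedBall z₀ (2 * r) :=
    closedBall_subset_closedBall' (by rw [mem_ball] at hy; linarith)
  exact norm_fderiv_le_of_forall_mem_closedBall_norm_le hr (fun z hz => hεf z (hsub (hyr hz)))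
    fun z hz => hM z (hyr hz)

theorem differentiableAt_circleIntegral_comp_add_smul [FiniteDimensional ℂ E] [CompleteSpace G]
    [SecondCountableTopology G] {f : E → G} {z₀ v : E} {r s C : ℝ} (hs : 0 < s)
    (hsv : s * ‖v‖ < r) (hf : ∀ y ∈ ball z₀ r, DifferentiableAt ℂ f y ∧ ‖fderiv ℂ f y‖ ≤ C) :
    DifferentiableAt ℂ (fun z => ∮ τ in C(0, s), (τ ^ 2)⁻¹ • f (z + τ • v)) z₀ := by
  borelize E
  have hmem : ∀ z ∈ ball z₀ (r - s * ‖v‖), ∀ θ : ℝ, z + circleMap 0 s θ • v ∈ ball z₀ r := by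
    intro z hz θ
    rw [mem_ball_iff_norm] at hz ⊢
    calc ‖z + circleMap 0 s θ • v - z₀‖ ≤ ‖z - z₀‖ + ‖circleMap 0 s θ • v‖ := by
          rw [add_sub_right_comm]; exact norm_add_le _ _
      _ < r - s * ‖v‖ + s * ‖v‖ := by
          rw [norm_smul, norm_circleMap_zero, abs_of_pos hs]; gcongr
      _ = r := by ring
  set w : ℝ → ℂ := fun θ => deriv (circleMap 0 s) θ * (circleMap 0 s θ ^ 2)⁻¹
  have hw : Continuous w := by
    simp only [w, deriv_circleMap]
    exact (by fun_prop : Continuous fun θ => circleMap 0 s θ * I).mul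
      (((continuous_circleMap 0 s).pow 2).inv₀ fun θ => pow_ne_zero 2 (circleMap_ne_center hs.ne'))
  have hline : Continuous fun θ => circleMap 0 s θ • v := by fun_prop
  have hball : ball z₀ (r - s * ‖v‖) ∈ 𝓝 z₀ := ball_mem_nhds z₀ (by linarith)
  have hcont : ∀ z ∈ ball z₀ (r - s * ‖v‖), Continuous fun θ => w θ • f (z + circleMap 0 s θ • v) :=
    fun z hz => hw.smul (continuous_iff_continuousAt.2 fun θ =>
      ContinuousAt.comp (f := fun θ => z + circleMap 0 s θ • v) (hf _ (hmem z hz θ)).1.continuousAt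
        (continuous_const.add hline).continuousAt)
  have hderiv := intervalIntegral.hasFDerivAt_integral_of_dominated_of_fderiv_le
    (μ := volume) (a := 0) (b := 2 * π) (bound := fun θ => ‖w θ‖ * C)
    (F' := fun z θ => w θ • fderiv ℂ f (z + circleMap 0 s θ • v)) hball
    (eventually_of_mem hball fun z hz => (hcont z hz).aestronglyMeasurable)
    ((hcont z₀ (mem_ball_self (by linarith))).intervalIntegrable _ _)
    (hw.aestronglyMeasurable.smul
      ((measurable_fderiv ℂ f).comp (continuous_const.add hline).measurable).aestronglyMeasurable)
    (ae_of_all _ fun θ _ z hz => by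
      rw [norm_smul]; gcongr; exact (hf _ (hmem z hz θ)).2)
    ((hw.norm.mul continuous_const).intervalIntegrable _ _)
    (ae_of_all _ fun θ _ z hz => by
      have h : HasFDerivAt (fun x => f (x + circleMap 0 s θ • v))
          (fderiv ℂ f (z + circleMap 0 s θ • v)) z :=
        ((hf _ (hmem z hz θ)).1.hasFDerivAt.comp z
          ((hasFDerivAt_id z).add_const _)).congr_fderiv (ContinuousLinearMap.comp_id _)
      exact h.const_smul (w θ))
  convert hderiv.differentiableAt using 2 with z
  simp only [circleIntegral, w, smul_smul]

theorem differentiableAt_fderiv_apply_of_eventually_differentiableAt [FiniteDimensional ℂ E]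
    [CompleteSpace G] [SecondCountableTopology G] {f : E → G} {z₀ : E}
    (hf : ∀ᶠ z in 𝓝 z₀, DifferentiableAt ℂ f z) (v : E) :
    DifferentiableAt ℂ (fun z => fderiv ℂ f z v) z₀ := by
  obtain ⟨r, hr, C, hC⟩ := exists_ball_forall_differentiableAt_norm_fderiv_le hf
  obtain ⟨s, hs, hsv⟩ : ∃ s > 0, s * ‖v‖ < r / 2 := by
    refine ⟨r / 2 / (‖v‖ + 1), by positivity, ?_⟩
    calc r / 2 / (‖v‖ + 1) * ‖v‖ < r / 2 / (‖v‖ + 1) * (‖v‖ + 1) := by gcongr; linarith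
      _ = r / 2 := div_mul_cancel₀ _ (by positivity)
  have hcauchy : ∀ᶠ z in 𝓝 z₀,
      fderiv ℂ f z v = (2 * π * I)⁻¹ • ∮ τ in C(0, s), (τ ^ 2)⁻¹ • f (z + τ • v) := by
    filter_upwards [ball_mem_nhds z₀ (half_pos hr)] with z hz
    refine fderiv_apply_eq_circleIntegral hs fun t ht => (hC _ ?_).1
    rw [mem_ball_iff_norm] at hz ⊢
    rw [mem_closedBall_zero_iff] at ht
    calc ‖z + t • v - z₀‖ ≤ ‖z - z₀‖ + ‖t‖ * ‖v‖ := by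
          rw [add_sub_right_comm, ← norm_smul]; exact norm_add_le _ _
      _ < r / 2 + s * ‖v‖ := add_lt_add_of_lt_of_le hz (by gcongr)
      _ < r := by linarith
  exact ((differentiableAt_circleIntegral_comp_add_smul hs (by linarith) hC).const_smul
    (2 * π * I)⁻¹).congr_of_eventuallyEq hcauchy

end Holomorphic

section Composition

variable {E ι : Type*} [NormedAddCommGroup E] [NormedSpace ℝ E] [Fintype ι] [DecidableEq ι]

theorem ContinuousLinearMap.apply_eq_sum_apply_single_mul (T : (ι → ℂ) →L[ℂ] ℂ) (u : ι → ℂ) :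
    T u = ∑ i, T (Pi.single i 1) * u i := by
  conv_lhs => rw [← (Pi.basisFun ℂ ι).sum_repr u]
  simp [map_sum, mul_comm]

theorem fderiv_comp_apply_eq_sum {F : (ι → ℂ) → ℂ} {Φ : E → ι → ℂ} {x : E}
    (hF : DifferentiableAt ℂ F (Φ x)) (hΦ : DifferentiableAt ℝ Φ x) (u : E) :
    fderiv ℝ (F ∘ Φ) x u =
      ∑ i, fderiv ℂ F (Φ x) (Pi.single i 1) * fderiv ℝ (fun y => Φ y i) x u := by
  rw [((hF.hasFDerivAt.restrictScalars ℝ).comp x hΦ.hasFDerivAt).fderiv,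
    ContinuousLinearMap.comp_apply, ContinuousLinearMap.coe_restrictScalars',
    ContinuousLinearMap.apply_eq_sum_apply_single_mul]
  simp [fderiv_apply hΦ]

theorem fderiv_fderiv_comp_apply_eq_sum {F : (ι → ℂ) → ℂ} {Φ : E → ι → ℂ} {x : E}
    (hΦ : ContDiffAt ℝ 2 Φ x) (hF : ∀ᶠ z in 𝓝 (Φ x), DifferentiableAt ℂ F z)
    (hF' : ∀ i, DifferentiableAt ℂ (fun z => fderiv ℂ F z (Pi.single i 1)) (Φ x)) (u w : E) :
    fderiv ℝ (fun y => fderiv ℝ (F ∘ Φ) y u) x w =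
      ∑ i, (fderiv ℂ F (Φ x) (Pi.single i 1) *
          fderiv ℝ (fun y => fderiv ℝ (fun y => Φ y i) y u) x w +
        fderiv ℝ (fun y => Φ y i) x u *
          ∑ j, fderiv ℂ (fun z => fderiv ℂ F z (Pi.single i 1)) (Φ x) (Pi.single j 1) *
            fderiv ℝ (fun y => Φ y j) x w) := by
  have hΦx : DifferentiableAt ℝ Φ x := hΦ.differentiableAt (by norm_num)
  have hfirst : (fun y => fderiv ℝ (F ∘ Φ) y u) =ᶠ[𝓝 x]
      fun y => ∑ i, fderiv ℂ F (Φ y) (Pi.single i 1) * fderiv ℝ (fun y => Φ y i) y u := by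
    filter_upwards [hΦ.eventually (by simp), hΦx.continuousAt.eventually hF] with y hΦy hFy
    exact fderiv_comp_apply_eq_sum hFy (hΦy.differentiableAt (by norm_num)) u
  have hP : ∀ i, DifferentiableAt ℝ (fun y => fderiv ℂ F (Φ y) (Pi.single i 1)) x :=
    fun i => ((hF' i).restrictScalars ℝ).comp x hΦx
  have hQ : ∀ i, DifferentiableAt ℝ (fun y => fderiv ℝ (fun y => Φ y i) y u) x := fun i =>
    (((contDiffAt_pi.1 hΦ i).fderiv_right (m := 1) (by norm_num)).differentiableAt
      one_ne_zero).clm_apply (differentiableAt_const u)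
  rw [hfirst.fderiv_eq, fderiv_fun_sum fun i _ => (hP i).fun_mul (hQ i), sum_apply]
  refine Finset.sum_congr rfl fun i _ => ?_
  rw [fderiv_fun_mul (hP i) (hQ i)]
  simp only [add_apply, smul_apply, smul_eq_mul]
  exact congrArg _ (congrArg _ (fderiv_comp_apply_eq_sum (hF' i) hΦx w))

end Composition

theorem lap_kap_comp_holomorphic {m k : ℕ}
    (Ω : Set (EuclideanSpace ℝ (Fin m))) (hΩ : IsOpen Ω)
    (φ : Fin k → EuclideanSpace ℝ (Fin m) → ℂ)
    (hφ : ∀ i, ContDiffOn ℝ 2 (φ i) Ω)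
    (Φ : EuclideanSpace ℝ (Fin m) → (Fin k → ℂ)) (hΦ : ∀ x i, Φ x i = φ i x)
    (U : Set (Fin k → ℂ)) (hU : IsOpen U) (hΦU : Φ '' Ω ⊆ U)
    (F : (Fin k → ℂ) → ℂ) (hF : ∀ z ∈ U, DifferentiableAt ℂ F z) :
    ∀ x ∈ Ω,
      lap (F ∘ Φ) x =
        (∑ i : Fin k, fderiv ℂ F (Φ x) (Pi.single i 1) * lap (φ i) x) +
        (∑ i : Fin k, ∑ j : Fin k,
          fderiv ℂ (fun w => fderiv ℂ F w (Pi.single i 1)) (Φ x) (Pi.single j 1) *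
            kap (φ i) (φ j) x) ∧
      kap (F ∘ Φ) (F ∘ Φ) x =
        ∑ i : Fin k, ∑ j : Fin k,
          fderiv ℂ F (Φ x) (Pi.single i 1) * fderiv ℂ F (Φ x) (Pi.single j 1) *
            kap (φ i) (φ j) x := by
  obtain rfl : φ = fun i y => Φ y i := funext₂ fun i y => (hΦ y i).symm
  intro x hx
  have hΦx : ContDiffAt ℝ 2 Φ x := contDiffAt_pi.2 fun i => (hφ i).contDiffAt (hΩ.mem_nhds hx)
  have hFx : ∀ᶠ z in 𝓝 (Φ x), DifferentiableAt ℂ F z :=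
    eventually_of_mem (hU.mem_nhds (hΦU ⟨x, hx, rfl⟩)) hF
  have hF' := fun i : Fin k =>
    differentiableAt_fderiv_apply_of_eventually_differentiableAt hFx (Pi.single i 1)
  constructor
  · simp only [lap, kap, fderiv_fderiv_comp_apply_eq_sum hΦx hFx hF', Finset.sum_add_distrib,
      Finset.mul_sum]
    rw [Finset.sum_comm]
    congr 1
    rw [Finset.sum_comm]
    refine Finset.sum_congr rfl fun i _ => ?_
    rw [Finset.sum_comm]
    exact Finset.sum_congr rfl fun j _ => Finset.sum_congr rfl fun a _ => by ring
  · simp only [kap, fderiv_comp_apply_eq_sum hFx.self_of_nhds (hΦx.differentiableAt (by norm_num))]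
    simp only [Finset.sum_mul_sum]
    simp only [Finset.mul_sum]
    rw [Finset.sum_comm]
    refine Finset.sum_congr rfl fun i _ => ?_
    rw [Finset.sum_comm]
    exact Finset.sum_congr rfl fun j _ => Finset.sum_congr rfl fun a _ => by ring
end

section
/- Let Ω ⊆ EuclideanSpace ℝ (Fin m) be open, let λ₁,…,λ_k ∈ ℂ, let A be a symmetric complex k×k matrix, and let φ₁,…,φ_k : Ω → ℂ be smooth functions satisfying Δφ_i = λ_i·φ_i and κ(φ_i,φ_j) = A_{ij}·φ_i·φ_j on Ω for all i,j. Let U ⊆ ℂ^k be open, let F : ℂ^k → ℂ be complex-differentiable at every point of U, and let d₁,…,d_k ∈ ℂ be such that for every z ∈ U there is ε > 0 so that for all t₁,…,t_k ∈ ℝ with |t_i − 1| < ε one has (t₁z₁,…,t_kz_k) ∈ U and F(t₁z₁,…,t_kz_k) = (∏_i t_i^{d_i})·F(z), where t^d = exp(d·log t) for t > 0. Write Φ = (φ₁,…,φ_k). Then on Φ⁻¹(U) the function F∘Φ satisfies Δ(F∘Φ) = λ̃·(F∘Φ) and κ(F∘Φ, F∘Φ) = μ̃·(F∘Φ)²,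 where λ̃ = Σ_i d_i(λ_i − A_{ii}) + Σ_{i,j} d_i d_j A_{ij} and μ̃ = Σ_{i,j} d_i d_j A_{ij}. In particular, if Σ_{i,j} d_i d_j A_{ij} = 0 and Σ_i d_i(λ_i − A_{ii}) = 0 then Δ(F∘Φ) = 0 and κ(F∘Φ, F∘Φ) = 0 on Φ⁻¹(U). -/
set_option maxHeartbeats 1000000
set_option synthInstance.maxHeartbeats 1000000

open Metric Complex MeasureTheory Set Filter Topology

lemma aux_slice {k : ℕ} (F : (Fin k → ℂ) → ℂ) (z v : Fin k → ℂ)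
    (c : ℂ) (h : DifferentiableAt ℂ F (z + c • v)) :
    HasDerivAt (fun w : ℂ => F (z + w • v)) (fderiv ℂ F (z + c • v) v) c := by
  have hcurve : HasDerivAt (fun w : ℂ => z + w • v) v c := by
    simpa using ((hasDerivAt_id c).smul_const v).const_add z
  simpa [Function.comp_def] using (h.hasFDerivAt.comp_hasDerivAt c hcurve)

lemma diffG {k : ℕ} {U : Set (Fin k → ℂ)} (hU : IsOpen U)
    {F : (Fin k → ℂ) → ℂ} (hF : ∀ z ∈ U, DifferentiableAt ℂ F z)
    (i : Fin k) {z₀ : Fin k → ℂ} (hz₀ : z₀ ∈ U) :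
    DifferentiableAt ℂ (fun z => fderiv ℂ F z (Pi.single i 1)) z₀ := by
  classical
  set e : Fin k → (Fin k → ℂ) := fun j => Pi.single j (1:ℂ) with he
  obtain ⟨r, hr0, hrU⟩ := Metric.isOpen_iff.1 hU z₀ hz₀
  set R : ℝ := r / 4 with hR
  have hR0 : 0 < R := by positivity
  have hsub : closedBall z₀ (3 * R) ⊆ U := by
    intro x hx
    apply hrU
    have h3 : 3 * R < r := by rw [hR]; linarith
    exact lt_of_le_of_lt (mem_closedBall.1 hx) h3
  have hFc : ContinuousOn F U := fun z hz => (hF z hz).continuousAt.continuousWithinAt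
  obtain ⟨M, hM⟩ := (isCompact_closedBall z₀ (3 * R)).exists_bound_of_continuousOn
    (hFc.mono hsub)
  have hM0 : 0 ≤ M := le_trans (norm_nonneg _) (hM z₀ (mem_closedBall_self (by positivity)))
  have hsingle : ∀ j : Fin k, ‖e j‖ = 1 := by
    intro j; rw [he]; rw [Pi.norm_single]; simp
  have hmem : ∀ (z : Fin k → ℂ) (s t : ℝ) (w : ℂ) (j : Fin k), dist z z₀ ≤ s → ‖w‖ ≤ t →
      z + w • e j ∈ closedBall z₀ (s + t) := by
    intro z s t w j hzs hwt
    rw [mem_closedBall, dist_eq_norm]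
    have h1 : z + w • e j - z₀ = (z - z₀) + w • e j := by ring_nf
    rw [h1]
    calc ‖(z - z₀) + w • e j‖ ≤ ‖z - z₀‖ + ‖w • e j‖ := norm_add_le _ _
      _ ≤ s + t := by
          rw [norm_smul, hsingle, mul_one]
          exact add_le_add (by rwa [dist_eq_norm] at hzs) hwt
  have habs : ∀ θ : ℝ, ‖circleMap 0 R θ‖ = R := by
    intro θ
    rw [norm_circleMap_zero, abs_of_pos hR0]
  -- slices are DiffContOnCl on ball 0 R, for z in closedBall z₀ (2R)
  have hslice_dc : ∀ (z : Fin k → ℂ) (j : Fin k), z ∈ closedBall z₀ (2 * R) →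
      DiffContOnCl ℂ (fun w : ℂ => F (z + w • e j)) (ball (0:ℂ) R) := by
    intro z j hz
    apply DifferentiableOn.diffContOnCl
    rw [closure_ball (0:ℂ) (ne_of_gt hR0)]
    intro w hw
    have hmemU : z + w • e j ∈ U := by
      apply hsub
      have h2 := hmem z (2 * R) R w j (mem_closedBall.1 hz) (mem_closedBall_zero_iff.1 hw)
      have h3 : (2:ℝ) * R + R = 3 * R := by ring
      rwa [h3] at h2
    exact ((hF _ hmemU).comp w (by
      simpa using ((differentiableAt_id (𝕜 := ℂ) (x := w)).smul_const
        (e j)).const_add z)).differentiableWithinAt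
  -- bound on partial derivatives on closedBall z₀ (2R)
  have hpartial : ∀ (z : Fin k → ℂ) (j : Fin k), z ∈ closedBall z₀ (2 * R) →
      ‖fderiv ℂ F z (e j)‖ ≤ M / R := by
    intro z j hz
    have hzU : z ∈ U := hsub (closedBall_subset_closedBall (by linarith) hz)
    have hd : HasDerivAt (fun w : ℂ => F (z + w • e j)) (fderiv ℂ F z (e j)) 0 := by
      have := aux_slice F z (e j) 0 (by simpa using hF z hzU)
      simpa using this
    have := Complex.norm_deriv_le_of_forall_mem_sphere_norm_le hR0 (hslice_dc z j hz) (C := M) ?_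
    · rwa [hd.deriv] at this
    · intro w hw
      apply hM
      have h2 := hmem z (2 * R) R w j (mem_closedBall.1 hz) (le_of_eq (mem_sphere_zero_iff_norm.1 hw))
      have h3 : (2:ℝ) * R + R = 3 * R := by ring
      rwa [h3] at h2
  -- operator norm bound
  have hop : ∀ z ∈ closedBall z₀ (2 * R), ‖fderiv ℂ F z‖ ≤ (k : ℝ) * (M / R) := by
    intro z hz
    apply ContinuousLinearMap.opNorm_le_bound _ (by positivity)
    intro v
    have hv : v = ∑ j : Fin k, v j • e j := by
      rw [he]; funext a; simp [Pi.single_apply]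
    calc ‖fderiv ℂ F z v‖ = ‖∑ j : Fin k, v j • fderiv ℂ F z (e j)‖ := by
          conv_lhs => rw [hv]
          rw [map_sum]
          congr 1
          refine Finset.sum_congr rfl fun j _ => ?_
          exact (fderiv ℂ F z).map_smul _ _
      _ ≤ ∑ j : Fin k, ‖v j • fderiv ℂ F z (e j)‖ := norm_sum_le _ _
      _ ≤ ∑ j : Fin k, ‖v‖ * (M / R) := by
          refine Finset.sum_le_sum fun j _ => ?_
          rw [norm_smul]
          have h1 : ‖v j‖ ≤ ‖v‖ := norm_le_pi_norm v j
          exact mul_le_mul h1 (hpartial z j hz) (norm_nonneg _) (norm_nonneg _)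
      _ = (k : ℝ) * (M / R) * ‖v‖ := by
          rw [Finset.sum_const, Finset.card_univ, Fintype.card_fin, nsmul_eq_mul]; ring
  -- the integrand and its z-derivative
  set J : (Fin k → ℂ) → ℝ → ℂ := fun z θ =>
    deriv (circleMap 0 R) θ • ((circleMap 0 R θ) ^ (-2:ℤ) • F (z + circleMap 0 R θ • e i))
    with hJ
  set J' : (Fin k → ℂ) → ℝ → (Fin k → ℂ) →L[ℂ] ℂ := fun z θ =>
    (deriv (circleMap 0 R) θ * (circleMap 0 R θ) ^ (-2:ℤ)) •
      fderiv ℂ F (z + circleMap 0 R θ • e i) with hJ'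
  have hballU : ∀ z ∈ ball z₀ R, z ∈ U := by
    intro z hz
    exact hsub (closedBall_subset_closedBall (by linarith)
      (ball_subset_closedBall hz))
  have hballc : ∀ z ∈ ball z₀ R, z ∈ closedBall z₀ (2 * R) := by
    intro z hz
    exact closedBall_subset_closedBall (by linarith) (ball_subset_closedBall hz)
  have hptc : ∀ (z : Fin k → ℂ), z ∈ ball z₀ R → ∀ θ : ℝ,
      z + circleMap 0 R θ • e i ∈ closedBall z₀ (2 * R) := by
    intro z hz θ
    have h2 := hmem z R R (circleMap 0 R θ) i
      (le_of_lt (mem_ball.1 hz)) (le_of_eq (habs θ))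
    have h3 : R + R = 2 * R := by ring
    rwa [h3] at h2
  -- Cauchy integral representation of the partial derivative on the ball
  have hrep : ∀ z ∈ ball z₀ R, fderiv ℂ F z (e i)
      = (2 * (Real.pi:ℂ) * Complex.I)⁻¹ • ∫ θ in (0:ℝ)..2 * Real.pi, J z θ := by
    intro z hz
    have hd : HasDerivAt (fun w : ℂ => F (z + w • e i)) (fderiv ℂ F z (e i)) 0 := by
      have h0 : z + (0:ℂ) • e i = z := by rw [zero_smul, add_zero]
      have := aux_slice F z (e i) 0 (by rw [h0]; exact hF z (hballU z hz))
      rw [h0] at this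
      exact this
    have hcau0 := DiffContOnCl.deriv_eq_smul_circleIntegral hR0 (hslice_dc z i (hballc z hz))
    have hcau : deriv (fun w : ℂ => F (z + w • e i)) 0 = (2 * (Real.pi:ℂ) * Complex.I)⁻¹ •
        ∮ w in C(0, R), w ^ (-2:ℤ) • F (z + w • e i) := by
      rw [smul_eq_mul] at hcau0
      have h2pi : (2 * (Real.pi:ℂ) * Complex.I) ≠ 0 := by simp [Real.pi_ne_zero, Complex.I_ne_zero]
      rw [eq_inv_smul_iff₀ h2pi, smul_eq_mul, ← hcau0]
      simp [zpow_neg, zpow_two, sq]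
    rw [hd.deriv] at hcau
    rw [hcau]
    simp only [circleIntegral, sub_zero, hJ]
  -- differentiability of the integrand in z
  have hasJ' : ∀ θ : ℝ, ∀ z ∈ ball z₀ R, HasFDerivAt (fun y => J y θ) (J' z θ) z := by
    intro θ z hz
    have hptU : z + circleMap 0 R θ • e i ∈ U :=
      hsub (closedBall_subset_closedBall (by linarith) (hptc z hz θ))
    have htr : HasFDerivAt (fun y : Fin k → ℂ => y + circleMap 0 R θ • e i)
        (ContinuousLinearMap.id ℂ (Fin k → ℂ)) z := by
      simpa using (hasFDerivAt_id (𝕜 := ℂ) z).add_const (circleMap 0 R θ • e i)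
    have hcomp : HasFDerivAt (fun y : Fin k → ℂ => F (y + circleMap 0 R θ • e i))
        (fderiv ℂ F (z + circleMap 0 R θ • e i)) z := by
      have := (hF _ hptU).hasFDerivAt.comp z htr
      simpa [Function.comp_def] using this
    have := ((hcomp.fun_const_smul ((circleMap 0 R θ) ^ (-2:ℤ))).fun_const_smul
      (deriv (circleMap 0 R) θ))
    rw [hJ', hJ]
    refine this.congr_fderiv ?_
    rw [smul_smul]
  -- continuity of the integrand in θ
  have hne : ∀ θ : ℝ, circleMap 0 R θ ≠ 0 := fun θ => circleMap_ne_center (ne_of_gt hR0)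
  have hc1 : Continuous fun θ : ℝ => deriv (circleMap 0 R) θ := by
    simp only [deriv_circleMap]
    exact (continuous_circleMap 0 R).mul continuous_const
  have hc2 : Continuous fun θ : ℝ => (circleMap 0 R θ) ^ (-2:ℤ) :=
    (continuous_circleMap 0 R).zpow₀ _ (fun θ => Or.inl (hne θ))
  have hJcont : ∀ z ∈ ball z₀ R, Continuous (J z) := by
    intro z hz
    have hc3 : Continuous fun θ : ℝ => F (z + circleMap 0 R θ • e i) := by
      apply (hFc.mono hsub).comp_continuous
      · exact continuous_const.add ((continuous_circleMap 0 R).smul continuous_const)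
      · intro θ
        exact closedBall_subset_closedBall (by linarith) (hptc z hz θ)
    exact hc1.smul (hc2.smul hc3)
  -- apply dominated differentiation
  have hz₀ball : z₀ ∈ ball z₀ R := mem_ball_self hR0
  have key := intervalIntegral.hasFDerivAt_integral_of_dominated_of_fderiv_le
    (𝕜 := ℂ) (μ := volume) (a := (0:ℝ)) (b := 2 * Real.pi)
    (F := J) (F' := J') (x₀ := z₀)
    (bound := fun _ => (R * (R:ℝ) ^ (-2:ℤ)) * ((k:ℝ) * (M / R))) (ball_mem_nhds z₀ hR0)
    ?_ ?_ ?_ ?_ ?_ ?_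
  · -- conclude
    have heq : (fun z => fderiv ℂ F z (Pi.single i 1)) =ᶠ[𝓝 z₀]
        fun z => (2 * (Real.pi:ℂ) * Complex.I)⁻¹ • ∫ θ in (0:ℝ)..2 * Real.pi, J z θ := by
      filter_upwards [ball_mem_nhds z₀ hR0] with z hz
      exact hrep z hz
    rw [heq.differentiableAt_iff]
    exact key.differentiableAt.fun_const_smul _
  · filter_upwards [ball_mem_nhds z₀ hR0] with z hz
    exact (hJcont z hz).aestronglyMeasurable
  · exact (hJcont z₀ hz₀ball).intervalIntegrable _ _
  · -- measurability of J' z₀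
    have hγ : Continuous fun θ : ℝ => z₀ + circleMap 0 R θ • e i :=
      continuous_const.add ((continuous_circleMap 0 R).smul continuous_const)
    have hm1 : Measurable fun θ : ℝ => fderiv ℂ F (z₀ + circleMap 0 R θ • e i) :=
      (measurable_fderiv ℂ F).comp hγ.measurable
    have hc4 : Continuous fun θ : ℝ =>
        deriv (circleMap 0 R) θ * (circleMap 0 R θ) ^ (-2:ℤ) := hc1.mul hc2
    exact hc4.aestronglyMeasurable.smul hm1.aestronglyMeasurable
  · -- bound
    refine Filter.Eventually.of_forall (fun θ _ => fun z hz => ?_)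
    have hJ'eq : J' z θ = (deriv (circleMap 0 R) θ * (circleMap 0 R θ) ^ (-2:ℤ)) •
        fderiv ℂ F (z + circleMap 0 R θ • e i) := rfl
    show ‖J' z θ‖ ≤ _
    rw [hJ'eq]
    have h1 : ‖deriv (circleMap 0 R) θ * (circleMap 0 R θ) ^ (-2:ℤ)‖
        = R * (R:ℝ) ^ (-2:ℤ) := by
      rw [norm_mul, norm_zpow, habs, deriv_circleMap, norm_mul, habs]
      simp
    have h2 : ‖fderiv ℂ F (z + circleMap 0 R θ • e i)‖ ≤ (k:ℝ) * (M / R) :=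
      hop _ (hptc z hz θ)
    have h3 : (0:ℝ) ≤ R * (R:ℝ) ^ (-2:ℤ) := by positivity
    calc ‖(deriv (circleMap 0 R) θ * (circleMap 0 R θ) ^ (-2:ℤ)) •
          fderiv ℂ F (z + circleMap 0 R θ • e i)‖
        ≤ ‖deriv (circleMap 0 R) θ * (circleMap 0 R θ) ^ (-2:ℤ)‖ *
          ‖fderiv ℂ F (z + circleMap 0 R θ • e i)‖ := (norm_smul _ _).le
      _ ≤ R * (R:ℝ) ^ (-2:ℤ) * ((k:ℝ) * (M / R)) := by
          rw [h1]
          exact mul_le_mul_of_nonneg_left h2 h3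
  · exact intervalIntegrable_const
  · -- differentiability a.e.
    refine Filter.Eventually.of_forall (fun θ _ => fun z hz => hasJ' θ z hz)

lemma euler {k : ℕ} {U : Set (Fin k → ℂ)} (hU : IsOpen U)
    (F : (Fin k → ℂ) → ℂ) (hF : ∀ z ∈ U, DifferentiableAt ℂ F z) (d : Fin k → ℂ)
    (hhom : ∀ z ∈ U, ∃ ε > 0, ∀ t : Fin k → ℝ, (∀ i, |t i - 1| < ε) →
      (fun i => (t i : ℂ) * z i) ∈ U ∧
      F (fun i => (t i : ℂ) * z i) =
        (∏ i, Complex.exp (d i * (Real.log (t i) : ℂ))) * F z)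
    (i : Fin k) {z : Fin k → ℂ} (hz : z ∈ U) :
    z i * fderiv ℂ F z (Pi.single i 1) = d i * F z := by
  classical
  obtain ⟨ε, hε0, hεh⟩ := hhom z hz
  set c : ℝ → (Fin k → ℂ) := fun t => z + (t - 1) • (Pi.single i (z i) : Fin k → ℂ) with hc
  have hc1 : c 1 = z := by simp [hc]
  have hcd : HasDerivAt c (Pi.single i (z i) : Fin k → ℂ) 1 := by
    simpa [hc] using (((hasDerivAt_id (1:ℝ)).sub_const 1).smul_const (Pi.single i (z i) : Fin k → ℂ)).const_add z
  have hF' : HasFDerivAt F ((fderiv ℂ F z).restrictScalars ℝ) (c 1) := by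
    rw [hc1]; exact (hF z hz).hasFDerivAt.restrictScalars ℝ
  have hg : HasDerivAt (F ∘ c) (fderiv ℂ F z (Pi.single i (z i) : Fin k → ℂ)) 1 := by
    simpa using hF'.comp_hasDerivAt 1 hcd
  -- the model function
  have hlog : HasDerivAt Real.log 1 1 := by simpa using Real.hasDerivAt_log one_ne_zero
  have hlogC : HasDerivAt (fun t : ℝ => ((Real.log t : ℝ) : ℂ)) ((1:ℝ):ℂ) 1 :=
    hlog.ofReal_comp
  have hexp : HasDerivAt (fun w : ℂ => Complex.exp (d i * w)) (d i)
      ((Real.log 1 : ℝ) : ℂ) := by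
    have hmul : HasDerivAt (fun w : ℂ => d i * w) (d i) ((Real.log 1 : ℝ) : ℂ) := by
      simpa using (hasDerivAt_id ((Real.log 1 : ℝ) : ℂ)).const_mul (d i)
    have := (Complex.hasDerivAt_exp (d i * ((Real.log 1 : ℝ) : ℂ))).comp _ hmul
    simpa [Real.log_one, Function.comp_def] using this
  have hr : HasDerivAt (fun t : ℝ => Complex.exp (d i * (Real.log t : ℂ)) * F z)
      (d i * F z) 1 := by
    have := (HasDerivAt.scomp (1:ℝ) hexp hlogC).mul_const (F z)
    simpa using this
  -- eventual equality
  have heq : (F ∘ c) =ᶠ[𝓝 (1:ℝ)] fun t : ℝ => Complex.exp (d i * (Real.log t : ℂ)) * F z := by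
    filter_upwards [Metric.ball_mem_nhds (1:ℝ) hε0] with t ht
    set tv : Fin k → ℝ := Function.update (fun _ => (1:ℝ)) i t with htv
    have h1 : ∀ j, |tv j - 1| < ε := by
      intro j
      rcases eq_or_ne j i with h | h
      · subst h
        simp only [htv, Function.update_self]
        simpa [Real.dist_eq] using mem_ball.1 ht
      · simp [htv, Function.update_of_ne h, hε0]
    obtain ⟨-, h2⟩ := hεh tv h1
    have hkey : (fun j => (tv j : ℂ) * z j) = c t := by
      funext j
      rcases eq_or_ne j i with h | h
      · subst h
        simp only [htv, Function.update_self, hc, Pi.add_apply, Pi.smul_apply,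
          Pi.single_eq_same]
        rw [Complex.real_smul]
        push_cast
        ring
      · simp [htv, Function.update_of_ne h, hc, Pi.single_eq_of_ne h]
    have hprod : (∏ j, Complex.exp (d j * (Real.log (tv j) : ℂ)))
        = Complex.exp (d i * (Real.log t : ℂ)) := by
      rw [Finset.prod_eq_single i]
      · simp [htv]
      · intro j _ hj
        simp [htv, Function.update_of_ne hj, Real.log_one]
      · simp
    have := h2
    rw [hkey, hprod] at this
    simpa using this
  have hg' : HasDerivAt (F ∘ c) (d i * F z) 1 := hr.congr_of_eventuallyEq heq
  have huniq := hg.unique hg'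
  rw [← huniq]
  have hps : (Pi.single i (z i) : Fin k → ℂ) = z i • (Pi.single i 1 : Fin k → ℂ) := by
    funext a
    rcases eq_or_ne a i with h | h
    · subst h; simp
    · simp [Pi.single_eq_of_ne h]
  rw [hps, ContinuousLinearMap.map_smul, smul_eq_mul]

lemma chain_rule {k : ℕ} {X : Type*} [NormedAddCommGroup X] [NormedSpace ℝ X]
    (φ : Fin k → X → ℂ) {x : X} (hφd : ∀ i, DifferentiableAt ℝ (φ i) x)
    (F' : (Fin k → ℂ) → ℂ) (hF' : DifferentiableAt ℂ F' (fun i => φ i x)) (v : X) :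
    fderiv ℝ (fun y => F' (fun i => φ i y)) x v =
      ∑ j, fderiv ℂ F' (fun i => φ i x) (Pi.single j 1) * fderiv ℝ (φ j) x v := by
  classical
  have hΦd : DifferentiableAt ℝ (fun y (i : Fin k) => φ i y) x :=
    differentiableAt_pi.2 hφd
  have h2 : HasFDerivAt (fun y => F' (fun i => φ i y))
      (((fderiv ℂ F' (fun i => φ i x)).restrictScalars ℝ).comp
        (fderiv ℝ (fun y (i : Fin k) => φ i y) x)) x :=
    (hF'.hasFDerivAt.restrictScalars ℝ).comp x hΦd.hasFDerivAt
  rw [h2.fderiv]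
  rw [ContinuousLinearMap.comp_apply, ContinuousLinearMap.coe_restrictScalars']
  have hpi : fderiv ℝ (fun y (i : Fin k) => φ i y) x v = fun i => fderiv ℝ (φ i) x v := by
    rw [fderiv_pi hφd]; rfl
  rw [hpi]
  have hsingle : ∀ (w : Fin k → ℂ) (j : Fin k), (Pi.single j (w j) : Fin k → ℂ) = w j • (Pi.single j (1:ℂ) : Fin k → ℂ) := by
    intro w j; funext a
    rcases eq_or_ne a j with h | h
    · subst h; simp
    · simp [Pi.single_eq_of_ne h]
  have hdecomp : (fun i => fderiv ℝ (φ i) x v)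
      = ∑ j : Fin k, (fderiv ℝ (φ j) x v) • (Pi.single j (1:ℂ) : Fin k → ℂ) := by
    rw [← Finset.univ_sum_single (fun i => fderiv ℝ (φ i) x v)]
    refine Finset.sum_congr rfl fun j _ => hsingle (fun i => fderiv ℝ (φ i) x v) j
  rw [hdecomp, map_sum]
  refine Finset.sum_congr rfl fun j _ => ?_
  rw [ContinuousLinearMap.map_smul, smul_eq_mul, mul_comm]

lemma euler2 {k : ℕ} {U : Set (Fin k → ℂ)} (hU : IsOpen U)
    (F : (Fin k → ℂ) → ℂ) (hF : ∀ z ∈ U, DifferentiableAt ℂ F z) (d : Fin k → ℂ)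
    (hG : ∀ j, ∀ z ∈ U, DifferentiableAt ℂ (fun w => fderiv ℂ F w (Pi.single j 1)) z)
    (heuler : ∀ i, ∀ z ∈ U, z i * fderiv ℂ F z (Pi.single i 1) = d i * F z)
    (i j : Fin k) {z : Fin k → ℂ} (hz : z ∈ U) :
    z i * (z j * fderiv ℂ (fun w => fderiv ℂ F w (Pi.single j 1)) z (Pi.single i 1))
      = d j * (d i * F z) - (if j = i then d i * F z else 0) := by
  classical
  have hGd := hG j z hz
  have hfeq : (fun w => w j * fderiv ℂ F w (Pi.single j 1)) =ᶠ[𝓝 z] (fun w => d j * F w) := by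
    filter_upwards [hU.mem_nhds hz] with w hw
    exact heuler j w hw
  have hde := hfeq.fderiv_eq (𝕜 := ℂ)
  have hproj : DifferentiableAt ℂ (fun w : Fin k → ℂ => w j) z :=
    (ContinuousLinearMap.proj j : (Fin k → ℂ) →L[ℂ] ℂ).differentiableAt
  have hL : fderiv ℂ (fun w => w j * fderiv ℂ F w (Pi.single j 1)) z
      = z j • fderiv ℂ (fun w => fderiv ℂ F w (Pi.single j 1)) z
        + (fderiv ℂ F z (Pi.single j 1)) • fderiv ℂ (fun w : Fin k → ℂ => w j) z :=
    fderiv_mul hproj hGd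
  have hR : fderiv ℂ (fun w => d j * F w) z = d j • fderiv ℂ F z :=
    fderiv_const_mul (hF z hz) (d j)
  have hprojf : fderiv ℂ (fun w : Fin k → ℂ => w j) z
      = (ContinuousLinearMap.proj j : (Fin k → ℂ) →L[ℂ] ℂ) :=
    (ContinuousLinearMap.proj j : (Fin k → ℂ) →L[ℂ] ℂ).fderiv
  have h0 := hde
  rw [hL, hR, hprojf] at h0
  have h2 := congrArg (fun L : (Fin k → ℂ) →L[ℂ] ℂ => L (Pi.single i (1:ℂ) : Fin k → ℂ)) h0
  simp only [ContinuousLinearMap.add_apply, ContinuousLinearMap.smul_apply,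
    ContinuousLinearMap.proj_apply, smul_eq_mul] at h2
  have eu := heuler i z hz
  rcases eq_or_ne j i with h | h
  · subst h
    rw [Pi.single_eq_same, mul_one] at h2
    rw [if_pos rfl]
    linear_combination z j * h2 + (d j - 1) * eu
  · rw [Pi.single_eq_of_ne h, mul_zero, add_zero] at h2
    rw [if_neg h]
    linear_combination z i * h2 + d j * eu



theorem generalised_eigenfamily_holomorphic {m k : ℕ}
    (Ω : Set (EuclideanSpace ℝ (Fin m))) (hΩ : IsOpen Ω)
    (lam : Fin k → ℂ) (A : Matrix (Fin k) (Fin k) ℂ) (hA : A.IsSymm)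
    (φ : Fin k → EuclideanSpace ℝ (Fin m) → ℂ)
    (hφ : ∀ i, ContDiffOn ℝ (⊤ : ℕ∞) (φ i) Ω)
    (hlap : ∀ i, ∀ x ∈ Ω, lap (φ i) x = lam i * φ i x)
    (hkap : ∀ i j, ∀ x ∈ Ω, kap (φ i) (φ j) x = A i j * φ i x * φ j x)
    (U : Set (Fin k → ℂ)) (hU : IsOpen U)
    (F : (Fin k → ℂ) → ℂ) (hF : ∀ z ∈ U, DifferentiableAt ℂ F z) (d : Fin k → ℂ)
    (hhom : ∀ z ∈ U, ∃ ε > 0, ∀ t : Fin k → ℝ, (∀ i, |t i - 1| < ε) →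
      (fun i => (t i : ℂ) * z i) ∈ U ∧
      F (fun i => (t i : ℂ) * z i) =
        (∏ i, Complex.exp (d i * (Real.log (t i) : ℂ))) * F z)
    (Φ : EuclideanSpace ℝ (Fin m) → (Fin k → ℂ)) (hΦ : ∀ x i, Φ x i = φ i x) :
    (∀ x ∈ Ω, Φ x ∈ U →
      lap (F ∘ Φ) x =
        ((∑ i, d i * (lam i - A i i)) + ∑ i, ∑ j, d i * d j * A i j) * (F ∘ Φ) x ∧
      kap (F ∘ Φ) (F ∘ Φ) x = (∑ i, ∑ j, d i * d j * A i j) * ((F ∘ Φ) x) ^ 2) ∧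
    ((∑ i, ∑ j, d i * d j * A i j) = 0 → (∑ i, d i * (lam i - A i i)) = 0 →
      ∀ x ∈ Ω, Φ x ∈ U →
        lap (F ∘ Φ) x = 0 ∧ kap (F ∘ Φ) (F ∘ Φ) x = 0) := by
  classical
  have hΦ' : Φ = fun y i => φ i y := funext fun y => funext fun i => hΦ y i
  subst hΦ'
  have main : ∀ x ∈ Ω, (fun i => φ i x) ∈ U →
      lap (F ∘ fun y i => φ i y) x =
        ((∑ i, d i * (lam i - A i i)) + ∑ i, ∑ j, d i * d j * A i j) *
          F (fun i => φ i x) ∧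
      kap (F ∘ fun y i => φ i y) (F ∘ fun y i => φ i y) x =
        (∑ i, ∑ j, d i * d j * A i j) * (F (fun i => φ i x)) ^ 2 := by
    intro x hxΩ hxU
    have hφdx : ∀ y ∈ Ω, ∀ i, DifferentiableAt ℝ (φ i) y := fun y hy i =>
      ((hφ i).contDiffAt (hΩ.mem_nhds hy)).differentiableAt (by simp)
    have hGdiff : ∀ j, ∀ w ∈ U, DifferentiableAt ℂ
        (fun w => fderiv ℂ F w (Pi.single j 1)) w := fun j w hw => diffG hU hF j hw
    have heu : ∀ i, ∀ w ∈ U, w i * fderiv ℂ F w (Pi.single i 1) = d i * F w :=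
      fun i w hw => euler hU F hF d hhom i hw
    have heu2 : ∀ l j : Fin k,
        φ l x * (φ j x * fderiv ℂ (fun w => fderiv ℂ F w (Pi.single j 1))
            (fun i => φ i x) (Pi.single l 1))
          = d j * (d l * F (fun i => φ i x)) -
            (if j = l then d l * F (fun i => φ i x) else 0) := by
      intro l j
      exact euler2 hU F hF d hGdiff heu l j hxU
    -- neighborhood where everything holds
    have hS : ∀ᶠ y in 𝓝 x, y ∈ Ω ∧ (fun i => φ i y) ∈ U := by
      have hcontΦ : ContinuousAt (fun y (i : Fin k) => φ i y) x :=
        continuousAt_pi.2 fun i => (hφdx x hxΩ i).continuousAt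
      have h1 : Ω ∈ 𝓝 x := hΩ.mem_nhds hxΩ
      have h2 : (fun y (i : Fin k) => φ i y) ⁻¹' U ∈ 𝓝 x :=
        hcontΦ.preimage_mem_nhds (hU.mem_nhds hxU)
      filter_upwards [h1, h2] with y hy1 hy2
      exact ⟨hy1, hy2⟩
    -- first-order chain rule
    have hrep1 : ∀ y, y ∈ Ω → (fun i => φ i y) ∈ U →
        ∀ v, fderiv ℝ (F ∘ fun y i => φ i y) y v
          = ∑ j, fderiv ℂ F (fun i => φ i y) (Pi.single j 1) * fderiv ℝ (φ j) y v := by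
      intro y hy hyU v
      exact chain_rule φ (hφdx y hy) F (hF _ hyU) v
    constructor
    · -- Laplacian
      have heux : ∀ i, φ i x * fderiv ℂ F (fun i => φ i x) (Pi.single i 1)
          = d i * F (fun i => φ i x) := fun i => heu i _ hxU
      have hk : ∀ l j, (∑ a : Fin m, fderiv ℝ (φ l) x (EuclideanSpace.single a 1) *
            fderiv ℝ (φ j) x (EuclideanSpace.single a 1)) = A l j * φ l x * φ j x :=
        fun l j => hkap l j x hxΩ
      have hlapφ : ∀ j, (∑ a : Fin m, fderiv ℝ (fun y => fderiv ℝ (φ j) y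
            (EuclideanSpace.single a 1)) x (EuclideanSpace.single a 1)) = lam j * φ j x :=
        fun j => hlap j x hxΩ
      have hDG : ∀ j, DifferentiableAt ℝ
          (fun y => fderiv ℂ F (fun i => φ i y) (Pi.single j 1)) x := by
        intro j
        have h1 : DifferentiableAt ℂ (fun w => fderiv ℂ F w (Pi.single j 1))
            (fun i => φ i x) := hGdiff j _ hxU
        have h2 : DifferentiableAt ℝ (fun y (i : Fin k) => φ i y) x :=
          differentiableAt_pi.2 (hφdx x hxΩ)
        exact (h1.restrictScalars ℝ).comp x h2
      have hDq : ∀ j (a : Fin m), DifferentiableAt ℝ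
          (fun y => fderiv ℝ (φ j) y (EuclideanSpace.single a 1)) x := by
        intro j a
        have h1 : ContDiffOn ℝ (⊤ : ℕ∞) (fderiv ℝ (φ j)) Ω := (hφ j).fderiv_of_isOpen hΩ (by simp)
        have h2 : DifferentiableAt ℝ (fderiv ℝ (φ j)) x :=
          (h1.contDiffAt (hΩ.mem_nhds hxΩ)).differentiableAt (by simp)
        exact ((ContinuousLinearMap.apply ℝ ℂ
          (EuclideanSpace.single a 1)).differentiableAt).comp x h2
      have hstep : ∀ a : Fin m,
          fderiv ℝ (fun y => fderiv ℝ (F ∘ fun y i => φ i y) y (EuclideanSpace.single a 1)) x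
              (EuclideanSpace.single a 1)
            = ∑ j, (fderiv ℂ F (fun i => φ i x) (Pi.single j 1) *
                fderiv ℝ (fun y => fderiv ℝ (φ j) y (EuclideanSpace.single a 1)) x
                  (EuclideanSpace.single a 1)
              + fderiv ℝ (φ j) x (EuclideanSpace.single a 1) *
                ∑ l, fderiv ℂ (fun w => fderiv ℂ F w (Pi.single j 1)) (fun i => φ i x)
                    (Pi.single l 1) * fderiv ℝ (φ l) x (EuclideanSpace.single a 1)) := by
        intro a
        have heqa : (fun y => fderiv ℝ (F ∘ fun y i => φ i y) y (EuclideanSpace.single a 1))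
            =ᶠ[𝓝 x] (fun y => ∑ j, fderiv ℂ F (fun i => φ i y) (Pi.single j 1) *
              fderiv ℝ (φ j) y (EuclideanSpace.single a 1)) := by
          filter_upwards [hS] with y hy
          exact hrep1 y hy.1 hy.2 _
        rw [heqa.fderiv_eq]
        rw [fderiv_fun_sum (fun j _ => (hDG j).fun_mul (hDq j a))]
        rw [ContinuousLinearMap.sum_apply]
        refine Finset.sum_congr rfl fun j _ => ?_
        rw [fderiv_fun_mul (hDG j) (hDq j a)]
        rw [ContinuousLinearMap.add_apply, ContinuousLinearMap.smul_apply,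
          ContinuousLinearMap.smul_apply, smul_eq_mul, smul_eq_mul]
        have hcr : fderiv ℝ (fun y => fderiv ℂ F (fun i => φ i y) (Pi.single j 1)) x
              (EuclideanSpace.single a 1)
            = ∑ l, fderiv ℂ (fun w => fderiv ℂ F w (Pi.single j 1)) (fun i => φ i x)
                (Pi.single l 1) * fderiv ℝ (φ l) x (EuclideanSpace.single a 1) :=
          chain_rule φ (hφdx x hxΩ) (fun w => fderiv ℂ F w (Pi.single j 1))
            (hGdiff j _ hxU) _
        rw [hcr]
      unfold lap
      calc (∑ a : Fin m, fderiv ℝ (fun y => fderiv ℝ (F ∘ fun y i => φ i y) y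
              (EuclideanSpace.single a 1)) x (EuclideanSpace.single a 1))
          = ∑ a : Fin m, ∑ j, (fderiv ℂ F (fun i => φ i x) (Pi.single j 1) *
                fderiv ℝ (fun y => fderiv ℝ (φ j) y (EuclideanSpace.single a 1)) x
                  (EuclideanSpace.single a 1)
              + fderiv ℝ (φ j) x (EuclideanSpace.single a 1) *
                ∑ l, fderiv ℂ (fun w => fderiv ℂ F w (Pi.single j 1)) (fun i => φ i x)
                    (Pi.single l 1) * fderiv ℝ (φ l) x (EuclideanSpace.single a 1)) :=
            Finset.sum_congr rfl fun a _ => hstep a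
        _ = ∑ j, ∑ a : Fin m, (fderiv ℂ F (fun i => φ i x) (Pi.single j 1) *
                fderiv ℝ (fun y => fderiv ℝ (φ j) y (EuclideanSpace.single a 1)) x
                  (EuclideanSpace.single a 1)
              + fderiv ℝ (φ j) x (EuclideanSpace.single a 1) *
                ∑ l, fderiv ℂ (fun w => fderiv ℂ F w (Pi.single j 1)) (fun i => φ i x)
                    (Pi.single l 1) * fderiv ℝ (φ l) x (EuclideanSpace.single a 1)) :=
            Finset.sum_comm
        _ = ∑ j, (fderiv ℂ F (fun i => φ i x) (Pi.single j 1) * (lam j * φ j x)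
              + ∑ l, fderiv ℂ (fun w => fderiv ℂ F w (Pi.single j 1)) (fun i => φ i x)
                  (Pi.single l 1) * (A l j * φ l x * φ j x)) := by
            refine Finset.sum_congr rfl fun j _ => ?_
            rw [Finset.sum_add_distrib]
            congr 1
            · rw [← Finset.mul_sum, hlapφ j]
            · have hinner : ∀ a : Fin m, fderiv ℝ (φ j) x (EuclideanSpace.single a 1) *
                  ∑ l, fderiv ℂ (fun w => fderiv ℂ F w (Pi.single j 1)) (fun i => φ i x)
                      (Pi.single l 1) * fderiv ℝ (φ l) x (EuclideanSpace.single a 1)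
                  = ∑ l, fderiv ℂ (fun w => fderiv ℂ F w (Pi.single j 1)) (fun i => φ i x)
                      (Pi.single l 1) * (fderiv ℝ (φ l) x (EuclideanSpace.single a 1) *
                        fderiv ℝ (φ j) x (EuclideanSpace.single a 1)) := by
                intro a
                rw [Finset.mul_sum]
                exact Finset.sum_congr rfl fun l _ => by ring
              rw [Finset.sum_congr rfl (fun a _ => hinner a), Finset.sum_comm]
              refine Finset.sum_congr rfl fun l _ => ?_
              rw [← Finset.mul_sum, hk l j]
        _ = ∑ j, (lam j * (d j * F (fun i => φ i x)) +
              ∑ l, (A l j * (d j * (d l * F (fun i => φ i x))) -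
                A l j * (if j = l then d l * F (fun i => φ i x) else 0))) := by
            refine Finset.sum_congr rfl fun j _ => ?_
            congr 1
            · linear_combination lam j * heux j
            · refine Finset.sum_congr rfl fun l _ => ?_
              linear_combination A l j * heu2 l j
        _ = ((∑ i, d i * (lam i - A i i)) + ∑ i, ∑ j, d i * d j * A i j) *
              F (fun i => φ i x) := by
            have hY : ∀ j, (∑ l, A l j * (if j = l then d l * F (fun i => φ i x) else 0))
                = A j j * (d j * F (fun i => φ i x)) := by
              intro j
              rw [Finset.sum_congr rfl (fun l (_ : l ∈ Finset.univ) =>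
                (mul_ite (j = l) (A l j) (d l * F (fun i => φ i x)) 0).trans
                  (by rw [mul_zero]))]
              rw [Finset.sum_ite_eq]
              simp
            have hXswap : (∑ j, ∑ l, A l j * (d j * (d l * F (fun i => φ i x))))
                = ∑ i, ∑ j, d i * d j * A i j * F (fun i => φ i x) := by
              rw [Finset.sum_comm]
              exact Finset.sum_congr rfl fun i _ =>
                Finset.sum_congr rfl fun j _ => by ring
            have h1 : (∑ i, (∑ j, d i * d j * A i j) * F (fun i => φ i x))
                = ∑ i, ∑ j, d i * d j * A i j * F (fun i => φ i x) :=
              Finset.sum_congr rfl fun i _ => Finset.sum_mul _ _ _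
            have h2 : (∑ j, lam j * (d j * F (fun i => φ i x)))
                - (∑ j, A j j * (d j * F (fun i => φ i x)))
                = ∑ i, d i * (lam i - A i i) * F (fun i => φ i x) := by
              rw [← Finset.sum_sub_distrib]
              exact Finset.sum_congr rfl fun i _ => by ring
            rw [Finset.sum_add_distrib,
              Finset.sum_congr rfl (fun j (_ : j ∈ Finset.univ) => Finset.sum_sub_distrib _ _),
              Finset.sum_sub_distrib, hXswap,
              Finset.sum_congr rfl (fun j (_ : j ∈ Finset.univ) => hY j),
              add_mul, Finset.sum_mul, Finset.sum_mul, h1]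
            linear_combination h2
    · -- conformality
      have heux : ∀ i, φ i x * fderiv ℂ F (fun i => φ i x) (Pi.single i 1)
          = d i * F (fun i => φ i x) := fun i => heu i _ hxU
      have hk : ∀ i j, (∑ a : Fin m, fderiv ℝ (φ i) x (EuclideanSpace.single a 1) *
            fderiv ℝ (φ j) x (EuclideanSpace.single a 1)) = A i j * φ i x * φ j x :=
        fun i j => hkap i j x hxΩ
      unfold kap
      calc ∑ a : Fin m, fderiv ℝ (F ∘ fun y i => φ i y) x (EuclideanSpace.single a 1) *
            fderiv ℝ (F ∘ fun y i => φ i y) x (EuclideanSpace.single a 1)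
          = ∑ a : Fin m, (∑ i, fderiv ℂ F (fun i => φ i x) (Pi.single i 1) *
                fderiv ℝ (φ i) x (EuclideanSpace.single a 1)) *
              (∑ j, fderiv ℂ F (fun i => φ i x) (Pi.single j 1) *
                fderiv ℝ (φ j) x (EuclideanSpace.single a 1)) := by
            refine Finset.sum_congr rfl fun a _ => ?_
            rw [hrep1 x hxΩ hxU]
        _ = ∑ a : Fin m, ∑ i, ∑ j,
              (fderiv ℂ F (fun i => φ i x) (Pi.single i 1) *
                fderiv ℝ (φ i) x (EuclideanSpace.single a 1)) *
              (fderiv ℂ F (fun i => φ i x) (Pi.single j 1) *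
                fderiv ℝ (φ j) x (EuclideanSpace.single a 1)) := by
            refine Finset.sum_congr rfl fun a _ => ?_
            rw [Finset.sum_mul_sum]
        _ = ∑ i, ∑ j, ∑ a : Fin m,
              (fderiv ℂ F (fun i => φ i x) (Pi.single i 1) *
                fderiv ℝ (φ i) x (EuclideanSpace.single a 1)) *
              (fderiv ℂ F (fun i => φ i x) (Pi.single j 1) *
                fderiv ℝ (φ j) x (EuclideanSpace.single a 1)) := by
            rw [Finset.sum_comm]
            exact Finset.sum_congr rfl fun i _ => Finset.sum_comm
        _ = ∑ i, ∑ j, (fderiv ℂ F (fun i => φ i x) (Pi.single i 1) *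
              fderiv ℂ F (fun i => φ i x) (Pi.single j 1)) *
              ∑ a : Fin m, fderiv ℝ (φ i) x (EuclideanSpace.single a 1) *
                fderiv ℝ (φ j) x (EuclideanSpace.single a 1) := by
            refine Finset.sum_congr rfl fun i _ => Finset.sum_congr rfl fun j _ => ?_
            rw [Finset.mul_sum]
            exact Finset.sum_congr rfl fun a _ => by ring
        _ = ∑ i, ∑ j, (fderiv ℂ F (fun i => φ i x) (Pi.single i 1) *
              fderiv ℂ F (fun i => φ i x) (Pi.single j 1)) *
              (A i j * φ i x * φ j x) := by
            refine Finset.sum_congr rfl fun i _ => Finset.sum_congr rfl fun j _ => ?_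
            rw [hk]
        _ = ∑ i, ∑ j, d i * d j * A i j * (F (fun i => φ i x)) ^ 2 := by
            refine Finset.sum_congr rfl fun i _ => Finset.sum_congr rfl fun j _ => ?_
            linear_combination (A i j * φ j x * fderiv ℂ F (fun i => φ i x) (Pi.single j 1)) *
                heux i + (A i j * d i * F (fun i => φ i x)) * heux j
        _ = (∑ i, ∑ j, d i * d j * A i j) * (F (fun i => φ i x)) ^ 2 := by
            rw [Finset.sum_mul]
            exact Finset.sum_congr rfl fun i _ => by rw [Finset.sum_mul]
  refine ⟨main, fun hmu hlam x hx hxu => ?_⟩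
  obtain ⟨h1, h2⟩ := main x hx hxu
  constructor
  · rw [h1, hmu, hlam]; ring
  · rw [h2, hmu]; ring
end

section
/- Let Ω ⊆ EuclideanSpace ℝ (Fin m) be open, let λ₁,…,λ_k ∈ ℂ, let A be a symmetric complex k×k matrix, and let φ₁,…,φ_k : Ω → ℂ be smooth functions satisfying Δφ_i = λ_i·φ_i and κ(φ_i,φ_j) = A_{ij}·φ_i·φ_j on Ω for all i,j. Fix natural numbers d₁,…,d_k and set φ = φ₁^{d₁}·…·φ_k^{d_k} : Ω → ℂ. Then on all of Ω, Δφ = λ̃·φ and κ(φ,φ) = μ̃·φ², where λ̃ = Σ_i d_i(λ_i − A_{ii}) + Σ_{i,j} d_i d_j A_{ij} and μ̃ = Σ_{i,j} d_i d_j A_{ij}. -/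
open scoped ContDiff

section helpers
variable {m : ℕ} {Ω : Set (EuclideanSpace ℝ (Fin m))} {x : EuclideanSpace ℝ (Fin m)}

lemma dAt (hΩ : IsOpen Ω) {f : EuclideanSpace ℝ (Fin m) → ℂ}
    (hf : ContDiffOn ℝ ∞ f Ω) (hx : x ∈ Ω) : DifferentiableAt ℝ f x :=
  (hf.differentiableOn (by norm_num)).differentiableAt (hΩ.mem_nhds hx)

lemma contDiffOn_deriv (hΩ : IsOpen Ω) {f : EuclideanSpace ℝ (Fin m) → ℂ}
    (hf : ContDiffOn ℝ ∞ f Ω) (v : EuclideanSpace ℝ (Fin m)) :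
    ContDiffOn ℝ ∞ (fun y => fderiv ℝ f y v) Ω :=
  (((contDiffOn_infty_iff_fderiv_of_isOpen hΩ).1 hf).2).clm_apply contDiffOn_const

lemma fderiv_mul_apply' {f g : EuclideanSpace ℝ (Fin m) → ℂ}
    (hf : DifferentiableAt ℝ f x) (hg : DifferentiableAt ℝ g x) (v : EuclideanSpace ℝ (Fin m)) :
    fderiv ℝ (fun y => f y * g y) x v = fderiv ℝ f x v * g x + f x * fderiv ℝ g x v := by
  rw [fderiv_fun_mul hf hg]
  simp [smul_eq_mul]
  ring

lemma kap_symm (f g : EuclideanSpace ℝ (Fin m) → ℂ) (x) : kap f g x = kap g f x := by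
  simp [kap, mul_comm]

lemma kap_mul {f g h : EuclideanSpace ℝ (Fin m) → ℂ}
    (hf : DifferentiableAt ℝ f x) (hg : DifferentiableAt ℝ g x) :
    kap (fun y => f y * g y) h x = f x * kap g h x + g x * kap f h x := by
  unfold kap
  rw [Finset.mul_sum, Finset.mul_sum, ← Finset.sum_add_distrib]
  refine Finset.sum_congr rfl fun a _ => ?_
  rw [fderiv_mul_apply' hf hg]
  ring

lemma lap_mul (hΩ : IsOpen Ω) {f g : EuclideanSpace ℝ (Fin m) → ℂ}
    (hf : ContDiffOn ℝ ∞ f Ω) (hg : ContDiffOn ℝ ∞ g Ω) (hx : x ∈ Ω) :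
    lap (fun y => f y * g y) x = lap f x * g x + 2 * kap f g x + f x * lap g x := by
  have key : ∀ a : Fin m,
      fderiv ℝ (fun y => fderiv ℝ (fun y => f y * g y) y (EuclideanSpace.single a 1)) x
          (EuclideanSpace.single a 1)
        = fderiv ℝ (fun y => fderiv ℝ f y (EuclideanSpace.single a 1)) x (EuclideanSpace.single a 1) * g x
          + 2 * (fderiv ℝ f x (EuclideanSpace.single a 1) * fderiv ℝ g x (EuclideanSpace.single a 1))
          + f x * fderiv ℝ (fun y => fderiv ℝ g y (EuclideanSpace.single a 1)) x (EuclideanSpace.single a 1) := by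
    intro a
    set v := EuclideanSpace.single a (1 : ℝ) with hv
    have hev : (fun y => fderiv ℝ (fun y => f y * g y) y v) =ᶠ[nhds x]
        (fun y => fderiv ℝ f y v * g y + f y * fderiv ℝ g y v) := by
      filter_upwards [hΩ.mem_nhds hx] with y hy
      exact fderiv_mul_apply' (dAt hΩ hf hy) (dAt hΩ hg hy) v
    rw [hev.fderiv_eq]
    have d1 : DifferentiableAt ℝ (fun y => fderiv ℝ f y v) x := dAt hΩ (contDiffOn_deriv hΩ hf v) hx
    have d2 : DifferentiableAt ℝ (fun y => fderiv ℝ g y v) x := dAt hΩ (contDiffOn_deriv hΩ hg v) hx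
    have dfx := dAt hΩ hf hx
    have dgx := dAt hΩ hg hx
    rw [fderiv_fun_add (by exact d1.mul dgx) (by exact dfx.mul d2)]
    rw [ContinuousLinearMap.add_apply, fderiv_mul_apply' d1 dgx, fderiv_mul_apply' dfx d2]
    ring
  unfold lap kap
  simp only [key]
  rw [Finset.sum_add_distrib, Finset.sum_add_distrib, ← Finset.sum_mul, ← Finset.mul_sum,
    ← Finset.mul_sum]

lemma lap_one : lap (fun _ : EuclideanSpace ℝ (Fin m) => (1 : ℂ)) x = 0 := by
  simp [lap]

lemma kap_one (h : EuclideanSpace ℝ (Fin m) → ℂ) :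
    kap (fun _ : EuclideanSpace ℝ (Fin m) => (1 : ℂ)) h x = 0 := by
  simp [kap]

end helpers

lemma key_induction {m k : ℕ}
    (Ω : Set (EuclideanSpace ℝ (Fin m))) (hΩ : IsOpen Ω)
    (lam : Fin k → ℂ) (A : Matrix (Fin k) (Fin k) ℂ) (hA : A.IsSymm)
    (φ : Fin k → EuclideanSpace ℝ (Fin m) → ℂ)
    (hφ : ∀ i, ContDiffOn ℝ ∞ (φ i) Ω)
    (hlap : ∀ i, ∀ x ∈ Ω, lap (φ i) x = lam i * φ i x)
    (hkap : ∀ i j, ∀ x ∈ Ω, kap (φ i) (φ j) x = A i j * φ i x * φ j x) :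
    ∀ (n : ℕ) (c : Fin k → ℕ), (∑ i, c i) = n → ∀ x ∈ Ω,
      (∀ j, kap (fun y => ∏ i, φ i y ^ c i) (φ j) x
          = (∑ i, (c i : ℂ) * A i j) * (∏ i, φ i x ^ c i) * φ j x) ∧
      lap (fun y => ∏ i, φ i y ^ c i) x
        = ((∑ i, (c i : ℂ) * (lam i - A i i)) + ∑ i, ∑ j, (c i : ℂ) * (c j : ℂ) * A i j)
            * ∏ i, φ i x ^ c i ∧
      kap (fun y => ∏ i, φ i y ^ c i) (fun y => ∏ i, φ i y ^ c i) x
        = (∑ i, ∑ j, (c i : ℂ) * (c j : ℂ) * A i j) * (∏ i, φ i x ^ c i) ^ 2 := by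
  intro n
  induction n with
  | zero =>
    intro c hc x hx
    have hc0 : ∀ i, c i = 0 := fun i => Finset.sum_eq_zero_iff.1 hc i (Finset.mem_univ i)
    have hone : (fun y => ∏ i, φ i y ^ c i) = fun _ => (1 : ℂ) := by
      funext y; simp [hc0]
    rw [hone]
    have hz : ∀ t : Fin k → ℂ, (∑ i, (c i : ℂ) * t i) = 0 := by
      intro t
      refine Finset.sum_eq_zero fun i _ => by rw [hc0 i]; simp
    have hz2 : (∑ i, ∑ j, (c i : ℂ) * (c j : ℂ) * A i j) = 0 := by
      refine Finset.sum_eq_zero fun i _ => Finset.sum_eq_zero fun j _ => by rw [hc0 i]; simp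
    have hp1 : (∏ i, φ i x ^ c i) = 1 := by
      refine Finset.prod_eq_one fun i _ => by rw [hc0 i, pow_zero]
    refine ⟨fun j => ?_, ?_, ?_⟩
    · rw [kap_one, hp1, hz fun i => A i j]
      ring
    · rw [lap_one, hp1, hz fun i => lam i - A i i, hz2]
      ring
    · rw [kap_one, hp1, hz2]
      ring
  | succ n ih =>
    intro c hc x hx
    -- find an index with positive multiplicity
    obtain ⟨a, -, ha⟩ : ∃ i ∈ Finset.univ, c i ≠ 0 :=
      Finset.exists_ne_zero_of_sum_ne_zero (by omega)
    set c' : Fin k → ℕ := Function.update c a (c a - 1) with hc'def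
    have hc'a : c' a = c a - 1 := Function.update_self a _ c
    have hc'ne : ∀ i, i ≠ a → c' i = c i := fun i hi => Function.update_of_ne hi _ c
    have hca : (c a : ℂ) = (c' a : ℂ) + 1 := by
      have h : c a - 1 + 1 = c a := Nat.succ_pred_eq_of_pos (Nat.pos_of_ne_zero ha)
      rw [hc'a, ← h]
      push_cast
      ring
    have hc'sum : (∑ i, c' i) = n := by
      have h1 : ∑ i, c' i = c' a + ∑ i ∈ Finset.univ.erase a, c' i :=
        (Finset.add_sum_erase _ _ (Finset.mem_univ a)).symm
      have h2 : ∑ i, c i = c a + ∑ i ∈ Finset.univ.erase a, c i :=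
        (Finset.add_sum_erase _ _ (Finset.mem_univ a)).symm
      have h3 : ∑ i ∈ Finset.univ.erase a, c' i = ∑ i ∈ Finset.univ.erase a, c i :=
        Finset.sum_congr rfl fun i hi => hc'ne i (Finset.ne_of_mem_erase hi)
      rw [h1, h3, hc'a]
      omega
    -- product splits off one factor of φ a
    have hprod : ∀ y, (∏ i, φ i y ^ c i) = φ a y * ∏ i, φ i y ^ c' i := by
      intro y
      have h1 : (∏ i, φ i y ^ c i) = φ a y ^ c a * ∏ i ∈ Finset.univ.erase a, φ i y ^ c i :=
        (Finset.mul_prod_erase _ _ (Finset.mem_univ a)).symm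
      have h2 : (∏ i, φ i y ^ c' i) = φ a y ^ c' a * ∏ i ∈ Finset.univ.erase a, φ i y ^ c' i :=
        (Finset.mul_prod_erase _ _ (Finset.mem_univ a)).symm
      have h3 : ∏ i ∈ Finset.univ.erase a, φ i y ^ c' i
          = ∏ i ∈ Finset.univ.erase a, φ i y ^ c i :=
        Finset.prod_congr rfl fun i hi => by rw [hc'ne i (Finset.ne_of_mem_erase hi)]
      have h4 : φ a y * φ a y ^ (c a - 1) = φ a y ^ c a := by
        rw [← pow_succ']
        congr 1
        omega
      rw [h1, h2, h3, hc'a, ← mul_assoc, h4]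
    have hfun : (fun y => ∏ i, φ i y ^ c i) = fun y => φ a y * ∏ i, φ i y ^ c' i :=
      funext hprod
    -- smoothness of partial product
    have hP' : ContDiffOn ℝ ∞ (fun y => ∏ i, φ i y ^ c' i) Ω :=
      contDiffOn_prod fun i _ => (hφ i).pow _
    have hP'x : DifferentiableAt ℝ (fun y => ∏ i, φ i y ^ c' i) x := dAt hΩ hP' hx
    have hφax : DifferentiableAt ℝ (φ a) x := dAt hΩ (hφ a) hx
    obtain ⟨IHK, IHL, IHQ⟩ := ih c' hc'sum x hx
    -- sum manipulation lemmas
    have hsum1 : ∀ t : Fin k → ℂ, (∑ i, (c i : ℂ) * t i) = (∑ i, (c' i : ℂ) * t i) + t a := by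
      intro t
      have he : ∑ i ∈ Finset.univ.erase a, (c' i : ℂ) * t i
          = ∑ i ∈ Finset.univ.erase a, (c i : ℂ) * t i :=
        Finset.sum_congr rfl fun i hi => by rw [hc'ne i (Finset.ne_of_mem_erase hi)]
      rw [← Finset.add_sum_erase _ (fun i => (c i : ℂ) * t i) (Finset.mem_univ a),
        ← Finset.add_sum_erase _ (fun i => (c' i : ℂ) * t i) (Finset.mem_univ a), he, hca]
      ring
    have hsum2 : (∑ i, ∑ j, (c i : ℂ) * (c j : ℂ) * A i j)
        = (∑ i, ∑ j, (c' i : ℂ) * (c' j : ℂ) * A i j)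
          + (∑ i, (c' i : ℂ) * A i a) + (∑ j, (c' j : ℂ) * A a j) + A a a := by
      have step : ∀ i, (∑ j, (c i : ℂ) * (c j : ℂ) * A i j)
          = (∑ j, (c i : ℂ) * (c' j : ℂ) * A i j) + (c i : ℂ) * A i a := by
        intro i
        calc (∑ j, (c i : ℂ) * (c j : ℂ) * A i j)
            = ∑ j, (c j : ℂ) * ((c i : ℂ) * A i j) := by
              refine Finset.sum_congr rfl fun j _ => by ring
          _ = (∑ j, (c' j : ℂ) * ((c i : ℂ) * A i j)) + (c i : ℂ) * A i a := hsum1 _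
          _ = (∑ j, (c i : ℂ) * (c' j : ℂ) * A i j) + (c i : ℂ) * A i a := by
              congr 1
              exact Finset.sum_congr rfl fun j _ => by ring
      calc (∑ i, ∑ j, (c i : ℂ) * (c j : ℂ) * A i j)
          = ∑ i, ((∑ j, (c i : ℂ) * (c' j : ℂ) * A i j) + (c i : ℂ) * A i a) :=
            Finset.sum_congr rfl fun i _ => step i
        _ = (∑ i, ∑ j, (c i : ℂ) * (c' j : ℂ) * A i j) + ∑ i, (c i : ℂ) * A i a := by
            rw [Finset.sum_add_distrib]
        _ = (∑ j, ∑ i, (c i : ℂ) * (c' j : ℂ) * A i j) + ∑ i, (c i : ℂ) * A i a := by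
            rw [Finset.sum_comm]
        _ = (∑ j, ((∑ i, (c' i : ℂ) * ((c' j : ℂ) * A i j)) + (c' j : ℂ) * A a j))
              + ((∑ i, (c' i : ℂ) * A i a) + A a a) := by
            rw [hsum1 (fun i => A i a)]
            congr 1
            refine Finset.sum_congr rfl fun j _ => ?_
            calc (∑ i, (c i : ℂ) * (c' j : ℂ) * A i j)
                = ∑ i, (c i : ℂ) * ((c' j : ℂ) * A i j) := by
                  refine Finset.sum_congr rfl fun i _ => by ring
              _ = (∑ i, (c' i : ℂ) * ((c' j : ℂ) * A i j)) + (c' j : ℂ) * A a j :=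
                  hsum1 _
        _ = (∑ i, ∑ j, (c' i : ℂ) * (c' j : ℂ) * A i j)
              + (∑ i, (c' i : ℂ) * A i a) + (∑ j, (c' j : ℂ) * A a j) + A a a := by
            rw [Finset.sum_add_distrib]
            have h6 : (∑ j, ∑ i, (c' i : ℂ) * ((c' j : ℂ) * A i j))
                = ∑ i, ∑ j, (c' i : ℂ) * (c' j : ℂ) * A i j := by
              rw [Finset.sum_comm]
              exact Finset.sum_congr rfl fun i _ =>
                Finset.sum_congr rfl fun j _ => by ring
            rw [h6]
            ring
    have hAsymm : ∀ i j, A i j = A j i := fun i j => (Matrix.IsSymm.apply hA j i)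
    -- the three claims
    set P' : EuclideanSpace ℝ (Fin m) → ℂ := fun y => ∏ i, φ i y ^ c' i with hP'def
    have kapK : ∀ j, kap (fun y => ∏ i, φ i y ^ c i) (φ j) x
        = (∑ i, (c i : ℂ) * A i j) * (∏ i, φ i x ^ c i) * φ j x := by
      intro j
      rw [hfun, hprod x, kap_mul hφax hP'x, IHK j, hkap a j x hx, hsum1 (fun i => A i j)]
      ring
    refine ⟨kapK, ?_, ?_⟩
    · rw [hfun, hprod x, lap_mul hΩ (hφ a) hP' hx, hlap a x hx, IHL,
        kap_symm, IHK a, hsum1 (fun i => lam i - A i i), hsum2]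
      have h5 : (∑ j, (c' j : ℂ) * A a j) = ∑ i, (c' i : ℂ) * A i a :=
        Finset.sum_congr rfl fun i _ => by rw [hAsymm a i]
      rw [h5]
      ring
    · rw [hfun, hprod x]
      have e1 : kap P' (fun y => φ a y * P' y) x = φ a x * kap P' P' x + P' x * kap (φ a) P' x := by
        rw [kap_symm, kap_mul hφax hP'x]
      have e2 : kap (φ a) (fun y => φ a y * P' y) x
          = φ a x * kap P' (φ a) x + P' x * kap (φ a) (φ a) x := by
        rw [kap_symm, kap_mul hφax hP'x]
      rw [kap_mul hφax hP'x, e1, e2, IHQ, kap_symm (φ a) P', IHK a, hkap a a x hx, hsum2]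
      have h5 : (∑ j, (c' j : ℂ) * A a j) = ∑ i, (c' i : ℂ) * A i a :=
        Finset.sum_congr rfl fun i _ => by rw [hAsymm a i]
      rw [h5]
      ring

theorem monomial_eigenfunction {m k : ℕ}
    (Ω : Set (EuclideanSpace ℝ (Fin m))) (hΩ : IsOpen Ω)
    (lam : Fin k → ℂ) (A : Matrix (Fin k) (Fin k) ℂ) (hA : A.IsSymm)
    (φ : Fin k → EuclideanSpace ℝ (Fin m) → ℂ)
    (hφ : ∀ i, ContDiffOn ℝ (⊤ : ℕ∞) (φ i) Ω)
    (hlap : ∀ i, ∀ x ∈ Ω, lap (φ i) x = lam i * φ i x)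
    (hkap : ∀ i j, ∀ x ∈ Ω, kap (φ i) (φ j) x = A i j * φ i x * φ j x)
    (d : Fin k → ℕ)
    (φprod : EuclideanSpace ℝ (Fin m) → ℂ)
    (hφprod : ∀ x, φprod x = ∏ i, (φ i x) ^ (d i)) :
    ∀ x ∈ Ω,
      lap φprod x =
        ((∑ i, (d i : ℂ) * (lam i - A i i)) + ∑ i, ∑ j, (d i : ℂ) * (d j : ℂ) * A i j) *
          φprod x ∧
      kap φprod φprod x =
        (∑ i, ∑ j, (d i : ℂ) * (d j : ℂ) * A i j) * (φprod x) ^ 2 := by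
  intro x hx
  have hfun : φprod = fun y => ∏ i, φ i y ^ d i := funext hφprod
  obtain ⟨-, hL, hQ⟩ := key_induction Ω hΩ lam A hA φ (fun i => (hφ i).of_le (by simp))
    hlap hkap (∑ i, d i) d rfl x hx
  rw [hfun]
  exact ⟨hL, hQ⟩
end

section
/- Let Ω ⊆ EuclideanSpace ℝ (Fin m) be open, let λ, μ ∈ ℂ, and let φ₁,…,φ_n : Ω → ℂ be smooth functions satisfying Δφ_i = λ·φ_i and κ(φ_i,φ_j) = μ·φ_i·φ_j for all i,j (a (λ,μ)-eigenfamily). Let P, Q be homogeneous polynomials in n complex variables (elements of MvPolynomial (Fin n) ℂ), both homogeneous of the same degree d ≥ 1. Set Ω₀ = {x ∈ Ω : Q(φ₁(x),…,φ_n(x)) ≠ 0} and define f : Ω₀ → ℂ by f(x) = P(φ₁(x),…,φ_n(x)) / Q(φ₁(x),…,φ_n(x)). Then Δf = 0 and κ(f,f) = 0 at every point of Ω₀. -/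
namespace HM

variable {m : ℕ}

local notation "E" => EuclideanSpace ℝ (Fin m)

/-- partial derivative -/
noncomputable def pd (u : E → ℂ) (a : Fin m) : E → ℂ :=
  fun y => fderiv ℝ u y (EuclideanSpace.single a 1)

lemma lap_eq (u : E → ℂ) (x : E) :
    lap u x = ∑ a : Fin m, fderiv ℝ (pd u a) x (EuclideanSpace.single a 1) := rfl

lemma kap_eq (u v : E → ℂ) (x : E) :
    kap u v x = ∑ a : Fin m, pd u a x * pd v a x := rfl

lemma kap_comm (u v : E → ℂ) (x : E) : kap u v x = kap v u x := by
  simp only [kap_eq]; exact Finset.sum_congr rfl fun a _ => mul_comm _ _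

lemma pd_contDiffOn {u : E → ℂ} {s : Set E} (hs : IsOpen s)
    (hu : ContDiffOn ℝ (⊤ : ℕ∞) u s) (a : Fin m) : ContDiffOn ℝ (⊤ : ℕ∞) (pd u a) s :=
  (hu.fderiv_of_isOpen hs (by simp)).clm_apply contDiffOn_const

lemma diffAt {u : E → ℂ} {s : Set E} (hs : IsOpen s) {x : E} (hx : x ∈ s)
    (hu : ContDiffOn ℝ (⊤ : ℕ∞) u s) : DifferentiableAt ℝ u x :=
  ((hu.differentiableOn (by simp)).differentiableAt (hs.mem_nhds hx))

lemma pd_diffAt {u : E → ℂ} {s : Set E} (hs : IsOpen s) {x : E} (hx : x ∈ s)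
    (hu : ContDiffOn ℝ (⊤ : ℕ∞) u s) (a : Fin m) : DifferentiableAt ℝ (pd u a) x :=
  diffAt hs hx (pd_contDiffOn hs hu a)

lemma kap_congr {u u' v v' : E → ℂ} {x : E} (hu : u =ᶠ[nhds x] u')
    (hv : v =ᶠ[nhds x] v') : kap u v x = kap u' v' x := by
  simp only [kap_eq, pd, hu.fderiv_eq (𝕜 := ℝ), hv.fderiv_eq (𝕜 := ℝ)]

lemma lap_congr {u u' : E → ℂ} {x : E} (hu : u =ᶠ[nhds x] u') :
    lap u x = lap u' x := by
  simp only [lap_eq]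
  refine Finset.sum_congr rfl fun a _ => ?_
  have h : pd u a =ᶠ[nhds x] pd u' a :=
    (hu.fderiv (𝕜 := ℝ)).mono fun y hy => by simp [pd, hy]
  rw [h.fderiv_eq]

lemma pd_mul {u v : E → ℂ} {x : E} (hu : DifferentiableAt ℝ u x)
    (hv : DifferentiableAt ℝ v x) (a : Fin m) :
    pd (fun y => u y * v y) a x = u x * pd v a x + v x * pd u a x := by
  simp [pd, fderiv_fun_mul hu hv, smul_eq_mul]

lemma kap_mul_left {u v w : E → ℂ} {x : E} (hu : DifferentiableAt ℝ u x)
    (hv : DifferentiableAt ℝ v x) :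
    kap (fun y => u y * v y) w x = u x * kap v w x + v x * kap u w x := by
  simp only [kap_eq, Finset.mul_sum, ← Finset.sum_add_distrib]
  refine Finset.sum_congr rfl fun a _ => ?_
  rw [pd_mul hu hv]; ring

lemma kap_add_left {u v w : E → ℂ} {x : E} (hu : DifferentiableAt ℝ u x)
    (hv : DifferentiableAt ℝ v x) :
    kap (fun y => u y + v y) w x = kap u w x + kap v w x := by
  simp only [kap_eq, ← Finset.sum_add_distrib]
  refine Finset.sum_congr rfl fun a _ => ?_
  have : pd (fun y => u y + v y) a x = pd u a x + pd v a x := by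
    simp [pd, fderiv_fun_add hu hv]
  rw [this]; ring

lemma pd_const_mul (c : ℂ) {u : E → ℂ} {x : E} (hu : DifferentiableAt ℝ u x) (a : Fin m) :
    pd (fun y => c * u y) a x = c * pd u a x := by
  simp [pd, fderiv_const_mul hu c, smul_eq_mul]

lemma kap_const_mul_left (c : ℂ) {u w : E → ℂ} {x : E} (hu : DifferentiableAt ℝ u x) :
    kap (fun y => c * u y) w x = c * kap u w x := by
  simp only [kap_eq, Finset.mul_sum]
  refine Finset.sum_congr rfl fun a _ => ?_
  rw [pd_const_mul c hu]; ring


lemma lap_const (c : ℂ) (x : E) : lap (fun _ : E => c) x = 0 := by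
  simp [lap, fderiv_const]

lemma kap_const_left (c : ℂ) (w : E → ℂ) (x : E) : kap (fun _ : E => c) w x = 0 := by
  simp [kap, fderiv_const]

lemma lap_mul {s : Set E} (hs : IsOpen s) {x : E} (hx : x ∈ s)
    {u v : E → ℂ} (hu : ContDiffOn ℝ (⊤ : ℕ∞) u s) (hv : ContDiffOn ℝ (⊤ : ℕ∞) v s) :
    lap (fun y => u y * v y) x = lap u x * v x + 2 * kap u v x + u x * lap v x := by
  have hpd : ∀ a, pd (fun y => u y * v y) a
      =ᶠ[nhds x] fun y => u y * pd v a y + v y * pd u a y := fun a =>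
    Filter.eventuallyEq_of_mem (hs.mem_nhds hx)
      (fun y hy => pd_mul (diffAt hs hy hu) (diffAt hs hy hv) a)
  have key : ∀ a : Fin m, fderiv ℝ (pd (fun y => u y * v y) a) x (EuclideanSpace.single a 1)
      = u x * fderiv ℝ (pd v a) x (EuclideanSpace.single a 1) + pd u a x * pd v a x
        + (v x * fderiv ℝ (pd u a) x (EuclideanSpace.single a 1) + pd u a x * pd v a x) := by
    intro a
    rw [(hpd a).fderiv_eq]
    have h1 : DifferentiableAt ℝ u x := diffAt hs hx hu
    have h2 : DifferentiableAt ℝ v x := diffAt hs hx hv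
    have h3 := pd_diffAt hs hx hu a
    have h4 := pd_diffAt hs hx hv a
    rw [fderiv_fun_add (h1.fun_mul h4) (h2.fun_mul h3), fderiv_fun_mul h1 h4, fderiv_fun_mul h2 h3]
    simp [pd, smul_eq_mul]; ring
  simp only [lap_eq, kap_eq, key]
  simp only [Finset.sum_add_distrib, ← Finset.mul_sum, ← Finset.sum_mul]
  ring

lemma lap_add {s : Set E} (hs : IsOpen s) {x : E} (hx : x ∈ s)
    {u v : E → ℂ} (hu : ContDiffOn ℝ (⊤ : ℕ∞) u s) (hv : ContDiffOn ℝ (⊤ : ℕ∞) v s) :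
    lap (fun y => u y + v y) x = lap u x + lap v x := by
  have hpd : ∀ a, pd (fun y => u y + v y) a
      =ᶠ[nhds x] fun y => pd u a y + pd v a y := fun a =>
    Filter.eventuallyEq_of_mem (hs.mem_nhds hx)
      (fun y hy => by simp [pd, fderiv_fun_add (diffAt hs hy hu) (diffAt hs hy hv)])
  have key : ∀ a : Fin m, fderiv ℝ (pd (fun y => u y + v y) a) x (EuclideanSpace.single a 1)
      = fderiv ℝ (pd u a) x (EuclideanSpace.single a 1)
        + fderiv ℝ (pd v a) x (EuclideanSpace.single a 1) := by
    intro a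
    rw [(hpd a).fderiv_eq, fderiv_fun_add (pd_diffAt hs hx hu a) (pd_diffAt hs hx hv a)]
    simp
  simp only [lap_eq, key, Finset.sum_add_distrib]

lemma lap_const_mul {s : Set E} (hs : IsOpen s) {x : E} (hx : x ∈ s)
    (c : ℂ) {u : E → ℂ} (hu : ContDiffOn ℝ (⊤ : ℕ∞) u s) :
    lap (fun y => c * u y) x = c * lap u x := by
  have hpd : ∀ a, pd (fun y => c * u y) a =ᶠ[nhds x] fun y => c * pd u a y := fun a =>
    Filter.eventuallyEq_of_mem (hs.mem_nhds hx)
      (fun y hy => pd_const_mul c (diffAt hs hy hu) a)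
  have key : ∀ a : Fin m, fderiv ℝ (pd (fun y => c * u y) a) x (EuclideanSpace.single a 1)
      = c * fderiv ℝ (pd u a) x (EuclideanSpace.single a 1) := by
    intro a
    rw [(hpd a).fderiv_eq, fderiv_const_mul (pd_diffAt hs hx hu a) c]
    simp [smul_eq_mul]
  simp only [lap_eq, key, ← Finset.mul_sum]

lemma lap_sum {s : Set E} (hs : IsOpen s) {x : E} (hx : x ∈ s)
    {ι : Type*} (t : Finset ι) (F : ι → E → ℂ)
    (hF : ∀ i ∈ t, ContDiffOn ℝ (⊤ : ℕ∞) (F i) s) :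
    lap (fun y => ∑ i ∈ t, F i y) x = ∑ i ∈ t, lap (F i) x := by
  classical
  induction t using Finset.induction_on with
  | empty => simpa using lap_const 0 x
  | @insert a t ha ih =>
      have h1 : ContDiffOn ℝ (⊤ : ℕ∞) (F a) s := hF a (Finset.mem_insert_self a t)
      have h2 : ContDiffOn ℝ (⊤ : ℕ∞) (fun y => ∑ i ∈ t, F i y) s :=
        ContDiffOn.sum fun i hi => hF i (Finset.mem_insert_of_mem hi)
      simp only [Finset.sum_insert ha]
      rw [lap_add hs hx h1 h2, ih fun i hi => hF i (Finset.mem_insert_of_mem hi)]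

lemma kap_sum_left {x : E} {ι : Type*} (t : Finset ι) (F : ι → E → ℂ) (w : E → ℂ)
    (hF : ∀ i ∈ t, DifferentiableAt ℝ (F i) x) :
    kap (fun y => ∑ i ∈ t, F i y) w x = ∑ i ∈ t, kap (F i) w x := by
  classical
  induction t using Finset.induction_on with
  | empty => simpa using kap_const_left 0 w x
  | @insert a t ha ih =>
      have h1 : DifferentiableAt ℝ (F a) x := hF a (Finset.mem_insert_self a t)
      have h2 : DifferentiableAt ℝ (fun y => ∑ i ∈ t, F i y) x :=
        DifferentiableAt.fun_sum fun i hi => hF i (Finset.mem_insert_of_mem hi)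
      simp only [Finset.sum_insert ha]
      rw [kap_add_left h1 h2, ih fun i hi => hF i (Finset.mem_insert_of_mem hi)]


section Family

variable {n : ℕ} {Ω : Set (EuclideanSpace ℝ (Fin m))} (lam mu : ℂ) (φ : Fin n → EuclideanSpace ℝ (Fin m) → ℂ)

/-- monomial attached to a multiset of indices -/
noncomputable def mon {m n : ℕ} (φ : Fin n → EuclideanSpace ℝ (Fin m) → ℂ)
    (S : Multiset (Fin n)) : EuclideanSpace ℝ (Fin m) → ℂ :=
  fun x => (S.map fun i => φ i x).prod

lemma mon_zero : mon φ 0 = fun _ => 1 := rfl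

lemma mon_cons (i : Fin n) (S : Multiset (Fin n)) :
    mon φ (i ::ₘ S) = fun x => φ i x * mon φ S x := by
  funext x; simp [mon]

variable (hΩ : IsOpen Ω) (hφ : ∀ i, ContDiffOn ℝ (⊤ : ℕ∞) (φ i) Ω)

include hφ in
lemma mon_contDiffOn (S : Multiset (Fin n)) : ContDiffOn ℝ (⊤ : ℕ∞) (mon φ S) Ω := by
  induction S using Multiset.induction_on with
  | empty => rw [mon_zero]; exact contDiffOn_const
  | cons i S ih => rw [mon_cons]; exact (hφ i).mul ih

variable (hkap : ∀ i j, ∀ x ∈ Ω, kap (φ i) (φ j) x = mu * φ i x * φ j x)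

include hΩ hφ hkap in
lemma kap_phi_mon (S : Multiset (Fin n)) (j : Fin n) :
    ∀ x ∈ Ω, kap (φ j) (mon φ S) x = mu * S.card * φ j x * mon φ S x := by
  induction S using Multiset.induction_on with
  | empty =>
      intro x hx
      rw [mon_zero, kap_comm, kap_const_left]
      simp
  | cons i S ih =>
      intro x hx
      rw [mon_cons, kap_comm,
        kap_mul_left (diffAt hΩ hx (hφ i)) (diffAt hΩ hx (mon_contDiffOn φ hφ S)),
        kap_comm (mon φ S), ih x hx, hkap i j x hx]
      push_cast [Multiset.card_cons]
      ring

include hΩ hφ hkap in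
lemma kap_mon_mon (S T : Multiset (Fin n)) :
    ∀ x ∈ Ω, kap (mon φ S) (mon φ T) x
      = mu * S.card * T.card * mon φ S x * mon φ T x := by
  induction S using Multiset.induction_on with
  | empty =>
      intro x hx
      rw [mon_zero, kap_const_left]
      simp
  | cons i S ih =>
      intro x hx
      rw [mon_cons,
        kap_mul_left (diffAt hΩ hx (hφ i)) (diffAt hΩ hx (mon_contDiffOn φ hφ S)),
        ih x hx, kap_phi_mon mu φ hΩ hφ hkap T i x hx]
      push_cast [Multiset.card_cons]
      ring

variable (hlap : ∀ i, ∀ x ∈ Ω, lap (φ i) x = lam * φ i x)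

include hΩ hφ hkap hlap in
lemma lap_mon (S : Multiset (Fin n)) :
    ∀ x ∈ Ω, lap (mon φ S) x
      = (lam * S.card + mu * S.card * (S.card - 1)) * mon φ S x := by
  induction S using Multiset.induction_on with
  | empty =>
      intro x hx
      rw [mon_zero, lap_const]
      simp
  | cons i S ih =>
      intro x hx
      rw [mon_cons, lap_mul hΩ hx (hφ i) (mon_contDiffOn φ hφ S),
        ih x hx, kap_phi_mon mu φ hΩ hφ hkap S i x hx, hlap i x hx]
      push_cast [Multiset.card_cons]
      ring

lemma mon_toMultiset (k : Fin n →₀ ℕ) (x : EuclideanSpace ℝ (Fin m)) :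
    mon φ (Finsupp.toMultiset k) x = ∏ i ∈ k.support, φ i x ^ k i := by
  calc mon φ (Finsupp.toMultiset k) x
      = (Finsupp.toMultiset (k.mapDomain fun i => φ i x)).prod := by
        rw [mon, Finsupp.toMultiset_map]
    _ = (k.mapDomain fun i => φ i x).prod (fun a b => a ^ b) :=
        Finsupp.prod_toMultiset _
    _ = k.prod (fun i b => φ i x ^ b) :=
        Finsupp.prod_mapDomain_index (by simp) (fun b m₁ m₂ => pow_add _ _ _)
    _ = ∏ i ∈ k.support, φ i x ^ k i := rfl

lemma eval_repr (R : MvPolynomial (Fin n) ℂ) (x : EuclideanSpace ℝ (Fin m)) :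
    MvPolynomial.eval (fun i => φ i x) R
      = ∑ k ∈ R.support, MvPolynomial.coeff k R * mon φ (Finsupp.toMultiset k) x := by
  rw [MvPolynomial.eval_eq]
  exact Finset.sum_congr rfl fun k _ => by rw [mon_toMultiset]

lemma card_toMultiset_of_mem_support {R : MvPolynomial (Fin n) ℂ} {d : ℕ}
    (hR : R.IsHomogeneous d) {k : Fin n →₀ ℕ} (hk : k ∈ R.support) :
    (Multiset.card (Finsupp.toMultiset k) : ℂ) = (d : ℂ) := by
  have h2 := hR (MvPolynomial.mem_support_iff.mp hk)
  rw [Finsupp.card_toMultiset]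
  norm_cast
  rw [← h2, show (Finsupp.weight 1 : (Fin n →₀ ℕ) →+ ℕ) = Finsupp.weight (fun _ => 1) from rfl,
    ← Finsupp.degree_eq_weight_one]
  rfl

include hφ in
lemma poly_contDiffOn (R : MvPolynomial (Fin n) ℂ) :
    ContDiffOn ℝ (⊤ : ℕ∞) (fun x => MvPolynomial.eval (fun i => φ i x) R) Ω := by
  have h : (fun x => MvPolynomial.eval (fun i => φ i x) R)
      = fun x => ∑ k ∈ R.support, MvPolynomial.coeff k R * mon φ (Finsupp.toMultiset k) x :=
    funext fun x => eval_repr φ R x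
  rw [h]
  exact ContDiffOn.sum fun k _ => contDiffOn_const.mul (mon_contDiffOn φ hφ _)

include hΩ hφ hkap hlap in
lemma lap_poly {R : MvPolynomial (Fin n) ℂ} {d : ℕ} (hR : R.IsHomogeneous d) :
    ∀ x ∈ Ω, lap (fun y => MvPolynomial.eval (fun i => φ i y) R) x
      = (lam * d + mu * d * ((d : ℂ) - 1)) * MvPolynomial.eval (fun i => φ i x) R := by
  intro x hx
  rw [show (fun y => MvPolynomial.eval (fun i => φ i y) R)
      = fun y => ∑ k ∈ R.support, MvPolynomial.coeff k R * mon φ (Finsupp.toMultiset k) y from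
    funext (eval_repr φ R)]
  rw [lap_sum hΩ hx _ _ (fun k _ => contDiffOn_const.mul (mon_contDiffOn φ hφ _)),
    eval_repr φ R, Finset.mul_sum]
  refine Finset.sum_congr rfl fun k hk => ?_
  rw [lap_const_mul hΩ hx _ (mon_contDiffOn φ hφ _),
    lap_mon lam mu φ hΩ hφ hkap hlap _ x hx, card_toMultiset_of_mem_support hR hk]
  ring

include hΩ hφ hkap in
lemma kap_poly {R R' : MvPolynomial (Fin n) ℂ} {d d' : ℕ}
    (hR : R.IsHomogeneous d) (hR' : R'.IsHomogeneous d') :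
    ∀ x ∈ Ω, kap (fun y => MvPolynomial.eval (fun i => φ i y) R)
        (fun y => MvPolynomial.eval (fun i => φ i y) R') x
      = mu * d * d' * MvPolynomial.eval (fun i => φ i x) R
          * MvPolynomial.eval (fun i => φ i x) R' := by
  intro x hx
  have dA : ∀ (R0 : MvPolynomial (Fin n) ℂ) (k : Fin n →₀ ℕ),
      DifferentiableAt ℝ
        (fun y => MvPolynomial.coeff k R0 * mon φ (Finsupp.toMultiset k) y) x :=
    fun R0 k => diffAt hΩ hx (contDiffOn_const.mul (mon_contDiffOn φ hφ _))
  rw [show (fun y => MvPolynomial.eval (fun i => φ i y) R)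
      = fun y => ∑ k ∈ R.support, MvPolynomial.coeff k R * mon φ (Finsupp.toMultiset k) y from
    funext (eval_repr φ R)]
  rw [show (fun y => MvPolynomial.eval (fun i => φ i y) R')
      = fun y => ∑ k ∈ R'.support, MvPolynomial.coeff k R' * mon φ (Finsupp.toMultiset k) y from
    funext (eval_repr φ R')]
  rw [kap_sum_left _ _ _ (fun k _ => dA R k)]
  have inner : ∀ k ∈ R.support,
      kap (fun y => MvPolynomial.coeff k R * mon φ (Finsupp.toMultiset k) y)
        (fun y => ∑ k' ∈ R'.support,
          MvPolynomial.coeff k' R' * mon φ (Finsupp.toMultiset k') y) x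
      = ∑ k' ∈ R'.support, MvPolynomial.coeff k R * MvPolynomial.coeff k' R'
          * (mu * d * d' * mon φ (Finsupp.toMultiset k) x * mon φ (Finsupp.toMultiset k') x) := by
    intro k hk
    rw [kap_const_mul_left _ (diffAt hΩ hx (mon_contDiffOn φ hφ _)),
      kap_comm, kap_sum_left _ _ _ (fun k' _ => dA R' k'), Finset.mul_sum]
    refine Finset.sum_congr rfl fun k' hk' => ?_
    rw [kap_const_mul_left _ (diffAt hΩ hx (mon_contDiffOn φ hφ _)),
      kap_comm, kap_mon_mon mu φ hΩ hφ hkap _ _ x hx,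
      card_toMultiset_of_mem_support hR hk, card_toMultiset_of_mem_support hR' hk']
    ring
  rw [Finset.sum_congr rfl inner, eval_repr φ R, eval_repr φ R']
  simp only [Finset.mul_sum, Finset.sum_mul]
  rw [Finset.sum_comm]
  exact Finset.sum_congr rfl fun k _ => Finset.sum_congr rfl fun k' _ => by ring

end Family

end HM

open HM

theorem harmonic_morphism_from_eigenfamily {m n : ℕ}
    (Ω : Set (EuclideanSpace ℝ (Fin m))) (hΩ : IsOpen Ω)
    (lam mu : ℂ)
    (φ : Fin n → EuclideanSpace ℝ (Fin m) → ℂ)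
    (hφ : ∀ i, ContDiffOn ℝ (⊤ : ℕ∞) (φ i) Ω)
    (hlap : ∀ i, ∀ x ∈ Ω, lap (φ i) x = lam * φ i x)
    (hkap : ∀ i j, ∀ x ∈ Ω, kap (φ i) (φ j) x = mu * φ i x * φ j x)
    (P Q : MvPolynomial (Fin n) ℂ) (d : ℕ) (hd : 1 ≤ d)
    (hP : P.IsHomogeneous d) (hQ : Q.IsHomogeneous d)
    (Ω₀ : Set (EuclideanSpace ℝ (Fin m)))
    (hΩ₀ : Ω₀ = {x ∈ Ω | MvPolynomial.eval (fun i => φ i x) Q ≠ 0})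
    (f : EuclideanSpace ℝ (Fin m) → ℂ)
    (hf : ∀ x, f x = MvPolynomial.eval (fun i => φ i x) P /
      MvPolynomial.eval (fun i => φ i x) Q) :
    ∀ x ∈ Ω₀, lap f x = 0 ∧ kap f f x = 0 := by
  classical
  set U : EuclideanSpace ℝ (Fin m) → ℂ := fun y => MvPolynomial.eval (fun i => φ i y) P with hUdef
  set V : EuclideanSpace ℝ (Fin m) → ℂ := fun y => MvPolynomial.eval (fun i => φ i y) Q with hVdef
  have hUs : ContDiffOn ℝ (⊤ : ℕ∞) U Ω := poly_contDiffOn φ hφ P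
  have hVs : ContDiffOn ℝ (⊤ : ℕ∞) V Ω := poly_contDiffOn φ hφ Q
  have hsub : Ω₀ ⊆ Ω := by rw [hΩ₀]; exact fun y hy => hy.1
  have hVne : ∀ y ∈ Ω₀, V y ≠ 0 := by rw [hΩ₀]; exact fun y hy => hy.2
  have hΩ₀open : IsOpen Ω₀ := by
    have h1 : Ω₀ = Ω ∩ V ⁻¹' ({0}ᶜ) := by
      rw [hΩ₀]; ext y
      simp only [Set.mem_setOf_eq, Set.mem_inter_iff, Set.mem_preimage, Set.mem_compl_iff,
        Set.mem_singleton_iff, hVdef]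
    rw [h1]
    exact (hVs.continuousOn).isOpen_inter_preimage hΩ isOpen_compl_singleton
  intro x hx₀
  have hxΩ : x ∈ Ω := hsub hx₀
  have hVx : V x ≠ 0 := hVne x hx₀
  have hfs : ContDiffOn ℝ (⊤ : ℕ∞) f Ω₀ := by
    have hfe : f = fun y => U y * (V y)⁻¹ := funext fun y => by
      rw [hf y, div_eq_mul_inv]
    rw [hfe]
    exact (hUs.mono hsub).mul ((hVs.mono hsub).inv hVne)
  have hfV : ∀ y ∈ Ω₀, f y * V y = U y := fun y hy => by
    rw [hf y]; exact div_mul_cancel₀ _ (hVne y hy)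
  have hev : (fun y => f y * V y) =ᶠ[nhds x] U :=
    Filter.eventuallyEq_of_mem (hΩ₀open.mem_nhds hx₀) hfV
  have hUx : U x = f x * V x := (hfV x hx₀).symm
  set c : ℂ := lam * d + mu * d * ((d : ℂ) - 1) with hc
  set K : ℂ := mu * d * d with hK
  have hlapU : lap U x = c * U x := lap_poly lam mu φ hΩ hφ hkap hlap hP x hxΩ
  have hlapV : lap V x = c * V x := lap_poly lam mu φ hΩ hφ hkap hlap hQ x hxΩ
  have hkapUV : kap U V x = K * U x * V x := kap_poly mu φ hΩ hφ hkap hP hQ x hxΩ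
  have hkapVV : kap V V x = K * V x * V x := kap_poly mu φ hΩ hφ hkap hQ hQ x hxΩ
  have hkapUU : kap U U x = K * U x * U x := kap_poly mu φ hΩ hφ hkap hP hP x hxΩ
  have hfd : DifferentiableAt ℝ f x := diffAt hΩ₀open hx₀ hfs
  have hVd : DifferentiableAt ℝ V x := diffAt hΩ hxΩ hVs
  -- Step 1 : kap f V x = 0
  have h1 : f x * kap V V x + V x * kap f V x = K * U x * V x := by
    rw [← kap_mul_left hfd hVd, kap_congr hev Filter.EventuallyEq.rfl, hkapUV]
  have hkfV : kap f V x = 0 := by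
    have h2 : V x * kap f V x = 0 := by
      rw [hkapVV, hUx] at h1
      linear_combination h1
    exact (mul_eq_zero.mp h2).resolve_left hVx
  -- Step 2 : lap f x = 0
  have h3 : lap f x * V x + 2 * kap f V x + f x * lap V x = c * U x := by
    rw [← lap_mul hΩ₀open hx₀ hfs (hVs.mono hsub), lap_congr hev, hlapU]
  have hlapf : lap f x = 0 := by
    have h4 : lap f x * V x = 0 := by
      rw [hkfV, hlapV, hUx] at h3
      linear_combination h3
    exact (mul_eq_zero.mp h4).resolve_right hVx
  -- Step 3 : kap f f x = 0
  have h5 : f x * kap V (fun y => f y * V y) x + V x * kap f (fun y => f y * V y) x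
      = K * U x * U x := by
    rw [← kap_mul_left hfd hVd, kap_congr hev hev, hkapUU]
  have h6 : kap V (fun y => f y * V y) x = f x * kap V V x + V x * kap f V x := by
    rw [kap_comm, kap_mul_left hfd hVd]
  have h7 : kap f (fun y => f y * V y) x = f x * kap V f x + V x * kap f f x := by
    rw [kap_comm, kap_mul_left hfd hVd]
  have hkff : kap f f x = 0 := by
    rw [h6, h7, hkapVV, hkfV, kap_comm V f, hkfV, hUx] at h5
    have h8 : V x * (V x * kap f f x) = 0 := by linear_combination h5
    exact (mul_eq_zero.mp ((mul_eq_zero.mp h8).resolve_left hVx)).resolve_left hVx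
  exact ⟨hlapf, hkff⟩
end

section
/- Let U ⊆ EuclideanSpace ℝ (Fin m) be open, let λ, μ ∈ ℝ, and let φ : U → ℂ be smooth, nowhere vanishing, and satisfy Δφ = λ·φ and κ(φ,φ) = μ·φ² on U. Let θ : U → ℝ be a smooth function with φ(x) = |φ(x)|·e^{iθ(x)} for all x ∈ U. Then on U: (1) Δθ = 0; (2) Δ(ln|φ|) = λ − μ; (3) κ(θ, |φ|) = 0; (4) κ(ln|φ|, ln|φ|) = κ(θ,θ) + μ. -/
private noncomputable def sgl {m : ℕ} (a : Fin m) : EuclideanSpace ℝ (Fin m) :=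
  EuclideanSpace.single a 1

private lemma lap_eq {m : ℕ} {F : Type*} [NormedAddCommGroup F] [NormedSpace ℝ F]
    (f : EuclideanSpace ℝ (Fin m) → F) (x : EuclideanSpace ℝ (Fin m)) :
    lap f x = ∑ a : Fin m, fderiv ℝ (fun y => fderiv ℝ f y (sgl a)) x (sgl a) := rfl

private lemma kap_eq {m : ℕ} {F : Type*} [NormedRing F] [NormedAlgebra ℝ F]
    (φ ψ : EuclideanSpace ℝ (Fin m) → F) (x : EuclideanSpace ℝ (Fin m)) :
    kap φ ψ x = ∑ a : Fin m, fderiv ℝ φ x (sgl a) * fderiv ℝ ψ x (sgl a) := rfl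

/-- derivative of `↑p + I * ↑q` -/
private lemma comb_fderiv {m : ℕ} (p q : EuclideanSpace ℝ (Fin m) → ℝ)
    (y : EuclideanSpace ℝ (Fin m)) (hp : DifferentiableAt ℝ p y) (hq : DifferentiableAt ℝ q y)
    (w : EuclideanSpace ℝ (Fin m)) :
    fderiv ℝ (fun z => ((p z : ℂ) + Complex.I * (q z : ℂ))) y w
      = (fderiv ℝ p y w : ℂ) + Complex.I * (fderiv ℝ q y w : ℂ) := by
  have h1 : HasFDerivAt (fun z => ((p z : ℝ) : ℂ))
      (Complex.ofRealCLM.comp (fderiv ℝ p y)) y :=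
    Complex.ofRealCLM.hasFDerivAt.comp y hp.hasFDerivAt
  have h2 : HasFDerivAt (fun z => Complex.I * ((q z : ℝ) : ℂ))
      (Complex.I • (Complex.ofRealCLM.comp (fderiv ℝ q y))) y :=
    (Complex.ofRealCLM.hasFDerivAt.comp y hq.hasFDerivAt).const_mul Complex.I
  rw [(h1.fun_add h2).fderiv]
  simp [smul_eq_mul]

private lemma split_complex (s t u : ℝ) (h : (s : ℂ) + Complex.I * (t : ℂ) = (u : ℂ)) :
    s = u ∧ t = 0 := by
  rw [Complex.ext_iff] at h
  simp [Complex.add_re, Complex.add_im, Complex.mul_re, Complex.mul_im] at h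
  exact h

theorem eigenfunction_polar_form {m : ℕ}
    (U : Set (EuclideanSpace ℝ (Fin m))) (hU : IsOpen U)
    (lam mu : ℝ)
    (φ : EuclideanSpace ℝ (Fin m) → ℂ) (hφ : ContDiffOn ℝ (⊤ : ℕ∞) φ U)
    (hφ0 : ∀ x ∈ U, φ x ≠ 0)
    (hlap : ∀ x ∈ U, lap φ x = (lam : ℂ) * φ x)
    (hkap : ∀ x ∈ U, kap φ φ x = (mu : ℂ) * (φ x) ^ 2)
    (θ : EuclideanSpace ℝ (Fin m) → ℝ) (hθ : ContDiffOn ℝ (⊤ : ℕ∞) θ U)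
    (hpolar : ∀ x ∈ U, φ x = (‖φ x‖ : ℂ) * Complex.exp (Complex.I * (θ x : ℂ))) :
    ∀ x ∈ U,
      lap θ x = 0 ∧
      lap (fun y => Real.log (‖φ y‖)) x = lam - mu ∧
      kap θ (fun y => ‖φ y‖) x = 0 ∧
      kap (fun y => Real.log (‖φ y‖))
          (fun y => Real.log (‖φ y‖)) x = kap θ θ x + mu := by
  intro x hx
  set r : EuclideanSpace ℝ (Fin m) → ℝ := fun y => ‖φ y‖ with hrdef
  set L : EuclideanSpace ℝ (Fin m) → ℝ := fun y => Real.log (‖φ y‖) with hLdef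
  set g : EuclideanSpace ℝ (Fin m) → ℂ := fun y => ((L y : ℂ) + Complex.I * (θ y : ℂ))
    with hgdef
  have hrpos : ∀ y ∈ U, 0 < r y := fun y hy => by
    simpa [hrdef] using (norm_pos_iff.mpr (hφ0 y hy))
  -- φ = exp g on U
  have hφexp : ∀ y ∈ U, φ y = Complex.exp (g y) := by
    intro y hy
    rw [hpolar y hy]
    simp only [hgdef, Complex.exp_add, ← Complex.ofReal_exp, hLdef,
      Real.exp_log (show 0 < ‖φ y‖ from hrpos y hy)]
  -- smoothness of L
  have hLsm : ContDiffOn ℝ (⊤ : ℕ∞) L U := by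
    intro y hy
    have h1 : ContDiffAt ℝ (⊤ : ℕ∞) (fun z => ‖φ z‖) y :=
      (hφ.contDiffAt (hU.mem_nhds hy)).norm ℝ (hφ0 y hy)
    have h2 : ContDiffAt ℝ (⊤ : ℕ∞) (fun z => Real.log ‖φ z‖) y :=
      h1.log (norm_ne_zero_iff.mpr (hφ0 y hy))
    have h3 : ContDiffAt ℝ (⊤ : ℕ∞) L y := by
      simpa [hLdef] using h2
    exact h3.contDiffWithinAt
  have hgsm : ContDiffOn ℝ (⊤ : ℕ∞) g U := by
    rw [hgdef]
    exact (Complex.ofRealCLM.contDiff.comp_contDiffOn hLsm).add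
      (contDiffOn_const.mul (Complex.ofRealCLM.contDiff.comp_contDiffOn hθ))
  -- pointwise differentiability
  have dL : ∀ y ∈ U, DifferentiableAt ℝ L y := fun y hy =>
    (hLsm.contDiffAt (hU.mem_nhds hy)).differentiableAt (by simp)
  have dθ : ∀ y ∈ U, DifferentiableAt ℝ θ y := fun y hy =>
    (hθ.contDiffAt (hU.mem_nhds hy)).differentiableAt (by simp)
  have dg : ∀ y ∈ U, DifferentiableAt ℝ g y := fun y hy =>
    (hgsm.contDiffAt (hU.mem_nhds hy)).differentiableAt (by simp)
  have dφ : ∀ y ∈ U, DifferentiableAt ℝ φ y := fun y hy =>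
    (hφ.contDiffAt (hU.mem_nhds hy)).differentiableAt (by simp)
  -- first derivative of g
  have hDg : ∀ y ∈ U, ∀ w, fderiv ℝ g y w
      = (fderiv ℝ L y w : ℂ) + Complex.I * (fderiv ℝ θ y w : ℂ) := by
    intro y hy w
    rw [hgdef]
    exact comb_fderiv L θ y (dL y hy) (dθ y hy) w
  -- first derivative of φ
  have hDφ : ∀ y ∈ U, ∀ w, fderiv ℝ φ y w = φ y * fderiv ℝ g y w := by
    intro y hy w
    have h1 : HasFDerivAt (fun z => Complex.exp (g z))
        (Complex.exp (g y) • fderiv ℝ g y) y :=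
      HasDerivAt.comp_hasFDerivAt y (Complex.hasDerivAt_exp (g y)) (dg y hy).hasFDerivAt
    have h2 : HasFDerivAt φ (Complex.exp (g y) • fderiv ℝ g y) y :=
      h1.congr_of_eventuallyEq
        (Filter.eventuallyEq_of_mem (hU.mem_nhds hy) (fun z hz => hφexp z hz))
    rw [h2.fderiv, ContinuousLinearMap.smul_apply, smul_eq_mul, ← hφexp y hy]
  -- first derivative of r
  have hDr : ∀ y ∈ U, ∀ w, fderiv ℝ r y w = r y * fderiv ℝ L y w := by
    intro y hy w
    have h1 : HasFDerivAt (fun z => Real.exp (L z))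
        (Real.exp (L y) • fderiv ℝ L y) y :=
      HasDerivAt.comp_hasFDerivAt y (Real.hasDerivAt_exp (L y)) (dL y hy).hasFDerivAt
    have heq : r =ᶠ[nhds y] fun z => Real.exp (L z) :=
      Filter.eventuallyEq_of_mem (hU.mem_nhds hy)
        (fun z hz => by simp [hrdef, hLdef, Real.exp_log (show 0 < ‖φ z‖ from hrpos z hz)])
    have h2 : HasFDerivAt r (Real.exp (L y) • fderiv ℝ L y) y :=
      h1.congr_of_eventuallyEq heq
    rw [h2.fderiv, ContinuousLinearMap.smul_apply, smul_eq_mul,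
      show Real.exp (L y) = r y from by simp [hLdef, hrdef, Real.exp_log (show 0 < ‖φ y‖ from hrpos y hy)]]
  -- smoothness of derivatives
  have hL1 : ContDiffOn ℝ (⊤ : ℕ∞) (fderiv ℝ L) U := hLsm.fderiv_of_isOpen hU (by simp)
  have hθ1 : ContDiffOn ℝ (⊤ : ℕ∞) (fderiv ℝ θ) U := hθ.fderiv_of_isOpen hU (by simp)
  have hg1 : ContDiffOn ℝ (⊤ : ℕ∞) (fderiv ℝ g) U := hgsm.fderiv_of_isOpen hU (by simp)
  have dGL : ∀ a : Fin m, DifferentiableAt ℝ (fun z => fderiv ℝ L z (sgl a)) x :=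
    fun a => (((hL1.clm_apply contDiffOn_const).contDiffAt
      (hU.mem_nhds hx)).differentiableAt (by simp))
  have dGθ : ∀ a : Fin m, DifferentiableAt ℝ (fun z => fderiv ℝ θ z (sgl a)) x :=
    fun a => (((hθ1.clm_apply contDiffOn_const).contDiffAt
      (hU.mem_nhds hx)).differentiableAt (by simp))
  have dGg : ∀ a : Fin m, DifferentiableAt ℝ (fun z => fderiv ℝ g z (sgl a)) x :=
    fun a => (((hg1.clm_apply contDiffOn_const).contDiffAt
      (hU.mem_nhds hx)).differentiableAt (by simp))
  -- abbreviations at x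
  set A : Fin m → ℝ := fun a => fderiv ℝ L x (sgl a) with hA
  set B : Fin m → ℝ := fun a => fderiv ℝ θ x (sgl a) with hB
  set A2 : Fin m → ℝ := fun a => fderiv ℝ (fun z => fderiv ℝ L z (sgl a)) x (sgl a) with hA2
  set B2 : Fin m → ℝ := fun a => fderiv ℝ (fun z => fderiv ℝ θ z (sgl a)) x (sgl a) with hB2
  set G : Fin m → ℂ := fun a => fderiv ℝ g x (sgl a) with hG
  set S : Fin m → ℂ := fun a => fderiv ℝ (fun z => fderiv ℝ g z (sgl a)) x (sgl a) with hS
  have hGa : ∀ a, G a = (A a : ℂ) + Complex.I * (B a : ℂ) := fun a => hDg x hx (sgl a)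
  -- second derivative of g decomposes
  have hSa : ∀ a, S a = (A2 a : ℂ) + Complex.I * (B2 a : ℂ) := by
    intro a
    have heq : (fun z => fderiv ℝ g z (sgl a)) =ᶠ[nhds x]
        (fun z => ((fderiv ℝ L z (sgl a) : ℂ) + Complex.I * (fderiv ℝ θ z (sgl a) : ℂ))) :=
      Filter.eventuallyEq_of_mem (hU.mem_nhds hx) (fun z hz => hDg z hz (sgl a))
    show fderiv ℝ (fun z => fderiv ℝ g z (sgl a)) x (sgl a) = _
    rw [heq.fderiv_eq]
    exact comb_fderiv _ _ x (dGL a) (dGθ a) (sgl a)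
  -- second derivative of φ
  have hsecφ : ∀ a : Fin m,
      fderiv ℝ (fun z => fderiv ℝ φ z (sgl a)) x (sgl a)
        = φ x * S a + φ x * (G a * G a) := by
    intro a
    have heq : (fun z => fderiv ℝ φ z (sgl a)) =ᶠ[nhds x]
        (fun z => φ z * fderiv ℝ g z (sgl a)) :=
      Filter.eventuallyEq_of_mem (hU.mem_nhds hx) (fun z hz => hDφ z hz (sgl a))
    rw [heq.fderiv_eq, fderiv_fun_mul (dφ x hx) (dGg a)]
    rw [ContinuousLinearMap.add_apply, ContinuousLinearMap.smul_apply,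
      ContinuousLinearMap.smul_apply, smul_eq_mul, smul_eq_mul, hDφ x hx (sgl a)]
    ring
  -- lap φ in terms of g
  have hlapφ : lap φ x = φ x * (∑ a, S a) + φ x * (∑ a, G a * G a) := by
    rw [lap_eq, Finset.mul_sum, Finset.mul_sum, ← Finset.sum_add_distrib]
    exact Finset.sum_congr rfl fun a _ => hsecφ a
  -- kap φ φ in terms of g
  have hkapφ : kap φ φ x = φ x ^ 2 * (∑ a, G a * G a) := by
    rw [kap_eq, Finset.mul_sum]
    refine Finset.sum_congr rfl fun a _ => ?_
    rw [hDφ x hx (sgl a)]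
    ring
  -- κ(g,g) = μ
  have hKg : (∑ a, G a * G a) = (mu : ℂ) := by
    have h := hkap x hx
    rw [hkapφ] at h
    have h2 : φ x ^ 2 * (∑ a, G a * G a) = φ x ^ 2 * (mu : ℂ) := by
      rw [h]; ring
    exact mul_left_cancel₀ (pow_ne_zero 2 (hφ0 x hx)) h2
  -- Δg = λ - μ
  have hSg : (∑ a, S a) = ((lam : ℂ) - (mu : ℂ)) := by
    have h := hlap x hx
    rw [hlapφ, hKg] at h
    have h2 : φ x * ((∑ a, S a) + (mu : ℂ)) = φ x * (lam : ℂ) := by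
      linear_combination h
    have h3 := mul_left_cancel₀ (hφ0 x hx) h2
    linear_combination h3
  -- split Δg componentwise
  have hSg2 : ((∑ a, A2 a : ℝ) : ℂ) + Complex.I * ((∑ a, B2 a : ℝ) : ℂ)
      = ((lam - mu : ℝ) : ℂ) := by
    push_cast
    rw [← hSg, Finset.mul_sum, ← Finset.sum_add_distrib]
    exact (Finset.sum_congr rfl fun a _ => (hSa a).symm)
  have hlapsplit := split_complex _ _ _ hSg2
  -- split κ(g,g) componentwise
  have hKg2 : ((∑ a, (A a * A a - B a * B a) : ℝ) : ℂ)
      + Complex.I * ((∑ a, 2 * (A a * B a) : ℝ) : ℂ) = ((mu : ℝ) : ℂ) := by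
    push_cast
    rw [← hKg, Finset.mul_sum, ← Finset.sum_add_distrib]
    refine Finset.sum_congr rfl fun a _ => ?_
    rw [hGa a]
    have hI := Complex.I_sq
    linear_combination (- (B a : ℂ) * (B a : ℂ)) * hI
  have hkapsplit := split_complex _ _ _ hKg2
  have hAB : (∑ a, A a * B a) = 0 := by
    have h := hkapsplit.2
    rw [← Finset.mul_sum] at h
    linarith
  refine ⟨?_, ?_, ?_, ?_⟩
  · -- lap θ = 0
    rw [lap_eq]
    exact hlapsplit.2
  · -- lap L = lam - mu
    rw [lap_eq]
    exact hlapsplit.1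
  · -- kap θ r = 0
    rw [kap_eq]
    have : ∀ a : Fin m, fderiv ℝ θ x (sgl a) * fderiv ℝ r x (sgl a)
        = r x * (A a * B a) := by
      intro a
      rw [hDr x hx (sgl a)]
      simp only [hA, hB]
      ring
    rw [Finset.sum_congr rfl fun a _ => this a, ← Finset.mul_sum, hAB, mul_zero]
  · -- kap L L = kap θ θ + mu
    rw [kap_eq, kap_eq]
    have h := hkapsplit.1
    rw [Finset.sum_sub_distrib] at h
    simp only [hA, hB] at h ⊢
    linarith
end

section
/- Let Γ be a lattice in E = EuclideanSpace ℝ (Fin n), let λ, μ ∈ ℂ, and let φ : E → ℂ be a smooth, nonconstant, Γ-periodic function satisfying Δφ = λ·φ and κ(φ,φ) = μ·φ² on E. Then the following are equivalent: (1) λ = μ; (2) the function x ↦ |φ(x)|² is constant on E; (3) φ(x) ≠ 0 for every x ∈ E. -/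
open MeasureTheory ContDiff Bornology
open scoped ContDiff

namespace LambdaLambdaAux

variable {n : ℕ} {F G : Type*} [NormedAddCommGroup F] [NormedSpace ℝ F]
  [NormedAddCommGroup G] [NormedSpace ℝ G]

local notation "E" => EuclideanSpace ℝ (Fin n)

lemma pd_contDiff {f : E → F} (hf : ContDiff ℝ ∞ f) (v : E) :
    ContDiff ℝ ∞ (fun x => fderiv ℝ f x v) :=
  (ContinuousLinearMap.apply ℝ F v).contDiff.comp (hf.fderiv_right (by simp))

lemma pd_continuous {f : E → F} (hf : ContDiff ℝ 1 f) (v : E) :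
    Continuous (fun x => fderiv ℝ f x v) :=
  (ContinuousLinearMap.apply ℝ F v).continuous.comp (hf.continuous_fderiv one_ne_zero)

lemma fderiv_periodic {f : E → F} (hf : Differentiable ℝ f) {γ : E}
    (hp : ∀ x, f (x + γ) = f x) (x : E) : fderiv ℝ f (x + γ) = fderiv ℝ f x := by
  have h1 : HasFDerivAt (fun y => f (y + γ)) (fderiv ℝ f (x + γ)) x := by
    have := (hf (x + γ)).hasFDerivAt.comp x ((hasFDerivAt_id x).add_const γ)
    exact this
  have h2 : (fun y => f (y + γ)) = f := funext hp
  rw [h2] at h1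
  exact h1.fderiv.symm

section ring
variable {A : Type*} [NormedCommRing A] [NormedAlgebra ℝ A]

lemma pd_mul {f g : E → A} {x v : E} (hf : DifferentiableAt ℝ f x)
    (hg : DifferentiableAt ℝ g x) :
    fderiv ℝ (fun y => f y * g y) x v = f x * fderiv ℝ g x v + g x * fderiv ℝ f x v := by
  rw [fderiv_fun_mul hf hg]
  simp [smul_eq_mul]

lemma lap_mul {f g : E → A} (hf : ContDiff ℝ ∞ f) (hg : ContDiff ℝ ∞ g) (x : E) :
    lap (fun y => f y * g y) x = f x * lap g x + g x * lap f x + 2 * kap f g x := by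
  have hfd : Differentiable ℝ f := hf.differentiable (by simp)
  have hgd : Differentiable ℝ g := hg.differentiable (by simp)
  unfold lap kap
  have key : ∀ a : Fin n,
      fderiv ℝ (fun y => fderiv ℝ (fun z => f z * g z) y (EuclideanSpace.single a 1)) x
        (EuclideanSpace.single a 1)
      = f x * fderiv ℝ (fun y => fderiv ℝ g y (EuclideanSpace.single a 1)) x
          (EuclideanSpace.single a 1)
        + g x * fderiv ℝ (fun y => fderiv ℝ f y (EuclideanSpace.single a 1)) x
          (EuclideanSpace.single a 1)
        + 2 * (fderiv ℝ f x (EuclideanSpace.single a 1)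
            * fderiv ℝ g x (EuclideanSpace.single a 1)) := by
    intro a
    set v := EuclideanSpace.single a (1:ℝ)
    have e1 : (fun y => fderiv ℝ (fun z => f z * g z) y v)
        = fun y => f y * fderiv ℝ g y v + g y * fderiv ℝ f y v :=
      funext fun y => pd_mul (hfd y) (hgd y)
    have hdg : Differentiable ℝ (fun y => fderiv ℝ g y v) :=
      (pd_contDiff hg v).differentiable (by simp)
    have hdf : Differentiable ℝ (fun y => fderiv ℝ f y v) :=
      (pd_contDiff hf v).differentiable (by simp)
    have d1 : DifferentiableAt ℝ (fun y => f y * fderiv ℝ g y v) x := (hfd x).mul (hdg x)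
    have d2 : DifferentiableAt ℝ (fun y => g y * fderiv ℝ f y v) x := (hgd x).mul (hdf x)
    rw [e1]
    have happ : fderiv ℝ (fun y => f y * fderiv ℝ g y v + g y * fderiv ℝ f y v) x v
        = fderiv ℝ (fun y => f y * fderiv ℝ g y v) x v
          + fderiv ℝ (fun y => g y * fderiv ℝ f y v) x v := by
      rw [fderiv_fun_add d1 d2]; simp
    rw [happ, pd_mul (hfd x) (hdg x), pd_mul (hgd x) (hdf x)]
    ring
  rw [Finset.sum_congr rfl (fun a _ => key a)]
  simp only [Finset.sum_add_distrib, ← Finset.mul_sum]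

end ring

lemma pd_clm (L : F →L[ℝ] G) {f : E → F} (hf : Differentiable ℝ f) (x v : E) :
    fderiv ℝ (fun y => L (f y)) x v = L (fderiv ℝ f x v) := by
  have h := (L.hasFDerivAt (x := f x)).comp x (hf x).hasFDerivAt
  have h2 : fderiv ℝ (fun y => L (f y)) x = L.comp (fderiv ℝ f x) := by
    exact h.fderiv
  rw [h2]; rfl

lemma lap_clm (L : F →L[ℝ] G) {f : E → F} (hf : ContDiff ℝ ∞ f) (x : E) :
    lap (fun y => L (f y)) x = L (lap f x) := by
  have hfd : Differentiable ℝ f := hf.differentiable (by simp)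
  unfold lap
  rw [map_sum]
  refine Finset.sum_congr rfl fun a _ => ?_
  set v := EuclideanSpace.single a (1:ℝ)
  have e1 : (fun y => fderiv ℝ (fun z => L (f z)) y v) = fun y => L (fderiv ℝ f y v) :=
    funext fun y => pd_clm L hfd y v
  rw [e1, pd_clm L ((pd_contDiff hf v).differentiable (by simp)) x v]

variable (Γ : Submodule ℤ (EuclideanSpace ℝ (Fin n))) [DiscreteTopology Γ] [IsZLattice ℝ Γ]

noncomputable def latD : Set (EuclideanSpace ℝ (Fin n)) :=
  ZSpan.fundamentalDomain ((Module.Free.chooseBasis ℤ Γ).ofZLatticeBasis ℝ)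

lemma latD_fd : IsAddFundamentalDomain Γ (latD Γ) volume :=
  ZLattice.isAddFundamentalDomain _ _

lemma latD_bounded : IsBounded (latD Γ) := ZSpan.fundamentalDomain_isBounded _

lemma latD_vol_ne_zero : volume (latD Γ) ≠ 0 :=
  ZSpan.measure_fundamentalDomain_ne_zero _

lemma latD_vol_ne_top : volume (latD Γ) ≠ ⊤ :=
  ((latD_bounded Γ).measure_lt_top).ne

instance : MeasurableVAdd Γ (EuclideanSpace ℝ (Fin n)) :=
  { measurable_const_vadd := fun c => measurable_const_add (c : EuclideanSpace ℝ (Fin n)),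
    measurable_vadd_const := fun x => measurable_subtype_coe.add_const x }

instance : VAddInvariantMeasure Γ (EuclideanSpace ℝ (Fin n)) volume :=
  ⟨fun c s _ => by
    have h : ((fun x => c +ᵥ x) : EuclideanSpace ℝ (Fin n) → EuclideanSpace ℝ (Fin n))
        = fun x => (c : EuclideanSpace ℝ (Fin n)) + x := rfl
    rw [h]
    exact measure_preimage_add volume _ s⟩

omit [NormedSpace ℝ F] in
lemma contIntegrableOn (g : E → F) (hg : Continuous g) : IntegrableOn g (latD Γ) volume :=
  ((hg.continuousOn).integrableOn_compact (latD_bounded Γ).isCompact_closure).mono_set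
    subset_closure

lemma periodic_setIntegral_translate [CompleteSpace F] (f : E → F)
    (hper : ∀ x : E, ∀ γ ∈ Γ, f (x + γ) = f x) (v : E) :
    ∫ x in latD Γ, f (x + v) = ∫ x in latD Γ, f x := by
  have hD := latD_fd Γ
  have hinv : ∀ (g : Γ) (x : E), f (g +ᵥ x) = f x := by
    intro g x
    show f ((g : E) + x) = f x
    rw [add_comm]
    exact hper x g g.2
  have hD2 : IsAddFundamentalDomain Γ ((fun x : E => x + v) '' latD Γ) volume := by
    have h := hD.image_of_equiv (Equiv.addRight v)
      (by
        rw [Equiv.addRight_symm]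
        exact (measurePreserving_add_right volume (-v)).quasiMeasurePreserving)
      (Equiv.refl _)
      (by
        intro g x
        show ((g : E) + x) + v = (g : E) + (x + v)
        rw [add_assoc])
    simpa using h
  calc ∫ x in latD Γ, f (x + v)
      = ∫ y in (fun x : E => x + v) '' latD Γ, f y :=
        ((measurePreserving_add_right volume v).setIntegral_image_emb
          (measurableEmbedding_addRight v) f _).symm
    _ = ∫ x in latD Γ, f x := hD2.setIntegral_eq hD hinv

lemma integral_pd_eq_zero [CompleteSpace F] (f : E → F) (hf : ContDiff ℝ 1 f)
    (hper : ∀ x : E, ∀ γ ∈ Γ, f (x + γ) = f x) (v : E) :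
    ∫ x in latD Γ, fderiv ℝ f x v = 0 := by
  set G : E → F := fun x => fderiv ℝ f x v with hG
  have hfd : Differentiable ℝ f := hf.differentiable one_ne_zero
  have hGc : Continuous G :=
    (ContinuousLinearMap.apply ℝ F v).continuous.comp (hf.continuous_fderiv one_ne_zero)
  have hGper : ∀ x : E, ∀ γ ∈ Γ, G (x + γ) = G x := by
    intro x γ hγ
    show fderiv ℝ f (x + γ) v = fderiv ℝ f x v
    rw [fderiv_periodic hfd (fun y => hper y γ hγ) x]
  have ftc : ∀ x : E, ∫ t in Set.Ioc (0:ℝ) 1, G (x + t • v) = f (x + v) - f x := by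
    intro x
    rw [← intervalIntegral.integral_of_le zero_le_one]
    have hd : ∀ t ∈ Set.uIcc (0:ℝ) 1,
        HasDerivAt (fun s : ℝ => f (x + s • v)) (G (x + t • v)) t := by
      intro t _
      have hc : HasDerivAt (fun s : ℝ => x + s • v) v t := by
        simpa using ((hasDerivAt_id t).smul_const v).const_add x
      have := (hfd (x + t • v)).hasFDerivAt.comp_hasDerivAt t hc
      exact this
    have hInt : IntervalIntegrable (fun t : ℝ => G (x + t • v)) volume 0 1 :=
      (hGc.comp (continuous_const.add (continuous_id.smul continuous_const))).intervalIntegrable 0 1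
    have := intervalIntegral.integral_eq_sub_of_hasDerivAt hd hInt
    simpa using this
  have hcontU : Continuous (Function.uncurry fun (t : ℝ) (x : E) => G (x + t • v)) :=
    hGc.comp (continuous_snd.add (continuous_fst.smul continuous_const))
  have hIntProd : Integrable (Function.uncurry fun (t : ℝ) (x : E) => G (x + t • v))
      ((volume.restrict (Set.Ioc (0:ℝ) 1)).prod (volume.restrict (latD Γ))) := by
    rw [Measure.prod_restrict]
    have hK : IsCompact ((Set.Icc (0:ℝ) 1) ×ˢ closure (latD Γ)) :=
      isCompact_Icc.prod (latD_bounded Γ).isCompact_closure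
    exact (hcontU.continuousOn.integrableOn_compact hK).mono_set
      (Set.prod_mono Set.Ioc_subset_Icc_self subset_closure)
  have hswap := MeasureTheory.integral_integral_swap hIntProd
  have hIf : IntegrableOn f (latD Γ) volume := contIntegrableOn Γ f hf.continuous
  have hIfv : IntegrableOn (fun x => f (x + v)) (latD Γ) volume :=
    contIntegrableOn Γ _ (hf.continuous.comp (continuous_id.add continuous_const))
  calc ∫ x in latD Γ, G x
      = ∫ t in Set.Ioc (0:ℝ) 1, ∫ x in latD Γ, G x := by
        simp [Real.volume_Ioc]
    _ = ∫ t in Set.Ioc (0:ℝ) 1, ∫ x in latD Γ, G (x + t • v) := by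
        refine integral_congr_ae (Filter.Eventually.of_forall fun t => ?_)
        simpa using (periodic_setIntegral_translate Γ G hGper (t • v)).symm
    _ = ∫ x in latD Γ, ∫ t in Set.Ioc (0:ℝ) 1, G (x + t • v) := hswap
    _ = ∫ x in latD Γ, (f (x + v) - f x) :=
        integral_congr_ae (Filter.Eventually.of_forall fun x => ftc x)
    _ = (∫ x in latD Γ, f (x + v)) - ∫ x in latD Γ, f x := integral_sub hIfv hIf
    _ = 0 := by rw [periodic_setIntegral_translate Γ f hper v, sub_self]

lemma zero_of_nonneg_int (g : (EuclideanSpace ℝ (Fin n)) → ℝ) (hc : Continuous g)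
    (hper : ∀ x : E, ∀ γ ∈ Γ, g (x + γ) = g x) (hnn : ∀ x, 0 ≤ g x)
    (hzero : ∫ x in latD Γ, g x = 0) : ∀ x, g x = 0 := by
  have hIg : IntegrableOn g (latD Γ) volume := contIntegrableOn Γ g hc
  have h1 : ∫⁻ x in latD Γ, ENNReal.ofReal (g x) = 0 := by
    rw [← ofReal_integral_eq_lintegral_ofReal hIg (Filter.Eventually.of_forall hnn), hzero]
    simp
  have h2 : ∫⁻ x, ENNReal.ofReal (g x) = 0 := by
    rw [(latD_fd Γ).lintegral_eq_tsum' (fun x => ENNReal.ofReal (g x))]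
    have hterm : ∀ γ : Γ, ∫⁻ x in latD Γ, ENNReal.ofReal (g (-γ +ᵥ x)) = 0 := by
      intro γ
      have heq : ∀ x : E, g (-γ +ᵥ x) = g x := by
        intro x
        show g (((-γ : Γ) : E) + x) = g x
        rw [add_comm]
        exact hper x _ (Submodule.neg_mem Γ γ.2)
      simp only [heq]
      exact h1
    simp [hterm]
  have h3 := (lintegral_eq_zero_iff (ENNReal.measurable_ofReal.comp hc.measurable)).mp h2
  have h4 : g =ᶠ[ae volume] 0 := by
    filter_upwards [h3] with x hx
    have hx0 : ENNReal.ofReal (g x) = 0 := hx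
    have hle : g x ≤ 0 := by simpa [ENNReal.ofReal_eq_zero] using hx0
    exact le_antisymm hle (hnn x)
  have h5 := (hc.ae_eq_iff_eq volume continuous_const).mp h4
  exact fun x => congrFun h5 x

noncomputable def wF (φ : E → ℂ) (a : Fin n) : E → ℂ :=
  fun x => fderiv ℝ φ x (EuclideanSpace.single a 1) * (φ x)⁻¹

lemma imp_3_1 [DiscreteTopology Γ] [IsZLattice ℝ Γ] (lam mu : ℂ) (φ : E → ℂ)
    (hφ : ContDiff ℝ ∞ φ)
    (hper : ∀ x : E, ∀ γ ∈ Γ, φ (x + γ) = φ x)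
    (hlap : ∀ x, lap φ x = lam * φ x)
    (hkap : ∀ x, kap φ φ x = mu * (φ x) ^ 2)
    (h3 : ∀ x, φ x ≠ 0) : lam = mu := by
  have hφd : Differentiable ℝ φ := hφ.differentiable (by simp)
  have hw1 : ∀ a, ContDiff ℝ 1 (wF φ a) := by
    intro a
    unfold wF
    exact ((pd_contDiff hφ _).mul (hφ.inv h3)).of_le (by exact_mod_cast le_top)
  have hwper : ∀ a, ∀ x : E, ∀ γ ∈ Γ, wF φ a (x + γ) = wF φ a x := by
    intro a x γ hγ
    unfold wF
    rw [fderiv_periodic hφd (fun y => hper y γ hγ) x, hper x γ hγ]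
  have hdiv : ∀ x, ∑ a : Fin n, fderiv ℝ (wF φ a) x (EuclideanSpace.single a 1) = lam - mu := by
    intro x
    have hpdinv : ∀ v : E, fderiv ℝ (fun y => (φ y)⁻¹) x v
        = -(fderiv ℝ φ x v * ((φ x) ^ 2)⁻¹) := by
      intro v
      have hcomp : fderiv ℝ (fun y => (φ y)⁻¹) x
          = (fderiv ℝ (Inv.inv : ℂ → ℂ) (φ x)).comp (fderiv ℝ φ x) := by
        have h := fderiv_comp x (differentiableAt_inv (h3 x)) (hφd x)
        exact h
      have happ : fderiv ℝ (fun y => (φ y)⁻¹) x v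
          = (fderiv ℝ (Inv.inv : ℂ → ℂ) (φ x)) (fderiv ℝ φ x v) := by
        rw [hcomp]; rfl
      rw [happ, fderiv_inv' (h3 x)]
      simp only [ContinuousLinearMap.neg_apply, ContinuousLinearMap.mulLeftRight_apply]
      rw [sq, mul_inv]
      ring
    have hterm : ∀ a : Fin n, fderiv ℝ (wF φ a) x (EuclideanSpace.single a 1)
        = fderiv ℝ (fun y => fderiv ℝ φ y (EuclideanSpace.single a 1)) x
            (EuclideanSpace.single a 1) * (φ x)⁻¹
          - fderiv ℝ φ x (EuclideanSpace.single a 1) * fderiv ℝ φ x (EuclideanSpace.single a 1)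
            * ((φ x) ^ 2)⁻¹ := by
      intro a
      have hm := pd_mul (x := x) (v := EuclideanSpace.single a 1)
        (f := fun y => fderiv ℝ φ y (EuclideanSpace.single a 1))
        (g := fun y => (φ y)⁻¹)
        ((pd_contDiff hφ _).differentiable (by simp) x) ((hφd x).inv (h3 x))
      unfold wF
      rw [hm, hpdinv]
      ring
    rw [Finset.sum_congr rfl (fun a _ => hterm a), Finset.sum_sub_distrib,
      ← Finset.sum_mul, ← Finset.sum_mul]
    have e1 : ∑ a : Fin n, fderiv ℝ (fun y => fderiv ℝ φ y (EuclideanSpace.single a 1)) x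
        (EuclideanSpace.single a 1) = lam * φ x := hlap x
    have e2 : ∑ a : Fin n, fderiv ℝ φ x (EuclideanSpace.single a 1)
        * fderiv ℝ φ x (EuclideanSpace.single a 1) = mu * φ x ^ 2 := hkap x
    rw [e1, e2]
    have hne := h3 x
    field_simp
  have hzero : ∫ x in latD Γ,
      (∑ a : Fin n, fderiv ℝ (wF φ a) x (EuclideanSpace.single a 1)) = 0 := by
    rw [integral_finset_sum]
    · exact Finset.sum_eq_zero fun a _ =>
        integral_pd_eq_zero Γ (wF φ a) (hw1 a) (hwper a) _
    · intro a _
      exact contIntegrableOn Γ _ (pd_continuous (hw1 a) _)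
  have h5 : (volume (latD Γ)).toReal • (lam - mu) = 0 := by
    calc (volume (latD Γ)).toReal • (lam - mu)
        = ∫ _x in latD Γ, (lam - mu : ℂ) := (setIntegral_const _).symm
      _ = ∫ x in latD Γ, ∑ a : Fin n, fderiv ℝ (wF φ a) x (EuclideanSpace.single a 1) :=
          integral_congr_ae (Filter.Eventually.of_forall fun x => (hdiv x).symm)
      _ = 0 := hzero
  have hne : (volume (latD Γ)).toReal ≠ 0 :=
    ENNReal.toReal_ne_zero.mpr ⟨latD_vol_ne_zero Γ, latD_vol_ne_top Γ⟩
  rcases smul_eq_zero.mp h5 with h | h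
  · exact absurd h hne
  · exact sub_eq_zero.mp h

noncomputable def cjL : ℂ →L[ℝ] ℂ := Complex.conjCLE.toContinuousLinearMap

lemma cjL_apply (z : ℂ) : cjL z = starRingEnd ℂ z := rfl

noncomputable def psiF (φ : E → ℂ) : E → ℂ := fun x => cjL (φ x)

noncomputable def HcF (φ : E → ℂ) : E → ℂ := fun x => φ x * psiF φ x

noncomputable def HF (φ : E → ℂ) : E → ℝ := fun x => Complex.reCLM (HcF φ x)

noncomputable def SFn (φ : E → ℂ) : E → ℝ :=
  fun x => ∑ a : Fin n, Complex.normSq (fderiv ℝ φ x (EuclideanSpace.single a 1))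

noncomputable def QF (φ : E → ℂ) : E → ℝ := fun x => HF φ x * HF φ x

lemma imp_1_2 [DiscreteTopology Γ] [IsZLattice ℝ Γ] (lam mu : ℂ) (φ : E → ℂ)
    (hφ : ContDiff ℝ ∞ φ)
    (hper : ∀ x : E, ∀ γ ∈ Γ, φ (x + γ) = φ x)
    (hlap : ∀ x, lap φ x = lam * φ x)
    (hkap : ∀ x, kap φ φ x = mu * (φ x) ^ 2)
    (h1 : lam = mu) : ∃ c : ℝ, ∀ x, ‖φ x‖ ^ 2 = c := by
  have hφd : Differentiable ℝ φ := hφ.differentiable (by simp)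
  have hpsis : ContDiff ℝ ∞ (psiF φ) := cjL.contDiff.comp hφ
  have hHcs : ContDiff ℝ ∞ (HcF φ) := hφ.mul hpsis
  have hHs : ContDiff ℝ ∞ (HF φ) := Complex.reCLM.contDiff.comp hHcs
  have hHd : Differentiable ℝ (HF φ) := hHs.differentiable (by simp)
  have hQs : ContDiff ℝ ∞ (QF φ) := hHs.mul hHs
  have hQd : Differentiable ℝ (QF φ) := hQs.differentiable (by simp)
  have hHval : ∀ x, HF φ x = Complex.normSq (φ x) := by
    intro x
    show (φ x * cjL (φ x)).re = _
    rw [cjL_apply, Complex.mul_conj]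
    exact Complex.ofReal_re _
  have hHper : ∀ x : E, ∀ γ ∈ Γ, HF φ (x + γ) = HF φ x := by
    intro x γ hγ
    rw [hHval, hHval, hper x γ hγ]
  have hQper : ∀ x : E, ∀ γ ∈ Γ, QF φ (x + γ) = QF φ x := by
    intro x γ hγ
    unfold QF
    rw [hHper x γ hγ]
  have hHnn : ∀ x, 0 ≤ HF φ x := fun x => by rw [hHval]; exact Complex.normSq_nonneg _
  have hpdψ : ∀ x v, fderiv ℝ (psiF φ) x v = cjL (fderiv ℝ φ x v) :=
    fun x v => pd_clm cjL hφd x v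
  have hkapφψ : ∀ x, kap φ (psiF φ) x = ((SFn φ x : ℝ) : ℂ) := by
    intro x
    show (∑ a : Fin n, fderiv ℝ φ x (EuclideanSpace.single a 1)
        * fderiv ℝ (psiF φ) x (EuclideanSpace.single a 1)) = _
    have hrhs : ((SFn φ x : ℝ) : ℂ)
        = ∑ a : Fin n, ((Complex.normSq (fderiv ℝ φ x (EuclideanSpace.single a 1)) : ℝ) : ℂ) := by
      unfold SFn
      push_cast
      rfl
    rw [hrhs]
    refine Finset.sum_congr rfl fun a _ => ?_
    rw [hpdψ x _, cjL_apply, Complex.mul_conj]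
  have hlapψ : ∀ x, lap (psiF φ) x = cjL (lap φ x) := fun x => lap_clm cjL hφ x
  have hlapH : ∀ x, lap (HF φ) x = 2 * lam.re * HF φ x + 2 * SFn φ x := by
    intro x
    have e1 : lap (HF φ) x = Complex.reCLM (lap (HcF φ) x) := lap_clm Complex.reCLM hHcs x
    have e2 : lap (HcF φ) x
        = φ x * lap (psiF φ) x + psiF φ x * lap φ x + 2 * kap φ (psiF φ) x :=
      lap_mul hφ hpsis x
    have e3 : psiF φ x = starRingEnd ℂ (φ x) := rfl
    rw [e1, e2, hlapψ x, hlap x, hkapφψ x, cjL_apply, e3, hHval x]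
    simp only [Complex.reCLM_apply, map_mul, Complex.add_re, Complex.mul_re, Complex.mul_im,
      Complex.conj_re, Complex.conj_im, Complex.normSq_apply, Complex.ofReal_re,
      Complex.ofReal_im, Complex.re_ofNat, Complex.im_ofNat]
    ring
  have hSlower : ∀ x, ‖lam‖ * HF φ x ≤ SFn φ x := by
    intro x
    have h0 : ‖kap φ φ x‖ ≤ SFn φ x := by
      have hb := norm_sum_le Finset.univ
        (fun a : Fin n => fderiv ℝ φ x (EuclideanSpace.single a 1)
          * fderiv ℝ φ x (EuclideanSpace.single a 1))
      have he : ∑ a : Fin n, ‖fderiv ℝ φ x (EuclideanSpace.single a 1)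
          * fderiv ℝ φ x (EuclideanSpace.single a 1)‖ = SFn φ x := by
        unfold SFn
        refine Finset.sum_congr rfl fun a _ => ?_
        rw [norm_mul, ← sq, Complex.sq_norm]
      calc ‖kap φ φ x‖
          ≤ ∑ a : Fin n, ‖fderiv ℝ φ x (EuclideanSpace.single a 1)
            * fderiv ℝ φ x (EuclideanSpace.single a 1)‖ := hb
        _ = SFn φ x := he
    rw [hkap x, ← h1] at h0
    calc ‖lam‖ * HF φ x = ‖lam * φ x ^ 2‖ := by
          rw [norm_mul, norm_pow, Complex.sq_norm, hHval x]
      _ ≤ SFn φ x := h0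
  have hlapHnn : ∀ x, 0 ≤ lap (HF φ) x := by
    intro x
    rw [hlapH x]
    have h2 := hSlower x
    have h3 := hHnn x
    have h4 : -‖lam‖ ≤ lam.re := by
      have h5 := Complex.abs_re_le_norm lam
      have h6 := neg_abs_le lam.re
      have h7 := abs_nonneg lam.re
      linarith [le_abs_self lam.re]
    nlinarith
  have hkapH_eq : ∀ x, kap (HF φ) (HF φ) x
      = ∑ a : Fin n, (fderiv ℝ (HF φ) x (EuclideanSpace.single a 1)) ^ 2 := by
    intro x
    show (∑ a : Fin n, fderiv ℝ (HF φ) x (EuclideanSpace.single a 1)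
        * fderiv ℝ (HF φ) x (EuclideanSpace.single a 1)) = _
    exact Finset.sum_congr rfl fun a _ => (sq _).symm
  have hkapHnn : ∀ x, 0 ≤ kap (HF φ) (HF φ) x := by
    intro x
    rw [hkapH_eq x]
    exact Finset.sum_nonneg fun a _ => sq_nonneg _
  have hlapQ : ∀ x, lap (QF φ) x
      = 2 * (HF φ x * lap (HF φ) x) + 2 * kap (HF φ) (HF φ) x := by
    intro x
    calc lap (QF φ) x
        = HF φ x * lap (HF φ) x + HF φ x * lap (HF φ) x + 2 * kap (HF φ) (HF φ) x :=
          lap_mul hHs hHs x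
      _ = _ := by ring
  have hlapQnn : ∀ x, 0 ≤ lap (QF φ) x := by
    intro x
    rw [hlapQ x]
    have := mul_nonneg (hHnn x) (hlapHnn x)
    have := hkapHnn x
    linarith
  have hintQ : ∫ x in latD Γ, lap (QF φ) x = 0 := by
    show ∫ x in latD Γ, (∑ a : Fin n,
      fderiv ℝ (fun y => fderiv ℝ (QF φ) y (EuclideanSpace.single a 1)) x
        (EuclideanSpace.single a 1)) = 0
    rw [integral_finset_sum]
    · refine Finset.sum_eq_zero fun a _ => ?_
      refine integral_pd_eq_zero Γ _ ((pd_contDiff hQs _).of_le (by exact_mod_cast le_top)) ?_ _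
      intro x γ hγ
      rw [fderiv_periodic hQd (fun z => hQper z γ hγ) x]
    · intro a _
      exact contIntegrableOn Γ _
        (pd_continuous ((pd_contDiff hQs _).of_le (by exact_mod_cast le_top)) _)
  have hlapQc : Continuous (lap (QF φ)) := by
    show Continuous fun x => ∑ a : Fin n,
      fderiv ℝ (fun y => fderiv ℝ (QF φ) y (EuclideanSpace.single a 1)) x
        (EuclideanSpace.single a 1)
    exact continuous_finset_sum _ fun a _ =>
      pd_continuous ((pd_contDiff hQs _).of_le (by exact_mod_cast le_top)) _
  have hlapQper : ∀ x : E, ∀ γ ∈ Γ, lap (QF φ) (x + γ) = lap (QF φ) x := by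
    intro x γ hγ
    show (∑ a : Fin n,
      fderiv ℝ (fun y => fderiv ℝ (QF φ) y (EuclideanSpace.single a 1)) (x + γ)
        (EuclideanSpace.single a 1)) = _
    refine Finset.sum_congr rfl fun a _ => ?_
    have hinner : ∀ y : E, fderiv ℝ (QF φ) (y + γ) (EuclideanSpace.single a 1)
        = fderiv ℝ (QF φ) y (EuclideanSpace.single a 1) := by
      intro y
      rw [fderiv_periodic hQd (fun z => hQper z γ hγ) y]
    rw [fderiv_periodic ((pd_contDiff hQs _).differentiable (by simp)) hinner x]
  have hlapQ0 : ∀ x, lap (QF φ) x = 0 :=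
    zero_of_nonneg_int Γ _ hlapQc hlapQper hlapQnn hintQ
  have hpdH0 : ∀ x (a : Fin n), fderiv ℝ (HF φ) x (EuclideanSpace.single a 1) = 0 := by
    intro x a
    have h0 := hlapQ0 x
    rw [hlapQ x] at h0
    have t1 : 0 ≤ HF φ x * lap (HF φ) x := mul_nonneg (hHnn x) (hlapHnn x)
    have t2 := hkapHnn x
    have hk : kap (HF φ) (HF φ) x = 0 := by linarith
    rw [hkapH_eq x] at hk
    have hz := (Finset.sum_eq_zero_iff_of_nonneg (fun a _ => sq_nonneg _)).mp hk a
      (Finset.mem_univ a)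
    exact pow_eq_zero_iff two_ne_zero |>.mp hz
  have hfH0 : ∀ x, fderiv ℝ (HF φ) x = 0 := by
    intro x
    apply ContinuousLinearMap.coe_injective
    apply Module.Basis.ext (EuclideanSpace.basisFun (Fin n) ℝ).toBasis
    intro a
    simpa [EuclideanSpace.basisFun_apply] using hpdH0 x a
  have hconst : ∀ x, HF φ x = HF φ 0 := fun x => is_const_of_fderiv_eq_zero hHd hfH0 x 0
  exact ⟨HF φ 0, fun x => by rw [Complex.sq_norm, ← hHval x, hconst x]⟩

end LambdaLambdaAux

theorem lambda_lambda_characterisation {n : ℕ}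
    (Γ : Submodule ℤ (EuclideanSpace ℝ (Fin n))) [DiscreteTopology Γ] [IsZLattice ℝ Γ]
    (lam mu : ℂ)
    (φ : EuclideanSpace ℝ (Fin n) → ℂ) (hφ : ContDiff ℝ (⊤ : ℕ∞) φ)
    (hnc : ∃ x y, φ x ≠ φ y)
    (hper : ∀ x : EuclideanSpace ℝ (Fin n), ∀ γ ∈ Γ, φ (x + γ) = φ x)
    (hlap : ∀ x, lap φ x = lam * φ x)
    (hkap : ∀ x, kap φ φ x = mu * (φ x) ^ 2) :
    List.TFAE [lam = mu,
      ∃ c : ℝ, ∀ x, ‖φ x‖ ^ 2 = c,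
      ∀ x, φ x ≠ 0] := by
  have hphis : ContDiff ℝ (((⊤ : ℕ∞) : WithTop ℕ∞)) φ := hφ.of_le (by simp)
  tfae_have 1 → 2 := fun h1 => LambdaLambdaAux.imp_1_2 Γ lam mu φ hphis hper hlap hkap h1
  tfae_have 2 → 3 := by
    rintro ⟨c, hc⟩ x hx
    obtain ⟨y, z, hyz⟩ := hnc
    have hc0 : (0 : ℝ) = c := by rw [← hc x, hx]; simp
    have hall : ∀ u, φ u = 0 := by
      intro u
      have hu := hc u
      rw [← hc0] at hu
      have habs : ‖φ u‖ = 0 := by nlinarith [norm_nonneg (φ u)]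
      simpa using habs
    exact hyz (by rw [hall y, hall z])
  tfae_have 3 → 1 := fun h3 => LambdaLambdaAux.imp_3_1 Γ lam mu φ hphis hper hlap hkap h3
  tfae_finish
end

section
/- Let Γ be a lattice in E = EuclideanSpace ℝ (Fin n), let λ ∈ ℂ, and let φ, ψ : E → ℂ be smooth Γ-periodic functions satisfying Δφ = λ·φ, Δψ = λ·ψ, κ(φ,φ) = λ·φ², κ(ψ,ψ) = λ·ψ², and κ(φ,ψ) = λ·φ·ψ on E. Then φ and ψ are linearly dependent over ℂ: there exist a, b ∈ ℂ, not both zero, with a·φ(x) + b·ψ(x) = 0 for all x ∈ E. -/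
open MeasureTheory Set intervalIntegral Complex
set_option linter.unusedSectionVars false
set_option linter.unusedVariables false
set_option maxHeartbeats 1600000

noncomputable section

namespace LLSpan

variable {V : Type*} [NormedAddCommGroup V] [NormedSpace ℝ V] [ProperSpace V] {n : ℕ}

/-- Average of `g` along the segment from `x` to `x + v`. -/
def Av (v : V) (g : V → ℝ) (x : V) : ℝ := ∫ t in (0:ℝ)..1, g (x + t • v)

lemma Av_congr {g h : V → ℝ} (he : ∀ y, g y = h y) (v : V) (x : V) :
    Av v g x = Av v h x := by
  rw [show g = h from funext he]

lemma Av_continuous {g : V → ℝ} (hg : Continuous g) (v : V) : Continuous (Av v g) := by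
  rw [continuous_iff_continuousAt]
  intro x₀
  obtain ⟨C, hC⟩ := (isCompact_closedBall x₀ (1 + ‖v‖)).exists_bound_of_continuousOn
    hg.continuousOn
  apply intervalIntegral.continuousAt_of_dominated_interval (bound := fun _ => C)
  · filter_upwards with x
    exact (hg.comp (continuous_const.add (continuous_id.smul continuous_const))).aestronglyMeasurable
  · filter_upwards [Metric.ball_mem_nhds x₀ one_pos] with x hx
    filter_upwards with t ht
    apply hC
    rw [Set.uIoc_of_le (zero_le_one' ℝ)] at ht
    have h1 : |t| ≤ 1 := abs_le.2 ⟨by linarith [ht.1], ht.2⟩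
    have h2 : dist (x + t • v) x₀ ≤ dist (x + t • v) x + dist x x₀ := dist_triangle _ _ _
    have h3 : dist (x + t • v) x = ‖t • v‖ := by
      simp [dist_eq_norm]
    have h4 : ‖t • v‖ ≤ ‖v‖ := by
      rw [norm_smul, Real.norm_eq_abs]
      calc |t| * ‖v‖ ≤ 1 * ‖v‖ := by
            exact mul_le_mul_of_nonneg_right h1 (norm_nonneg v)
        _ = ‖v‖ := one_mul _
    have h5 : dist x x₀ ≤ 1 := le_of_lt (Metric.mem_ball.1 hx)
    exact Metric.mem_closedBall.2 (by linarith)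
  · exact intervalIntegrable_const
  · filter_upwards with t ht
    exact (hg.comp (continuous_id.add continuous_const)).continuousAt

lemma Av_nonneg {g : V → ℝ} (hg : ∀ y, 0 ≤ g y) (v : V) (x : V) : 0 ≤ Av v g x :=
  intervalIntegral.integral_nonneg zero_le_one fun t _ => hg _

lemma Av_pos {g : V → ℝ} (hgc : Continuous g) (hg : ∀ y, 0 ≤ g y) (v : V) (x : V)
    (hx : 0 < g x) : 0 < Av v g x := by
  set f : ℝ → ℝ := fun t => g (x + t • v) with hf
  have hfc : Continuous f := by
    apply hgc.comp
    exact continuous_const.add (continuous_id.smul continuous_const)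
  rw [Av, integral_pos_iff_support_of_nonneg_ae
    (Filter.Eventually.of_forall (fun t => hg _)) (hfc.intervalIntegrable 0 1)]
  refine ⟨zero_lt_one, ?_⟩
  have hU : IsOpen (f ⁻¹' Ioi 0) := isOpen_Ioi.preimage hfc
  have h0 : (0:ℝ) ∈ f ⁻¹' Ioi 0 := by
    simp only [mem_preimage, mem_Ioi, hf]
    simpa using hx
  obtain ⟨ε, hε, hball⟩ := Metric.isOpen_iff.1 hU 0 h0
  set t₁ : ℝ := min ε 1 / 2 with ht₁
  have ht₁pos : 0 < t₁ := by positivity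
  have ht₁ε : t₁ < ε := by
    have : min ε 1 ≤ ε := min_le_left _ _
    linarith
  have ht₁lt : t₁ < 1 := by
    have : min ε 1 ≤ 1 := min_le_right _ _
    linarith
  have hmem : t₁ ∈ f ⁻¹' Ioi 0 ∩ Ioo 0 1 := by
    refine ⟨hball ?_, ht₁pos, ht₁lt⟩
    simp only [Metric.mem_ball, Real.dist_eq, sub_zero]
    rw [abs_of_pos ht₁pos]; exact ht₁ε
  have hpos : 0 < volume (f ⁻¹' Ioi 0 ∩ Ioo 0 1) :=
    (hU.inter isOpen_Ioo).measure_pos volume ⟨t₁, hmem⟩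
  refine lt_of_lt_of_le hpos (measure_mono ?_)
  rintro t ⟨h1, h2⟩
  exact ⟨ne_of_gt h1, Ioo_subset_Ioc_self h2⟩

def Tl : List V → (V → ℝ) → V → ℝ
  | [] => fun g => g
  | v :: l => fun g => Av v (Tl l g)

@[simp] lemma Tl_nil (g : V → ℝ) : Tl ([] : List V) g = g := rfl
@[simp] lemma Tl_cons (v : V) (l : List V) (g : V → ℝ) : Tl (v :: l) g = Av v (Tl l g) := rfl

lemma Tl_continuous {g : V → ℝ} (hg : Continuous g) : ∀ l : List V, Continuous (Tl l g)
  | [] => hg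
  | v :: l => Av_continuous (Tl_continuous hg l) v

lemma Tl_congr {g h : V → ℝ} (he : ∀ y, g y = h y) (l : List V) (x : V) :
    Tl l g x = Tl l h x := by rw [show g = h from funext he]

lemma Tl_nonneg {g : V → ℝ} (hg : ∀ y, 0 ≤ g y) : ∀ (l : List V) (x : V), 0 ≤ Tl l g x
  | [], x => hg x
  | v :: l, x => Av_nonneg (fun y => Tl_nonneg hg l y) v x

lemma Tl_pos {g : V → ℝ} (hgc : Continuous g) (hg : ∀ y, 0 ≤ g y) :
    ∀ (l : List V) (x : V), 0 < g x → 0 < Tl l g x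
  | [], x, h => h
  | v :: l, x, h =>
      Av_pos (Tl_continuous hgc l) (fun y => Tl_nonneg hg l y) v x (Tl_pos hgc hg l x h)

lemma Tl_const (c : ℝ) : ∀ (l : List V) (x : V), Tl l (fun _ => c) x = c
  | [], x => rfl
  | v :: l, x => by
    rw [Tl_cons, Av_congr (fun y => Tl_const c l y) v x, Av]
    simp

lemma Av_comm {g : V → ℝ} (hg : Continuous g) (v w : V) (x : V) :
    Av v (Av w g) x = Av w (Av v g) x := by
  have key : ∀ v w : V, Av v (Av w g) x
      = ∫ t in Ioc (0:ℝ) 1, (∫ s in Ioc (0:ℝ) 1, g (x + t • v + s • w)) := by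
    intro v w
    rw [Av, integral_of_le zero_le_one]
    refine setIntegral_congr_fun measurableSet_Ioc (fun t ht => ?_)
    rw [Av, integral_of_le zero_le_one]
  rw [key v w, key w v]
  have hcont : Continuous (Function.uncurry (fun t s : ℝ => g (x + t • v + s • w))) := by
    apply hg.comp
    exact ((continuous_const.add (continuous_fst.smul continuous_const)).add
      (continuous_snd.smul continuous_const))
  have hint : Integrable (Function.uncurry (fun t s : ℝ => g (x + t • v + s • w)))
      ((volume.restrict (Ioc (0:ℝ) 1)).prod (volume.restrict (Ioc (0:ℝ) 1))) := by
    rw [Measure.prod_restrict]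
    apply (hcont.continuousOn.integrableOn_compact (isCompact_Icc.prod isCompact_Icc)).mono_set
    exact Set.prod_mono Ioc_subset_Icc_self Ioc_subset_Icc_self
  have := MeasureTheory.integral_integral_swap hint
  rw [this]
  refine setIntegral_congr_fun measurableSet_Ioc (fun s hs => ?_)
  refine setIntegral_congr_fun measurableSet_Ioc (fun t ht => ?_)
  rw [add_right_comm]

lemma Av_Tl_comm {g : V → ℝ} (hg : Continuous g) (v : V) :
    ∀ (l : List V) (x : V), Av v (Tl l g) x = Tl l (Av v g) x
  | [], x => rfl
  | w :: l, x => by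
    rw [Tl_cons, Av_comm (Tl_continuous hg l) v w x,
      Av_congr (fun y => Av_Tl_comm hg v l y) w x, Tl_cons]

lemma Tl_sum {κ : Type*} (s : Finset κ) (G : κ → V → ℝ) (hG : ∀ k ∈ s, Continuous (G k)) :
    ∀ (l : List V) (x : V), Tl l (fun y => ∑ k ∈ s, G k y) x = ∑ k ∈ s, Tl l (G k) x
  | [], x => rfl
  | v :: l, x => by
    rw [Tl_cons, Av_congr (fun y => Tl_sum s G hG l y) v x, Av,
      intervalIntegral.integral_finset_sum]
    · rfl
    · intro k hk
      have : Continuous fun t : ℝ => Tl l (G k) (x + t • v) := by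
        apply (Tl_continuous (hG k hk) l).comp
        exact continuous_const.add (continuous_id.smul continuous_const)
      exact this.intervalIntegrable 0 1

lemma Tl_mul (c : ℝ) (G : V → ℝ) :
    ∀ (l : List V) (x : V), Tl l (fun y => c * G y) x = c * Tl l G x
  | [], x => rfl
  | v :: l, x => by
    rw [Tl_cons, Av_congr (fun y => Tl_mul c G l y) v x, Av,
      intervalIntegral.integral_const_mul]
    rfl

lemma Av_fderiv_eq_zero {w : V → ℝ} (hw : ContDiff ℝ (⊤ : ℕ∞) w) (v : V)
    (hper : ∀ x, w (x + v) = w x) (x : V) :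
    Av v (fun y => fderiv ℝ w y v) x = 0 := by
  have hd : ∀ t : ℝ, HasDerivAt (fun t : ℝ => w (x + t • v)) (fderiv ℝ w (x + t • v) v) t := by
    intro t
    have h1 : HasDerivAt (fun t : ℝ => x + t • v) v t := by
      simpa using ((hasDerivAt_id t).smul_const v).const_add x
    exact ((hw.differentiable (by simp) (x + t • v)).hasFDerivAt.comp_hasDerivAt t h1)
  have hcont : Continuous fun t : ℝ => fderiv ℝ w (x + t • v) v := by
    have h1 : Continuous (fderiv ℝ w) := (hw.fderiv_right (m := (⊤ : ℕ∞)) (by simp)).continuous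
    have h2 : Continuous fun t : ℝ => fderiv ℝ w (x + t • v) :=
      h1.comp (continuous_const.add (continuous_id.smul continuous_const))
    exact isBoundedBilinearMap_apply.continuous.comp (h2.prodMk continuous_const)
  have key : Av v (fun y => fderiv ℝ w y v) x = w (x + (1:ℝ) • v) - w (x + (0:ℝ) • v) :=
    integral_eq_sub_of_hasDerivAt (fun t _ => hd t) (hcont.intervalIntegrable 0 1)
  rw [key]
  simp [hper x]

lemma Tl_fderiv_eq_zero {w : V → ℝ} (hw : ContDiff ℝ (⊤ : ℕ∞) w) {v : V}
    (hper : ∀ x, w (x + v) = w x) :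
    ∀ (l : List V), v ∈ l → ∀ x, Tl l (fun y => fderiv ℝ w y v) x = 0 := by
  intro l
  have hDcont : Continuous fun y => fderiv ℝ w y v := by
    have h1 : Continuous (fderiv ℝ w) := (hw.fderiv_right (m := (⊤ : ℕ∞)) (by simp)).continuous
    exact isBoundedBilinearMap_apply.continuous.comp (h1.prodMk continuous_const)
  induction l with
  | nil => simp
  | cons u l ih =>
    intro hv x
    rcases List.mem_cons.mp hv with h | h
    · subst h
      rw [Tl_cons, Av_Tl_comm hDcont v l x,
        Tl_congr (fun y => Av_fderiv_eq_zero hw v hper y) l x, Tl_const]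
    · rw [Tl_cons, Av_congr (fun y => ih h y) u x, Av]
      simp

/-- x ↦ fderiv f x v is smooth. -/
lemma pd_contDiff {F : Type*} [NormedAddCommGroup F] [NormedSpace ℝ F] {f : V → F}
    (hf : ContDiff ℝ (⊤ : ℕ∞) f) (v : V) : ContDiff ℝ (⊤ : ℕ∞) fun y => fderiv ℝ f y v :=
  (hf.fderiv_right (m := (⊤ : ℕ∞)) (by simp)).clm_apply contDiff_const

lemma pd_continuous {F : Type*} [NormedAddCommGroup F] [NormedSpace ℝ F] {f : V → F}
    (hf : ContDiff ℝ (⊤ : ℕ∞) f) (v : V) : Continuous fun y => fderiv ℝ f y v :=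
  (pd_contDiff hf v).continuous

/-- derivative of a function periodic along γ is periodic along γ. -/
lemma fderiv_periodic {F : Type*} [NormedAddCommGroup F] [NormedSpace ℝ F] {f : V → F}
    (hf : ContDiff ℝ (⊤ : ℕ∞) f) {γ : V} (hper : ∀ x, f (x + γ) = f x) (x : V) :
    fderiv ℝ f (x + γ) = fderiv ℝ f x := by
  have h1 : HasFDerivAt (fun y => f (y + γ))
      ((fderiv ℝ f (x + γ)).comp (ContinuousLinearMap.id ℝ V)) x := by
    have hinner : HasFDerivAt (fun y : V => y + γ) (ContinuousLinearMap.id ℝ V) x :=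
      (hasFDerivAt_id x).add_const γ
    exact ((hf.differentiable (by simp) (x + γ)).hasFDerivAt).comp x hinner
  have h2 : (fun y => f (y + γ)) = f := funext fun y => hper y
  rw [h2] at h1
  rw [h1.fderiv, ContinuousLinearMap.comp_id]

theorem lap_eq_zero_of_nonneg {n : ℕ} (Γ : Submodule ℤ (EuclideanSpace ℝ (Fin n)))
    [DiscreteTopology Γ] [IsZLattice ℝ Γ] {u : EuclideanSpace ℝ (Fin n) → ℝ}
    (hu : ContDiff ℝ (⊤ : ℕ∞) u) (hper : ∀ x, ∀ γ ∈ Γ, u (x + γ) = u x)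
    (hpos : ∀ x, 0 ≤ lap u x) : ∀ x, lap u x = 0 := by
  classical
  set ι := Module.Free.ChooseBasisIndex ℤ Γ with hι
  set b0 : Module.Basis ι ℤ Γ := Module.Free.chooseBasis ℤ Γ with hb0
  set B : Module.Basis ι ℝ (EuclideanSpace ℝ (Fin n)) := b0.ofZLatticeBasis ℝ Γ with hB
  have hBΓ : ∀ i, (B i) ∈ Γ := fun i => by
    rw [hB, Module.Basis.ofZLatticeBasis_apply]; exact (b0 i).2
  set l : List (EuclideanSpace ℝ (Fin n)) := Finset.univ.toList.map B with hl
  set g : ι → EuclideanSpace ℝ (Fin n) → ℝ := fun i => fun y => fderiv ℝ u y (B i) with hg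
  have hg_smooth : ∀ i, ContDiff ℝ (⊤ : ℕ∞) (g i) := fun i => pd_contDiff hu (B i)
  have hg_per : ∀ i γ, γ ∈ Γ → ∀ x, g i (x + γ) = g i x := by
    intro i γ hγ x
    simp only [hg]
    rw [fderiv_periodic hu (fun z => hper z γ hγ) x]
  set G : ι × ι → EuclideanSpace ℝ (Fin n) → ℝ :=
    fun p => fun x => fderiv ℝ (g p.1) x (B p.2) with hG
  have hG_cont : ∀ p, Continuous (G p) := fun p => pd_continuous (hg_smooth p.1) (B p.2)
  set m : Fin n → ι → ℝ := fun a i => B.repr (EuclideanSpace.single a 1) i with hm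
  -- decomposition of the Laplacian in the lattice basis
  have key : ∀ x, lap u x = ∑ p : ι × ι, (∑ a : Fin n, m a p.1 * m a p.2) * G p x := by
    intro x
    have h1 : ∀ a : Fin n, (fun y => fderiv ℝ u y (EuclideanSpace.single a 1))
        = fun y => ∑ i : ι, m a i • g i y := by
      intro a; funext y
      conv_lhs => rw [← B.sum_repr (EuclideanSpace.single a 1)]
      rw [map_sum]
      simp only [_root_.map_smul]
      rfl
    have h2 : ∀ a : Fin n,
        fderiv ℝ (fun y => fderiv ℝ u y (EuclideanSpace.single a 1)) x (EuclideanSpace.single a 1)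
        = ∑ i : ι, ∑ j : ι, (m a i * m a j) * G (i, j) x := by
      intro a
      rw [h1 a]
      rw [fderiv_fun_sum (A := fun i y => m a i • g i y) (fun i _ => ((hg_smooth i).differentiable (by simp) x).const_smul (m a i))]
      rw [ContinuousLinearMap.sum_apply]
      refine Finset.sum_congr rfl fun i _ => ?_
      rw [fderiv_fun_const_smul ((hg_smooth i).differentiable (by simp) x) (m a i)]
      rw [ContinuousLinearMap.smul_apply]
      have h3 : fderiv ℝ (g i) x (EuclideanSpace.single a 1) = ∑ j : ι, m a j • G (i, j) x := by
        conv_lhs => rw [← B.sum_repr (EuclideanSpace.single a 1)]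
        rw [map_sum]
        simp only [_root_.map_smul]
        rfl
      rw [h3]
      simp only [smul_eq_mul, Finset.mul_sum, mul_assoc]
    calc lap u x = ∑ a : Fin n, ∑ i : ι, ∑ j : ι, m a i * m a j * G (i, j) x :=
          Finset.sum_congr rfl fun a _ => h2 a
      _ = ∑ i : ι, ∑ a : Fin n, ∑ j : ι, m a i * m a j * G (i, j) x := Finset.sum_comm
      _ = ∑ i : ι, ∑ j : ι, ∑ a : Fin n, m a i * m a j * G (i, j) x :=
          Finset.sum_congr rfl fun i _ => Finset.sum_comm
      _ = ∑ i : ι, ∑ j : ι, (∑ a : Fin n, m a i * m a j) * G (i, j) x := by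
          refine Finset.sum_congr rfl fun i _ => Finset.sum_congr rfl fun j _ => ?_
          rw [Finset.sum_mul]
      _ = ∑ p : ι × ι, (∑ a : Fin n, m a p.1 * m a p.2) * G p x :=
          (Fintype.sum_prod_type (fun p : ι × ι => (∑ a : Fin n, m a p.1 * m a p.2) * G p x)).symm
  have hlapcont : Continuous (lap u) := by
    rw [show lap u = fun x => ∑ p : ι × ι, (∑ a : Fin n, m a p.1 * m a p.2) * G p x
      from funext key]
    exact continuous_finset_sum _ fun p _ => continuous_const.mul (hG_cont p)
  have hTzero : ∀ x, Tl l (lap u) x = 0 := by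
    intro x
    rw [Tl_congr key l x]
    rw [Tl_sum Finset.univ (fun p y => (∑ a : Fin n, m a p.1 * m a p.2) * G p y)
        (fun p _ => continuous_const.mul (hG_cont p)) l x]
    refine Finset.sum_eq_zero fun p _ => ?_
    rw [Tl_mul]
    have hv : B p.2 ∈ l := List.mem_map_of_mem (Finset.mem_toList.mpr (Finset.mem_univ p.2))
    rw [Tl_fderiv_eq_zero (hg_smooth p.1) (fun z => hg_per p.1 (B p.2) (hBΓ p.2) z) l hv x,
      mul_zero]
  intro x
  by_contra h
  have hlt : 0 < lap u x := lt_of_le_of_ne (hpos x) (Ne.symm h)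
  exact absurd (hTzero x) (ne_of_gt (Tl_pos hlapcont hpos l x hlt))

/-- product rule for a directional derivative, scalar valued -/
lemma pd_mul {g h : V → ℝ} (hg : ContDiff ℝ (⊤ : ℕ∞) g) (hh : ContDiff ℝ (⊤ : ℕ∞) h) (v : V) (x : V) :
    fderiv ℝ (fun y => g y * h y) x v = fderiv ℝ g x v * h x + g x * fderiv ℝ h x v := by
  rw [fderiv_fun_mul ((hg.differentiable (by simp)) x) ((hh.differentiable (by simp)) x)]
  simp only [ContinuousLinearMap.add_apply, ContinuousLinearMap.smul_apply, smul_eq_mul]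
  ring

/-- chain rule for a real-linear map applied after f -/
lemma pd_clm {f : V → ℂ} (hf : ContDiff ℝ (⊤ : ℕ∞) f) (L : ℂ →L[ℝ] ℝ) (v : V) (x : V) :
    fderiv ℝ (fun y => L (f y)) x v = L (fderiv ℝ f x v) := by
  have h := (L.hasFDerivAt.comp x ((hf.differentiable (by simp)) x).hasFDerivAt).fderiv
  rw [show (fun y => L (f y)) = ⇑L ∘ f from rfl, h]
  rfl

lemma lap_add {g h : EuclideanSpace ℝ (Fin n) → ℝ} (hg : ContDiff ℝ (⊤ : ℕ∞) g)
    (hh : ContDiff ℝ (⊤ : ℕ∞) h) (x : EuclideanSpace ℝ (Fin n)) :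
    lap (fun y => g y + h y) x = lap g x + lap h x := by
  unfold lap
  rw [← Finset.sum_add_distrib]
  refine Finset.sum_congr rfl fun a _ => ?_
  have h1 : (fun y => fderiv ℝ (fun z => g z + h z) y (EuclideanSpace.single a 1))
      = fun y => fderiv ℝ g y (EuclideanSpace.single a 1)
        + fderiv ℝ h y (EuclideanSpace.single a 1) := by
    funext y
    rw [fderiv_fun_add ((hg.differentiable (by simp)) y) ((hh.differentiable (by simp)) y)]
    rfl
  rw [h1, fderiv_fun_add ((pd_contDiff hg _).differentiable (by simp) x)
    ((pd_contDiff hh _).differentiable (by simp) x)]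
  rfl

lemma lap_mul {g h : EuclideanSpace ℝ (Fin n) → ℝ} (hg : ContDiff ℝ (⊤ : ℕ∞) g)
    (hh : ContDiff ℝ (⊤ : ℕ∞) h) (x : EuclideanSpace ℝ (Fin n)) :
    lap (fun y => g y * h y) x = lap g x * h x
      + 2 * ∑ a : Fin n, fderiv ℝ g x (EuclideanSpace.single a 1)
          * fderiv ℝ h x (EuclideanSpace.single a 1)
      + g x * lap h x := by
  unfold lap
  have key : ∀ a : Fin n,
      fderiv ℝ (fun y => fderiv ℝ (fun z => g z * h z) y (EuclideanSpace.single a 1)) x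
        (EuclideanSpace.single a 1)
      = fderiv ℝ (fun y => fderiv ℝ g y (EuclideanSpace.single a 1)) x
          (EuclideanSpace.single a 1) * h x
        + 2 * (fderiv ℝ g x (EuclideanSpace.single a 1)
            * fderiv ℝ h x (EuclideanSpace.single a 1))
        + g x * fderiv ℝ (fun y => fderiv ℝ h y (EuclideanSpace.single a 1)) x
            (EuclideanSpace.single a 1) := by
    intro a
    set e := EuclideanSpace.single a (1:ℝ) with he
    have h1 : (fun y => fderiv ℝ (fun z => g z * h z) y e)
        = fun y => (fderiv ℝ g y e) * h y + g y * (fderiv ℝ h y e) := by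
      funext y
      exact pd_mul hg hh e y
    rw [h1]
    have hg' := pd_contDiff hg e
    have hh' := pd_contDiff hh e
    have h2 : fderiv ℝ (fun y => (fderiv ℝ g y e) * h y + g y * (fderiv ℝ h y e)) x
        (EuclideanSpace.single a 1)
        = fderiv ℝ (fun y => (fderiv ℝ g y e) * h y) x e
          + fderiv ℝ (fun y => g y * (fderiv ℝ h y e)) x e := by
      rw [fderiv_fun_add (((hg'.mul hh).differentiable (by simp)) x)
        (((hg.mul hh').differentiable (by simp)) x)]
      rfl
    rw [h2, pd_mul hg' hh e x, pd_mul hg hh' e x]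
    ring
  rw [Finset.sum_congr rfl fun a _ => key a]
  rw [Finset.sum_add_distrib, Finset.sum_add_distrib, ← Finset.sum_mul, ← Finset.mul_sum,
    ← Finset.mul_sum]

lemma lap_clm {f : EuclideanSpace ℝ (Fin n) → ℂ} (hf : ContDiff ℝ (⊤ : ℕ∞) f) (L : ℂ →L[ℝ] ℝ)
    (x : EuclideanSpace ℝ (Fin n)) :
    lap (fun y => L (f y)) x = L (lap f x) := by
  unfold lap
  rw [map_sum]
  refine Finset.sum_congr rfl fun a _ => ?_
  set e := EuclideanSpace.single a (1:ℝ) with he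
  have h1 : (fun y => fderiv ℝ (fun z => L (f z)) y e) = fun y => L (fderiv ℝ f y e) := by
    funext y
    exact pd_clm hf L e y
  rw [h1, pd_clm (pd_contDiff hf e) L e x]

lemma normSq_eq_comp (f : V → ℂ) :
    (fun y => Complex.normSq (f y))
      = fun y => Complex.reCLM (f y) * Complex.reCLM (f y)
          + Complex.imCLM (f y) * Complex.imCLM (f y) := by
  funext y
  simp [Complex.normSq_apply]

lemma contDiff_normSq_comp {f : V → ℂ} (hf : ContDiff ℝ (⊤ : ℕ∞) f) :
    ContDiff ℝ (⊤ : ℕ∞) fun y => Complex.normSq (f y) := by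
  rw [normSq_eq_comp f]
  exact ((Complex.reCLM.contDiff.comp hf).mul (Complex.reCLM.contDiff.comp hf)).add
    ((Complex.imCLM.contDiff.comp hf).mul (Complex.imCLM.contDiff.comp hf))

lemma lap_normSq {f : EuclideanSpace ℝ (Fin n) → ℂ} (hf : ContDiff ℝ (⊤ : ℕ∞) f)
    (x : EuclideanSpace ℝ (Fin n)) :
    lap (fun y => Complex.normSq (f y)) x
      = 2 * (∑ a : Fin n, Complex.normSq (fderiv ℝ f x (EuclideanSpace.single a 1)))
        + 2 * ((lap f x) * (starRingEnd ℂ) (f x)).re := by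
  have hp : ContDiff ℝ (⊤ : ℕ∞) fun y => Complex.reCLM (f y) := Complex.reCLM.contDiff.comp hf
  have hq : ContDiff ℝ (⊤ : ℕ∞) fun y => Complex.imCLM (f y) := Complex.imCLM.contDiff.comp hf
  rw [normSq_eq_comp f]
  rw [lap_add (hp.mul hp) (hq.mul hq) x, lap_mul hp hp x, lap_mul hq hq x]
  rw [lap_clm hf Complex.reCLM x, lap_clm hf Complex.imCLM x]
  simp only [pd_clm hf Complex.reCLM, pd_clm hf Complex.imCLM]
  simp only [Complex.reCLM_apply, Complex.imCLM_apply, Complex.normSq_apply, Complex.mul_re,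
    Complex.conj_re, Complex.conj_im]
  have hsum : (2:ℝ) * (∑ i : Fin n, (fderiv ℝ f x (EuclideanSpace.single i 1)).re
        * (fderiv ℝ f x (EuclideanSpace.single i 1)).re)
      + 2 * (∑ i : Fin n, (fderiv ℝ f x (EuclideanSpace.single i 1)).im
        * (fderiv ℝ f x (EuclideanSpace.single i 1)).im)
      = 2 * ∑ i : Fin n, ((fderiv ℝ f x (EuclideanSpace.single i 1)).re
          * (fderiv ℝ f x (EuclideanSpace.single i 1)).re
        + (fderiv ℝ f x (EuclideanSpace.single i 1)).im
          * (fderiv ℝ f x (EuclideanSpace.single i 1)).im) := by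
    rw [Finset.sum_add_distrib]
    ring
  linarith [hsum]

lemma pd_normSq {f : EuclideanSpace ℝ (Fin n) → ℂ} (hf : ContDiff ℝ (⊤ : ℕ∞) f)
    (x v : EuclideanSpace ℝ (Fin n)) :
    fderiv ℝ (fun y => Complex.normSq (f y)) x v
      = 2 * ((fderiv ℝ f x v) * (starRingEnd ℂ) (f x)).re := by
  have hp : ContDiff ℝ (⊤ : ℕ∞) fun y => Complex.reCLM (f y) := Complex.reCLM.contDiff.comp hf
  have hq : ContDiff ℝ (⊤ : ℕ∞) fun y => Complex.imCLM (f y) := Complex.imCLM.contDiff.comp hf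
  rw [normSq_eq_comp f]
  have h2 : fderiv ℝ (fun y => Complex.reCLM (f y) * Complex.reCLM (f y)
      + Complex.imCLM (f y) * Complex.imCLM (f y)) x
      = fderiv ℝ (fun y => Complex.reCLM (f y) * Complex.reCLM (f y)) x
        + fderiv ℝ (fun y => Complex.imCLM (f y) * Complex.imCLM (f y)) x :=
    fderiv_fun_add (((hp.mul hp).differentiable (by simp)) x) (((hq.mul hq).differentiable (by simp)) x)
  rw [h2]
  rw [ContinuousLinearMap.add_apply, pd_mul hp hp v x, pd_mul hq hq v x]
  simp only [pd_clm hf Complex.reCLM, pd_clm hf Complex.imCLM]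
  simp only [Complex.reCLM_apply, Complex.imCLM_apply, Complex.mul_re,
    Complex.conj_re, Complex.conj_im]
  ring

lemma clm_eq_zero {F : Type*} [NormedAddCommGroup F] [NormedSpace ℝ F]
    (L : EuclideanSpace ℝ (Fin n) →L[ℝ] F)
    (h : ∀ a : Fin n, L (EuclideanSpace.single a 1) = 0) : L = 0 := by
  apply ContinuousLinearMap.coe_injective
  apply Module.Basis.ext (EuclideanSpace.basisFun (Fin n) ℝ).toBasis
  intro a
  rw [OrthonormalBasis.coe_toBasis]
  simp only [EuclideanSpace.basisFun_apply]
  simpa using h a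

/-- first-order combination rule -/
lemma pd_combo {g h : V → ℂ} (hg : ContDiff ℝ (⊤ : ℕ∞) g) (hh : ContDiff ℝ (⊤ : ℕ∞) h) (c d : ℂ)
    (x v : V) :
    fderiv ℝ (fun y => c * g y - d * h y) x v
      = c * fderiv ℝ g x v - d * fderiv ℝ h x v := by
  have hcg : fderiv ℝ (fun y => c * g y) x = c • fderiv ℝ g x := by
    have := fderiv_fun_const_smul (𝕜 := ℝ) ((hg.differentiable (by simp)) x) c
    simpa [smul_eq_mul] using this
  have hdh : fderiv ℝ (fun y => d * h y) x = d • fderiv ℝ h x := by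
    have := fderiv_fun_const_smul (𝕜 := ℝ) ((hh.differentiable (by simp)) x) d
    simpa [smul_eq_mul] using this
  have h1 : fderiv ℝ (fun y => c * g y - d * h y) x
      = fderiv ℝ (fun y => c * g y) x - fderiv ℝ (fun y => d * h y) x :=
    fderiv_fun_sub (((contDiff_const.mul hg).differentiable (by simp)) x)
      (((contDiff_const.mul hh).differentiable (by simp)) x)
  rw [h1, ContinuousLinearMap.sub_apply, hcg, hdh, ContinuousLinearMap.smul_apply,
    ContinuousLinearMap.smul_apply, smul_eq_mul, smul_eq_mul]

lemma lap_combo {g h : EuclideanSpace ℝ (Fin n) → ℂ} (hg : ContDiff ℝ (⊤ : ℕ∞) g)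
    (hh : ContDiff ℝ (⊤ : ℕ∞) h) (c d : ℂ) (x : EuclideanSpace ℝ (Fin n)) :
    lap (fun y => c * g y - d * h y) x = c * lap g x - d * lap h x := by
  unfold lap
  have key : ∀ a : Fin n,
      fderiv ℝ (fun y => fderiv ℝ (fun z => c * g z - d * h z) y (EuclideanSpace.single a 1)) x
        (EuclideanSpace.single a 1)
      = c * fderiv ℝ (fun y => fderiv ℝ g y (EuclideanSpace.single a 1)) x
            (EuclideanSpace.single a 1)
        - d * fderiv ℝ (fun y => fderiv ℝ h y (EuclideanSpace.single a 1)) x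
            (EuclideanSpace.single a 1) := by
    intro a
    set e := EuclideanSpace.single a (1:ℝ) with he
    have h1 : (fun y => fderiv ℝ (fun z => c * g z - d * h z) y e)
        = fun y => c * (fun z => fderiv ℝ g z e) y - d * (fun z => fderiv ℝ h z e) y := by
      funext y
      exact pd_combo hg hh c d y e
    rw [h1, pd_combo (pd_contDiff hg e) (pd_contDiff hh e) c d x e]
  rw [Finset.sum_congr rfl fun a _ => key a]
  rw [Finset.sum_sub_distrib, ← Finset.mul_sum, ← Finset.mul_sum]

/-- the basic eigen-consequence: the sum of `normSq` of the partials is `-Re lam` times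
`normSq f`. -/
lemma eigen_normSq {n : ℕ} (Γ : Submodule ℤ (EuclideanSpace ℝ (Fin n)))
    [DiscreteTopology Γ] [IsZLattice ℝ Γ] (lam : ℂ) {f : EuclideanSpace ℝ (Fin n) → ℂ}
    (hf : ContDiff ℝ (⊤ : ℕ∞) f) (hfper : ∀ x, ∀ γ ∈ Γ, f (x + γ) = f x)
    (hflap : ∀ x, lap f x = lam * f x) (hfkap : ∀ x, kap f f x = lam * f x ^ 2) :
    ∀ x, (∑ a : Fin n, Complex.normSq (fderiv ℝ f x (EuclideanSpace.single a 1)))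
      = -lam.re * Complex.normSq (f x) := by
  have hb : ∀ x, ‖lam‖ * Complex.normSq (f x)
      ≤ ∑ a : Fin n, Complex.normSq (fderiv ℝ f x (EuclideanSpace.single a 1)) := by
    intro x
    have h1 : ‖lam‖ * Complex.normSq (f x) = ‖lam * f x ^ 2‖ := by
      rw [norm_mul, norm_pow, ← Complex.normSq_eq_norm_sq]
    have h2 : ‖kap f f x‖
        ≤ ∑ a : Fin n, Complex.normSq (fderiv ℝ f x (EuclideanSpace.single a 1)) := by
      refine le_trans (norm_sum_le _ _) ?_
      refine le_of_eq (Finset.sum_congr rfl fun a _ => ?_)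
      rw [norm_mul, ← Complex.sq_norm, sq]
    calc ‖lam‖ * Complex.normSq (f x) = ‖lam * f x ^ 2‖ := h1
      _ = ‖kap f f x‖ := by rw [hfkap x]
      _ ≤ _ := h2
  have hlapns : ∀ x, lap (fun y => Complex.normSq (f y)) x
      = 2 * (∑ a : Fin n, Complex.normSq (fderiv ℝ f x (EuclideanSpace.single a 1)))
        + 2 * (lam.re * Complex.normSq (f x)) := by
    intro x
    rw [lap_normSq hf x, hflap x, mul_assoc, Complex.mul_conj]
    norm_num
  have hpos : ∀ x, 0 ≤ lap (fun y => Complex.normSq (f y)) x := by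
    intro x
    rw [hlapns x]
    have h1 := hb x
    have h2 : -‖lam‖ ≤ lam.re := (abs_le.mp (Complex.abs_re_le_norm lam)).1
    nlinarith [Complex.normSq_nonneg (f x)]
  have hz := lap_eq_zero_of_nonneg Γ (contDiff_normSq_comp hf)
    (fun x γ hγ => by rw [hfper x γ hγ]) hpos
  intro x
  have h0 := hz x
  rw [hlapns x] at h0
  linarith

/-- real part of the "rotated" partials vanish -/
lemma re_pd_conj_eq_zero {n : ℕ} (lam : ℂ) (hlam : lam.im = 0)
    {f : EuclideanSpace ℝ (Fin n) → ℂ}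
    (hfkap : ∀ x, kap f f x = lam * f x ^ 2)
    (hmain : ∀ x, (∑ a : Fin n, Complex.normSq (fderiv ℝ f x (EuclideanSpace.single a 1)))
      = -lam.re * Complex.normSq (f x)) :
    ∀ x a, ((fderiv ℝ f x (EuclideanSpace.single a 1)) * (starRingEnd ℂ) (f x)).re = 0 := by
  intro x
  set r : ℝ := lam.re with hr
  have hl : lam = (r : ℂ) := Complex.ext rfl (by simp [hlam, hr])
  set z : Fin n → ℂ :=
    fun a => fderiv ℝ f x (EuclideanSpace.single a 1) * (starRingEnd ℂ) (f x) with hz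
  have h1 : ∑ a : Fin n, z a * z a
      = ((r * Complex.normSq (f x) ^ 2 : ℝ) : ℂ) := by
    have e1 : ∑ a : Fin n, z a * z a
        = ((starRingEnd ℂ) (f x) * (starRingEnd ℂ) (f x)) * kap f f x := by
      rw [kap, Finset.mul_sum]
      exact Finset.sum_congr rfl fun a _ => by simp only [hz]; ring
    rw [e1, hfkap x, hl]
    have e2 : (starRingEnd ℂ) (f x) * (starRingEnd ℂ) (f x) * ((r : ℂ) * f x ^ 2)
        = (r : ℂ) * (f x * (starRingEnd ℂ) (f x)) ^ 2 := by ring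
    rw [e2, Complex.mul_conj]
    push_cast
    ring
  have h2 : ∑ a : Fin n, Complex.normSq (z a) = -r * Complex.normSq (f x) ^ 2 := by
    have : ∀ a : Fin n, Complex.normSq (z a)
        = Complex.normSq (fderiv ℝ f x (EuclideanSpace.single a 1)) * Complex.normSq (f x) := by
      intro a
      simp only [hz]
      rw [Complex.normSq_mul, Complex.normSq_conj]
    rw [Finset.sum_congr rfl fun a _ => this a, ← Finset.sum_mul, hmain x]
    ring
  have h3 : ∑ a : Fin n, ((z a).re * (z a).re - (z a).im * (z a).im)
      = r * Complex.normSq (f x) ^ 2 := by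
    have := congrArg Complex.re h1
    rw [Complex.re_sum] at this
    simpa [Complex.mul_re, ← Complex.ofReal_pow] using this
  have h4 : ∑ a : Fin n, ((z a).re * (z a).re + (z a).im * (z a).im)
      = -r * Complex.normSq (f x) ^ 2 := by
    rw [← h2]
    exact Finset.sum_congr rfl fun a _ => by rw [Complex.normSq_apply]
  have h5 : ∑ a : Fin n, ((z a).re * (z a).re) = 0 := by
    have hadd : ∑ a : Fin n, (((z a).re * (z a).re - (z a).im * (z a).im)
        + ((z a).re * (z a).re + (z a).im * (z a).im)) = 0 := by
      rw [Finset.sum_add_distrib, h3, h4]; ring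
    have : ∑ a : Fin n, (2 * ((z a).re * (z a).re)) = 0 := by
      rw [← hadd]; exact Finset.sum_congr rfl fun a _ => by ring
    rw [← Finset.mul_sum] at this
    linarith
  intro a
  have h6 := (Finset.sum_eq_zero_iff_of_nonneg
    (fun i _ => mul_self_nonneg ((z i).re))).mp h5 a (Finset.mem_univ a)
  exact mul_self_eq_zero.mp h6

end LLSpan

end

open LLSpan

theorem lambda_lambda_span_dim_le_one {n : ℕ}
    (Γ : Submodule ℤ (EuclideanSpace ℝ (Fin n))) [DiscreteTopology Γ] [IsZLattice ℝ Γ]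
    (lam : ℂ)
    (φ ψ : EuclideanSpace ℝ (Fin n) → ℂ)
    (hφ : ContDiff ℝ (⊤ : ℕ∞) φ) (hψ : ContDiff ℝ (⊤ : ℕ∞) ψ)
    (hφper : ∀ x : EuclideanSpace ℝ (Fin n), ∀ γ ∈ Γ, φ (x + γ) = φ x)
    (hψper : ∀ x : EuclideanSpace ℝ (Fin n), ∀ γ ∈ Γ, ψ (x + γ) = ψ x)
    (hφlap : ∀ x, lap φ x = lam * φ x)
    (hψlap : ∀ x, lap ψ x = lam * ψ x)
    (hφkap : ∀ x, kap φ φ x = lam * (φ x) ^ 2)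
    (hψkap : ∀ x, kap ψ ψ x = lam * (ψ x) ^ 2)
    (hφψkap : ∀ x, kap φ ψ x = lam * φ x * ψ x) :
    ∃ a b : ℂ, (a ≠ 0 ∨ b ≠ 0) ∧ ∀ x, a * φ x + b * ψ x = 0 := by
  classical
  by_cases hphi0 : ∀ x, φ x = 0
  · exact ⟨1, 0, Or.inl one_ne_zero, fun x => by rw [hphi0 x]; ring⟩
  push_neg at hphi0
  obtain ⟨x₀, hx₀⟩ := hphi0
  have mφ := eigen_normSq Γ lam hφ hφper hφlap hφkap
  -- lam is real with nonpositive real part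
  have habs : ‖lam‖ ≤ -lam.re := by
    have h1 : ‖lam‖ * Complex.normSq (φ x₀)
        ≤ ∑ a : Fin n, Complex.normSq (fderiv ℝ φ x₀ (EuclideanSpace.single a 1)) := by
      have e1 : ‖lam‖ * Complex.normSq (φ x₀) = ‖kap φ φ x₀‖ := by
        rw [hφkap x₀, norm_mul, norm_pow, ← Complex.normSq_eq_norm_sq]
      rw [e1, kap]
      refine le_trans (norm_sum_le _ _) ?_
      refine le_of_eq (Finset.sum_congr rfl fun a _ => ?_)
      rw [norm_mul, ← Complex.sq_norm, sq]
    rw [mφ x₀] at h1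
    have h2 : 0 < Complex.normSq (φ x₀) := Complex.normSq_pos.mpr hx₀
    exact le_of_mul_le_mul_right h1 h2
  have him : lam.im = 0 := by
    have h3 : lam.im ^ 2 ≤ 0 := by
      nlinarith [Complex.sq_norm lam, Complex.normSq_apply lam,
        norm_nonneg lam]
    have h4 : lam.im ^ 2 = 0 := le_antisymm h3 (sq_nonneg _)
    exact pow_eq_zero_iff (two_ne_zero) |>.mp h4
  -- the combination F vanishing at x₀
  set F : EuclideanSpace ℝ (Fin n) → ℂ := fun x => ψ x₀ * φ x - φ x₀ * ψ x with hFdef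
  have hFs : ContDiff ℝ (⊤ : ℕ∞) F := (contDiff_const.mul hφ).sub (contDiff_const.mul hψ)
  have hFper : ∀ x, ∀ γ ∈ Γ, F (x + γ) = F x := by
    intro x γ hγ
    simp only [hFdef]
    rw [hφper x γ hγ, hψper x γ hγ]
  have hpdF : ∀ x v, fderiv ℝ F x v = ψ x₀ * fderiv ℝ φ x v - φ x₀ * fderiv ℝ ψ x v :=
    fun x v => pd_combo hφ hψ (ψ x₀) (φ x₀) x v
  have hFlap : ∀ x, lap F x = lam * F x := by
    intro x
    rw [show lap F x = lap (fun y => ψ x₀ * φ y - φ x₀ * ψ y) x from rfl]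
    rw [lap_combo hφ hψ (ψ x₀) (φ x₀) x, hφlap x, hψlap x]
    simp only [hFdef]
    ring
  have hFkap : ∀ x, kap F F x = lam * F x ^ 2 := by
    intro x
    rw [kap]
    have key : ∀ a : Fin n, fderiv ℝ F x (EuclideanSpace.single a 1)
        * fderiv ℝ F x (EuclideanSpace.single a 1)
        = (ψ x₀ * ψ x₀) * (fderiv ℝ φ x (EuclideanSpace.single a 1)
            * fderiv ℝ φ x (EuclideanSpace.single a 1))
          - (2 * (ψ x₀ * φ x₀)) * (fderiv ℝ φ x (EuclideanSpace.single a 1)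
            * fderiv ℝ ψ x (EuclideanSpace.single a 1))
          + (φ x₀ * φ x₀) * (fderiv ℝ ψ x (EuclideanSpace.single a 1)
            * fderiv ℝ ψ x (EuclideanSpace.single a 1)) := by
      intro a
      rw [hpdF x (EuclideanSpace.single a 1)]
      ring
    rw [Finset.sum_congr rfl fun a _ => key a]
    rw [Finset.sum_add_distrib, Finset.sum_sub_distrib, ← Finset.mul_sum, ← Finset.mul_sum,
      ← Finset.mul_sum]
    rw [show (∑ a : Fin n, fderiv ℝ φ x (EuclideanSpace.single a 1)
        * fderiv ℝ φ x (EuclideanSpace.single a 1)) = kap φ φ x from rfl]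
    rw [show (∑ a : Fin n, fderiv ℝ φ x (EuclideanSpace.single a 1)
        * fderiv ℝ ψ x (EuclideanSpace.single a 1)) = kap φ ψ x from rfl]
    rw [show (∑ a : Fin n, fderiv ℝ ψ x (EuclideanSpace.single a 1)
        * fderiv ℝ ψ x (EuclideanSpace.single a 1)) = kap ψ ψ x from rfl]
    rw [hφkap x, hφψkap x, hψkap x]
    simp only [hFdef]
    ring
  have mF := eigen_normSq Γ lam hFs hFper hFlap hFkap
  have L1F := re_pd_conj_eq_zero lam him hFkap mF
  have hconst : ∀ x, Complex.normSq (F x) = Complex.normSq (F x₀) := by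
    have hdiff : Differentiable ℝ fun y => Complex.normSq (F y) :=
      (contDiff_normSq_comp hFs).differentiable (by simp)
    have hzero : ∀ y, fderiv ℝ (fun y => Complex.normSq (F y)) y = 0 := by
      intro y
      apply clm_eq_zero
      intro a
      rw [pd_normSq hFs y (EuclideanSpace.single a 1), L1F y a]
      ring
    intro x
    exact is_const_of_fderiv_eq_zero hdiff hzero x x₀
  have hF0 : ∀ x, F x = 0 := by
    intro x
    have h1 : Complex.normSq (F x) = 0 := by
      rw [hconst x]
      rw [show F x₀ = 0 from by simp only [hFdef]; ring]
      simp
    exact Complex.normSq_eq_zero.mp h1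
  refine ⟨ψ x₀, -φ x₀, Or.inr (neg_ne_zero.mpr hx₀), fun x => ?_⟩
  have h2 := hF0 x
  simp only [hFdef] at h2
  linear_combination h2
end
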